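/- arXiv:1102.2132 — 11 statements merged into one kernel-verified Lean document; each statement's English description precedes it below -/
import Mathlib

section
/- Let k be an algebraically closed field, let S be an integral domain that is a finitely generated k-algebra and is integrally closed in its fraction field (normal), and let a group G act on S by k-algebra automorphisms, with fixed subalgebra S^G. Let A be a finitely generated k-subalgebra of S^G and let f_1, …, f_r ∈ A be such that for each i, the localizations agree: for every g ∈ S^G there exists n ≥ 0 with f_i^n·g ∈ A. If the ideal (f_1, …, f_r)S generated in S has height at least 2, then inside the fraction field Frac(S) the image of S^G equals the set of all q ∈ Frac(S) for which there exists n ≥ 1 such that f_i^n·q lies in the image of A for every i = 1, …, r (equivalently, S^G = (A : (f_1,…,f_r)^∞)_{Q(A)}, the ideal transform of A along (f_1,…,f_r); note that since the f_i lie in A and at least one f_i is nonzero, such a q automatically lies in the fraction field of A). -/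
open scoped nonZeroDivisors

section Aux

variable {S : Type*} [CommRing S] [IsDomain S]

/-- The ideal of denominators of an element of the fraction field. -/
noncomputable def myDenom (y : FractionRing S) : Ideal S :=
  Submodule.comap (LinearMap.toSpanSingleton S (FractionRing S) y)
    (LinearMap.range (Algebra.linearMap S (FractionRing S)))

lemma mem_myDenom {y : FractionRing S} {s : S} :
    s ∈ myDenom y ↔ ∃ c : S, algebraMap S (FractionRing S) c
      = algebraMap S (FractionRing S) s * y := by
  simp [myDenom, Algebra.smul_def]

variable [IsNoetherianRing S] [IsIntegrallyClosed S]

lemma exists_algebraMap_eq_of_stable (w : FractionRing S) (I : Ideal S) (hI : I ≠ ⊥)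
    (h : ∀ x ∈ I, ∃ c ∈ I, algebraMap S (FractionRing S) c
        = w * algebraMap S (FractionRing S) x) :
    ∃ c : S, algebraMap S (FractionRing S) c = w := by
  have hint : IsIntegral S w := by
    refine isIntegral_of_smul_mem_submodule
      (Submodule.map (Algebra.linearMap S (FractionRing S)) I) ?_ ?_ w ?_
    · obtain ⟨x, hxI, hx0⟩ := (Submodule.ne_bot_iff I).mp hI
      intro hbot
      have hm : algebraMap S (FractionRing S) x
          ∈ Submodule.map (Algebra.linearMap S (FractionRing S)) I :=
        Submodule.mem_map_of_mem hxI
      rw [hbot, Submodule.mem_bot] at hm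
      exact hx0 (IsFractionRing.injective S (FractionRing S) (by simpa using hm))
    · exact (IsNoetherian.noetherian I).map _
    · rintro m ⟨x, hx, rfl⟩
      obtain ⟨c, hc, hceq⟩ := h x hx
      exact ⟨c, hc, by simpa [smul_eq_mul] using hceq⟩
  exact IsIntegrallyClosed.isIntegral_iff.mp hint

lemma exists_prime_denom_le (y : FractionRing S)
    (hy : ∀ c : S, algebraMap S (FractionRing S) c ≠ y) :
    ∃ P : Ideal S, P.IsPrime ∧ myDenom y ≤ P ∧
      ∀ Q : Ideal S, Q.IsPrime → Q < P → Q = ⊥ := by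
  classical
  set ι := algebraMap S (FractionRing S) with hιdef
  set 𝒮 : Set (Ideal S) :=
    {I | (∃ z : FractionRing S, (∀ c : S, ι c ≠ z) ∧ I = myDenom z) ∧ myDenom y ≤ I} with h𝒮
  obtain ⟨P, ⟨⟨z, hz, rfl⟩, hyP⟩, hmax⟩ :=
    (set_has_maximal_iff_noetherian.mpr inferInstance) 𝒮 ⟨myDenom y, ⟨y, hy, rfl⟩, le_rfl⟩
  have hPne : myDenom z ≠ ⊤ := by
    intro htop
    have h1 : (1 : S) ∈ myDenom z := htop ▸ trivial
    obtain ⟨c, hc⟩ := mem_myDenom.mp h1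
    exact hz c (by simpa using hc)
  have key : ∀ b : S, b ∉ myDenom z → myDenom (ι b * z) = myDenom z := by
    intro b hb
    have hz' : ∀ c : S, ι c ≠ ι b * z := fun c hc => hb (mem_myDenom.mpr ⟨c, hc⟩)
    have hle : myDenom z ≤ myDenom (ι b * z) := by
      intro s hs
      obtain ⟨c, hc⟩ := mem_myDenom.mp hs
      exact mem_myDenom.mpr ⟨c * b, by rw [map_mul, hc]; ring⟩
    by_contra hne
    exact hmax _ ⟨⟨_, hz', rfl⟩, hyP.trans hle⟩ (lt_of_le_of_ne hle (fun h => hne h.symm))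
  have hprime : (myDenom z).IsPrime := by
    refine ⟨hPne, ?_⟩
    intro a b hab
    by_cases hb : b ∈ myDenom z
    · exact Or.inr hb
    · left
      rw [← key b hb]
      obtain ⟨c, hc⟩ := mem_myDenom.mp hab
      exact mem_myDenom.mpr ⟨c, by rw [hc, map_mul]; ring⟩
  have hPbot : myDenom z ≠ ⊥ := by
    obtain ⟨⟨a, b⟩, hab⟩ := IsLocalization.surj (nonZeroDivisors S) z
    have hbP : (b : S) ∈ myDenom z := mem_myDenom.mpr ⟨a, by rw [← hab]; ring⟩
    intro hbot
    rw [hbot, Submodule.mem_bot] at hbP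
    exact mem_nonZeroDivisors_iff_ne_zero.mp b.2 hbP
  have hstep : ∃ p₀ ∈ myDenom z, ∃ t : S, t ∉ myDenom z ∧ ι t = ι p₀ * z := by
    by_contra hcon
    push_neg at hcon
    have hstab : ∀ x ∈ myDenom z, ∃ c ∈ myDenom z,
        ι c = z * ι x := by
      intro x hx
      obtain ⟨c, hc⟩ := mem_myDenom.mp hx
      refine ⟨c, ?_, by rw [hc]; ring⟩
      by_contra hcP
      exact hcon x hx c hcP hc
    obtain ⟨c, hc⟩ := exists_algebraMap_eq_of_stable z (myDenom z) hPbot hstab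
    exact hz c hc
  refine ⟨myDenom z, hprime, hyP, ?_⟩
  intro Q hQ hQP
  obtain ⟨p₀, hp₀, t, ht, hteq⟩ := hstep
  have htQ : t ∉ Q := fun h => ht (hQP.le h)
  have hp₀Q : p₀ ∉ Q := by
    intro hp₀Q
    have hPQ : myDenom z ≤ Q := by
      intro s hs
      obtain ⟨c, hc⟩ := mem_myDenom.mp hs
      have heq : t * s = p₀ * c := by
        apply IsFractionRing.injective S (FractionRing S)
        rw [map_mul, map_mul, hteq, hc]; ring
      have hm : t * s ∈ Q := heq ▸ Q.mul_mem_right c hp₀Q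
      exact (hQ.mem_or_mem hm).resolve_left htQ
    exact absurd hPQ (not_le_of_gt hQP)
  have hp0 : p₀ ≠ 0 := by
    rintro rfl
    apply ht
    have h0 : ι t = ι 0 := by rw [hteq]; simp
    rw [IsFractionRing.injective S (FractionRing S) h0]
    exact zero_mem _
  have hιp0 : ι p₀ ≠ 0 := fun h =>
    hp0 (IsFractionRing.injective S (FractionRing S) (by rw [map_zero]; exact h))
  rw [eq_bot_iff]
  intro q hq
  rw [Submodule.mem_bot]
  by_contra hq0
  -- the step function
  have step : ∀ x ∈ Q, ∃ c ∈ Q, t * x = p₀ * c := by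
    intro x hx
    obtain ⟨c, hc⟩ := mem_myDenom.mp (hQP.le hx)
    have heq : t * x = p₀ * c := by
      apply IsFractionRing.injective S (FractionRing S)
      rw [map_mul, map_mul, hteq, hc]; ring
    refine ⟨c, ?_, heq⟩
    have hm : p₀ * c ∈ Q := heq ▸ Q.mul_mem_left t hx
    exact (hQ.mem_or_mem hm).resolve_left hp₀Q
  let s : ℕ → {x : S // x ∈ Q} := fun n => Nat.rec ⟨q, hq⟩
    (fun _ x => ⟨(step x.1 x.2).choose, ((step x.1 x.2).choose_spec).1⟩) n
  have hs : ∀ m : ℕ, t * (s m).1 = p₀ * (s (m+1)).1 :=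
    fun m => ((step (s m).1 (s m).2).choose_spec).2
  set w : FractionRing S := ι t * (ι p₀)⁻¹ with hw
  have hws : ∀ m : ℕ, ι ((s (m+1)).1) = w * ι ((s m).1) := by
    intro m
    have h1 : ι t * ι ((s m).1) = ι p₀ * ι ((s (m+1)).1) := by
      rw [← map_mul, ← map_mul, hs m]
    apply mul_left_cancel₀ hιp0
    rw [← h1, hw]
    field_simp
  set I₀ : Ideal S := Ideal.span (Set.range (fun m => (s m).1)) with hI₀
  have hqI : q ∈ I₀ := Ideal.subset_span ⟨0, rfl⟩
  have hI₀bot : I₀ ≠ ⊥ := fun h => hq0 (by rw [h, Submodule.mem_bot] at hqI; exact hqI)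
  have hstab : ∀ x ∈ I₀, ∃ c ∈ I₀, ι c = w * ι x := by
    intro x hx
    refine Submodule.span_induction ?_ ?_ ?_ ?_ hx
    · rintro _ ⟨m, rfl⟩
      exact ⟨(s (m+1)).1, Ideal.subset_span ⟨m+1, rfl⟩, hws m⟩
    · exact ⟨0, zero_mem _, by simp⟩
    · rintro a b - - ⟨c₁, hc₁, he₁⟩ ⟨c₂, hc₂, he₂⟩
      exact ⟨c₁ + c₂, add_mem hc₁ hc₂, by rw [map_add, map_add, he₁, he₂]; ring⟩
    · rintro a x - ⟨c₁, hc₁, he₁⟩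
      refine ⟨a * c₁, Ideal.mul_mem_left _ a hc₁, ?_⟩
      rw [smul_eq_mul, map_mul, map_mul, he₁]; ring
  obtain ⟨c, hc⟩ := exists_algebraMap_eq_of_stable w I₀ hI₀bot hstab
  apply ht
  have hct : c * p₀ = t := by
    apply IsFractionRing.injective S (FractionRing S)
    rw [map_mul, hc, hw]
    field_simp
    exact mul_comm _ _
  rw [← hct]
  exact (myDenom z).mul_mem_left c hp₀

end Aux

/-- Theorem 2.1(1) of the paper: if the localizations of `A` and `S^G` at each `fᵢ` agree
and the ideal generated by the `fᵢ` in `S` has height at least 2, then `S^G` is the ideal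
transform of `A` along `(f₁, …, f_r)`, computed inside the fraction field of `S`. -/
theorem ring_of_invariants_eq_ideal_transform
    {k S : Type*} [Field k] [IsAlgClosed k]
    [CommRing S] [IsDomain S] [Algebra k S]
    (hfgS : Algebra.FiniteType k S) [IsIntegrallyClosed S]
    {G : Type*} [Group G] (φ : G →* (S ≃ₐ[k] S))
    (A : Subalgebra k S) (hAfg : A.FG)
    (hAinv : ∀ x ∈ A, ∀ g : G, φ g x = x)
    {r : ℕ} (f : Fin r → S) (hfA : ∀ i, f i ∈ A)
    (hloc : ∀ i, ∀ s : S, (∀ g : G, φ g s = s) → ∃ n : ℕ, f i ^ n * s ∈ A)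
    (hht : ∀ P : Ideal S, ∀ hP : P.IsPrime, Ideal.span (Set.range f) ≤ P →
      2 ≤ Order.height (⟨P, hP⟩ : PrimeSpectrum S)) :
    (algebraMap S (FractionRing S)) '' {s : S | ∀ g : G, φ g s = s} =
      {q : FractionRing S | ∃ n : ℕ, 1 ≤ n ∧ ∀ i,
        ∃ a ∈ A, algebraMap S (FractionRing S) a
          = algebraMap S (FractionRing S) (f i) ^ n * q} := by
  classical
  haveI := hfgS
  haveI : IsNoetherianRing S := Algebra.FiniteType.isNoetherianRing k S
  have hne : ∃ i₀, f i₀ ≠ 0 := by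
    by_contra hcon
    push_neg at hcon
    have hsp : Ideal.span (Set.range f) ≤ (⊥ : Ideal S) := by
      rw [Ideal.span_le]; rintro _ ⟨i, rfl⟩; simp [hcon i]
    have h2 := hht ⊥ Ideal.bot_prime hsp
    have h0 : Order.height (⟨⊥, Ideal.bot_prime⟩ : PrimeSpectrum S) = 0 :=
      Order.height_eq_zero.mpr (fun b _ => (PrimeSpectrum.asIdeal_le_asIdeal _ _).mp bot_le)
    rw [h0] at h2
    simp at h2
  ext q
  constructor
  · rintro ⟨sel, hsel, rfl⟩
    choose m hm using fun i => hloc i sel hsel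
    set N : ℕ := (Finset.univ.sup m) + 1 with hN
    refine ⟨N, by omega, fun i => ⟨f i ^ N * sel, ?_, by rw [map_mul, map_pow]⟩⟩
    have hmi : m i ≤ N := le_trans (Finset.le_sup (Finset.mem_univ i)) (Nat.le_succ _)
    have hsplit : f i ^ N * sel = f i ^ (N - m i) * (f i ^ m i * sel) := by
      rw [← mul_assoc, ← pow_add]
      congr 2
      omega
    rw [hsplit]
    exact A.mul_mem (A.pow_mem (hfA i) _) (hm i)
  · rintro ⟨n, hn1, ha⟩
    have hqS : ∃ s : S, algebraMap S (FractionRing S) s = q := by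
      by_contra hq
      push_neg at hq
      obtain ⟨P, hP, hle, hQ⟩ := exists_prime_denom_le q hq
      have hsp : Ideal.span (Set.range f) ≤ P := by
        rw [Ideal.span_le]
        rintro _ ⟨i, rfl⟩
        apply hP.mem_of_pow_mem n
        apply hle
        obtain ⟨a, haA, haeq⟩ := ha i
        exact mem_myDenom.mpr ⟨a, by rw [haeq, map_pow]⟩
      have h2 := hht P hP hsp
      rw [Order.height_eq_iSup_lt_height] at h2
      have h2' : (1 : ℕ∞) < ⨆ (y : PrimeSpectrum S) (_ : y < ⟨P, hP⟩), Order.height y + 1 :=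
        lt_of_lt_of_le (by norm_num) h2
      obtain ⟨b, hb⟩ := lt_iSup_iff.mp h2'
      obtain ⟨hbP, hb1⟩ := lt_iSup_iff.mp hb
      have hbbot : b.asIdeal = ⊥ :=
        hQ b.asIdeal b.isPrime ((PrimeSpectrum.asIdeal_lt_asIdeal _ _).mpr hbP)
      have hmin : IsMin b := by
        intro c hc
        rw [← PrimeSpectrum.asIdeal_le_asIdeal, hbbot]
        exact bot_le
      rw [Order.height_eq_zero.mpr hmin] at hb1
      norm_num at hb1
    obtain ⟨s0, rfl⟩ := hqS
    obtain ⟨i₀, hi₀⟩ := hne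
    have hsinv : ∀ g : G, φ g s0 = s0 := by
      intro g
      obtain ⟨a, haA, haeq⟩ := ha i₀
      have h1 : f i₀ ^ n * s0 = a := by
        apply IsFractionRing.injective S (FractionRing S)
        rw [map_mul, map_pow, haeq]
      have h3 : φ g (f i₀ ^ n * s0) = f i₀ ^ n * s0 := by
        rw [h1]; exact hAinv a haA g
      rw [map_mul, map_pow, hAinv (f i₀) (hfA i₀) g] at h3
      exact mul_left_cancel₀ (pow_ne_zero n hi₀) h3
    exact ⟨s0, hsinv, rfl⟩
end

section
/- Let k be an algebraically closed field, let S be an integral domain that is a finitely generated k-algebra and is integrally closed in its fraction field (normal), and let a group G act on S by k-algebra automorphisms, with fixed subalgebra S^G. Let A be a finitely generated k-subalgebra of S^G and let f_1, …, f_r ∈ A be such that for each i and every g ∈ S^G there exists n ≥ 0 with f_i^n·g ∈ A. Suppose that A separates on the common zero set of the f_i: for all k-algebra homomorphisms u, v : S → k with u(f_i) = v(f_i) = 0 for all i, if there exists g ∈ S^G with u(g) ≠ v(g), then there exists a ∈ A with u(a) ≠ v(a). Then A is a separating algebra on all points: for all k-algebra homomorphisms u, v : S → k, if there exists g ∈ S^G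 with u(g) ≠ v(g), then there exists a ∈ A with u(a) ≠ v(a). -/
/-- Theorem 2.1(2) of the paper: if `A` is a separating algebra on the common zero set of the
`fᵢ`, then `A` is a separating algebra on all of `V`. Points of the affine variety with
coordinate ring `S` are identified with `k`-algebra homomorphisms `S → k`. -/
theorem separating_on_zero_locus_implies_separating
    {k S : Type*} [Field k] [IsAlgClosed k]
    [CommRing S] [IsDomain S] [Algebra k S]
    (hfgS : Algebra.FiniteType k S) [IsIntegrallyClosed S]
    {G : Type*} [Group G] (φ : G →* (S ≃ₐ[k] S))
    (A : Subalgebra k S) (hAfg : A.FG)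
    (hAinv : ∀ x ∈ A, ∀ g : G, φ g x = x)
    {r : ℕ} (f : Fin r → S) (hfA : ∀ i, f i ∈ A)
    (hloc : ∀ i, ∀ s : S, (∀ g : G, φ g s = s) → ∃ n : ℕ, f i ^ n * s ∈ A)
    (hsep0 : ∀ u v : S →ₐ[k] k, (∀ i, u (f i) = 0) → (∀ i, v (f i) = 0) →
      (∃ s : S, (∀ g : G, φ g s = s) ∧ u s ≠ v s) → ∃ a ∈ A, u a ≠ v a) :
    ∀ u v : S →ₐ[k] k,
      (∃ s : S, (∀ g : G, φ g s = s) ∧ u s ≠ v s) → ∃ a ∈ A, u a ≠ v a := by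
  rintro u v ⟨s, hs, hne⟩
  by_cases hcase : ∃ i, u (f i) ≠ v (f i)
  · obtain ⟨i, hi⟩ := hcase
    exact ⟨f i, hfA i, hi⟩
  push_neg at hcase
  by_cases hzero : ∀ i, u (f i) = 0
  · exact hsep0 u v hzero (fun i => (hcase i).symm.trans (hzero i)) ⟨s, hs, hne⟩
  · push_neg at hzero
    obtain ⟨i, hi⟩ := hzero
    obtain ⟨n, hn⟩ := hloc i s hs
    refine ⟨f i ^ n * s, hn, ?_⟩
    simp only [map_mul, map_pow, hcase i]
    exact fun h => hne (mul_left_cancel₀ (pow_ne_zero n ((hcase i) ▸ hi)) h)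
end

section
/- Let k be an algebraically closed field, let S be an integral domain that is a finitely generated k-algebra and is integrally closed in its fraction field (normal), and let a group G act on S by k-algebra automorphisms, with fixed subalgebra S^G. Let A be a finitely generated k-subalgebra of S^G and let f_1, …, f_r ∈ A be such that for each i and every g ∈ S^G there exists n ≥ 0 with f_i^n·g ∈ A, and such that the ideal (f_1, …, f_r)S has height at least 2 in S. If S^G ⊆ k + (f_1, …, f_r)S, i.e. every g ∈ S^G can be written as g = c·1 + h with c ∈ k and h in the ideal of S generated by f_1, …, f_r, then A is a separating algebra: for all k-algebra homomorphisms u, v : S → k, if there exists g ∈ S^G with u(g) ≠ v(g), then there exists a ∈ A with u(a) ≠ v(a). -/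
/-- Corollary 2.2 of the paper: under the hypotheses of Theorem 2.1(1), if moreover
`S^G ⊆ k + (f₁, …, f_r)S`, then `A` is a separating algebra. -/
theorem separating_of_invariants_in_constants_plus_ideal
    {k S : Type*} [Field k] [IsAlgClosed k]
    [CommRing S] [IsDomain S] [Algebra k S]
    (hfgS : Algebra.FiniteType k S) [IsIntegrallyClosed S]
    {G : Type*} [Group G] (φ : G →* (S ≃ₐ[k] S))
    (A : Subalgebra k S) (hAfg : A.FG)
    (hAinv : ∀ x ∈ A, ∀ g : G, φ g x = x)
    {r : ℕ} (f : Fin r → S) (hfA : ∀ i, f i ∈ A)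
    (hloc : ∀ i, ∀ s : S, (∀ g : G, φ g s = s) → ∃ n : ℕ, f i ^ n * s ∈ A)
    (hht : ∀ P : Ideal S, ∀ hP : P.IsPrime, Ideal.span (Set.range f) ≤ P →
      2 ≤ Order.height (⟨P, hP⟩ : PrimeSpectrum S))
    (hconst : ∀ s : S, (∀ g : G, φ g s = s) →
      ∃ c : k, s - algebraMap k S c ∈ Ideal.span (Set.range f)) :
    ∀ u v : S →ₐ[k] k,
      (∃ s : S, (∀ g : G, φ g s = s) ∧ u s ≠ v s) → ∃ a ∈ A, u a ≠ v a := by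
  intro u v ⟨s, hs, hsne⟩
  by_contra h
  push_neg at h
  by_cases hne : ∃ i, u (f i) ≠ 0
  · obtain ⟨i, hi⟩ := hne
    obtain ⟨n, hn⟩ := hloc i s hs
    have h1 : u (f i ^ n * s) = v (f i ^ n * s) := h _ hn
    have h2 : v (f i) = u (f i) := (h _ (hfA i)).symm
    simp only [map_mul, map_pow, h2] at h1
    exact hsne (mul_left_cancel₀ (pow_ne_zero n hi) h1)
  · push_neg at hne
    have hker : ∀ w : S →ₐ[k] k, (∀ i, w (f i) = 0) →
        ∀ x ∈ Ideal.span (Set.range f), w x = 0 := by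
      intro w hw x hx
      have : Ideal.span (Set.range f) ≤ RingHom.ker (w : S →+* k) := by
        rw [Ideal.span_le]
        rintro _ ⟨i, rfl⟩
        exact hw i
      exact this hx
    have hvf : ∀ i, v (f i) = 0 := fun i => (h _ (hfA i)) ▸ hne i
    obtain ⟨c, hc⟩ := hconst s hs
    have hu : u (s - algebraMap k S c) = 0 := hker u hne _ hc
    have hv : v (s - algebraMap k S c) = 0 := hker v hvf _ hc
    rw [map_sub, sub_eq_zero, AlgHom.commutes] at hu hv
    exact hsne (hu.trans hv.symm)
end

section
/- Let k be a field of characteristic zero and let R be an integral domain that is a k-algebra generated (as a k-algebra) by elements b_1, …, b_m. Let D : R → R be a locally nilpotent k-derivation, and let s ∈ R satisfy f := D(s) ≠ 0 and D²(s) = 0 (so s is a local slice). In the localization L = R_f (Localization.Away f), for each b ∈ R define π(b) := Σ_{j≥0} (1/j!)·D^j(b)·(−s/f)^j ∈ L (a finite sum since D is locally nilpotent). Then the localization of the kernel of D at f, namely the set {g ∈ L : there exists n ≥ 0 with f^n·g lying in the image of {r ∈ R : D r = 0}}, equals the k-subalgebra of L generated by the image of f, the inverse of the image of f, and π(b_1),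 …, π(b_m). -/
open Finset Polynomial

section Aux
variable {k R : Type*} [Field k] [CharZero k] [CommRing R] [Algebra k R]

omit [CharZero k] in
lemma pow_apply_zero_of_le (D : Derivation k R R) {x : R} {n j : ℕ}
    (h : (D.toLinearMap ^ n) x = 0) (hnj : n ≤ j) : (D.toLinearMap ^ j) x = 0 := by
  obtain ⟨c, rfl⟩ := Nat.exists_eq_add_of_le hnj
  rw [add_comm, pow_add, Module.End.mul_apply, h, map_zero]

omit [CharZero k] in
lemma iterLeibniz (D : Derivation k R R) (x y : R) (n : ℕ) :
    (D.toLinearMap ^ n) (x * y) =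
      ∑ i ∈ Finset.range (n + 1),
        n.choose i • ((D.toLinearMap ^ i) x * (D.toLinearMap ^ (n - i)) y) := by
  induction n with
  | zero => simp
  | succ n ih =>
    have hD : ∀ (m : ℕ) (z : R), (D.toLinearMap ^ (m + 1)) z = D ((D.toLinearMap ^ m) z) := by
      intro m z; rw [pow_succ']; rfl
    rw [hD, ih, map_sum]
    have h1 : ∀ i ∈ Finset.range (n + 1),
        D (n.choose i • ((D.toLinearMap ^ i) x * (D.toLinearMap ^ (n - i)) y))
          = n.choose i • ((D.toLinearMap ^ (i + 1)) x * (D.toLinearMap ^ (n - i)) y)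
            + n.choose i • ((D.toLinearMap ^ i) x * (D.toLinearMap ^ (n - i + 1)) y) := by
      intro i _
      rw [map_nsmul, Derivation.leibniz, smul_eq_mul, smul_eq_mul, ← hD, ← hD, smul_add]
      ring
    rw [Finset.sum_congr rfl h1, Finset.sum_add_distrib]
    have hT : ∑ i ∈ Finset.range (n + 1 + 1),
        (n+1).choose i • ((D.toLinearMap ^ i) x * (D.toLinearMap ^ (n + 1 - i)) y)
        = (∑ i ∈ Finset.range (n + 1),
            n.choose i • ((D.toLinearMap ^ (i+1)) x * (D.toLinearMap ^ (n - i)) y))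
          + ((∑ i ∈ Finset.range (n + 1),
              n.choose (i+1) • ((D.toLinearMap ^ (i+1)) x * (D.toLinearMap ^ (n - i)) y))
            + x * (D.toLinearMap ^ (n + 1)) y) := by
      rw [Finset.sum_range_succ' (fun i => (n+1).choose i •
        ((D.toLinearMap ^ i) x * (D.toLinearMap ^ (n + 1 - i)) y)) (n+1)]
      simp only [Nat.succ_sub_succ, Nat.choose_succ_succ, add_smul, Nat.choose_zero_right,
        one_smul, Nat.sub_zero, pow_zero, Module.End.one_apply]
      rw [Finset.sum_add_distrib, add_assoc]
    have hS2 : ∑ i ∈ Finset.range (n + 1),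
        n.choose i • ((D.toLinearMap ^ i) x * (D.toLinearMap ^ (n - i + 1)) y)
        = (∑ i ∈ Finset.range (n + 1),
            n.choose (i+1) • ((D.toLinearMap ^ (i+1)) x * (D.toLinearMap ^ (n - i)) y))
          + x * (D.toLinearMap ^ (n + 1)) y := by
      rw [Finset.sum_range_succ' (fun i => n.choose i •
        ((D.toLinearMap ^ i) x * (D.toLinearMap ^ (n - i + 1)) y)) n]
      rw [Finset.sum_range_succ (fun i => n.choose (i+1) •
        ((D.toLinearMap ^ (i+1)) x * (D.toLinearMap ^ (n - i)) y)) n]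
      rw [Nat.choose_succ_self, zero_smul, add_zero]
      simp only [Nat.choose_zero_right, one_smul, Nat.sub_zero, pow_zero, Module.End.one_apply]
      congr 1
      refine Finset.sum_congr rfl fun i hi => ?_
      have h2 : n - (i + 1) + 1 = n - i := by
        have := Finset.mem_range.mp hi; omega
      rw [h2]
    rw [hT, hS2]
variable (D : Derivation k R R)

/-- `j`-th Taylor coefficient `(1/j!) Dʲ x`. -/
noncomputable def tCoeff (x : R) (j : ℕ) : R :=
  algebraMap k R ((j.factorial : k)⁻¹) * (D.toLinearMap ^ j) x

variable (hln : ∀ x : R, ∃ n : ℕ, (D.toLinearMap ^ n) x = 0)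

/-- Taylor polynomial of `x`. -/
noncomputable def tPoly (x : R) : Polynomial R :=
  ∑ j ∈ Finset.range (Classical.choose (hln x)), Polynomial.monomial j (tCoeff D x j)

lemma tCoeff_eq_zero {x : R} {n j : ℕ} (h : (D.toLinearMap ^ n) x = 0) (hnj : n ≤ j) :
    tCoeff D x j = 0 := by
  rw [tCoeff, pow_apply_zero_of_le D h hnj, mul_zero]

lemma coeff_tPoly (x : R) (j : ℕ) : (tPoly D hln x).coeff j = tCoeff D x j := by
  rw [tPoly, Polynomial.finset_sum_coeff]
  simp only [Polynomial.coeff_monomial]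
  rw [Finset.sum_ite_eq' (Finset.range (Classical.choose (hln x))) j (tCoeff D x)]
  by_cases hj : j ∈ Finset.range (Classical.choose (hln x))
  · rw [if_pos hj]
  · rw [if_neg hj]
    exact (tCoeff_eq_zero D (Classical.choose_spec (hln x))
      (le_of_not_gt (fun h => hj (Finset.mem_range.mpr h)))).symm

lemma fact_inv_choose {i d : ℕ} (h : i ≤ d) :
    ((d.factorial : k))⁻¹ * (d.choose i : k) = ((i.factorial : k))⁻¹ * (((d - i).factorial : k))⁻¹ := by
  have h1 : (d.choose i : k) * (i.factorial : k) * ((d - i).factorial : k) = (d.factorial : k) := by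
    exact_mod_cast congrArg (Nat.cast : ℕ → k) (Nat.choose_mul_factorial_mul_factorial h)
  have h2 : (i.factorial : k) ≠ 0 := Nat.cast_ne_zero.mpr (Nat.factorial_ne_zero i)
  have h3 : ((d - i).factorial : k) ≠ 0 := Nat.cast_ne_zero.mpr (Nat.factorial_ne_zero (d - i))
  have h4 : (d.factorial : k) ≠ 0 := Nat.cast_ne_zero.mpr (Nat.factorial_ne_zero d)
  field_simp
  linear_combination h1

lemma tPoly_mul (x y : R) : tPoly D hln (x * y) = tPoly D hln x * tPoly D hln y := by
  ext d
  rw [Polynomial.coeff_mul, coeff_tPoly]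
  simp only [coeff_tPoly]
  rw [Finset.Nat.sum_antidiagonal_eq_sum_range_succ_mk (fun ij => tCoeff D x ij.1 * tCoeff D y ij.2) d]
  rw [tCoeff, iterLeibniz, Finset.mul_sum]
  refine Finset.sum_congr rfl fun i hi => ?_
  have hid : i ≤ d := Nat.lt_succ_iff.mp (Finset.mem_range.mp hi)
  simp only [tCoeff]
  rw [nsmul_eq_mul]
  have hc : ((d.choose i : ℕ) : R) = algebraMap k R ((d.choose i : ℕ) : k) := by
    rw [map_natCast]
  rw [hc, ← mul_assoc, ← map_mul, fact_inv_choose hid, map_mul]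
  ring

lemma tPoly_add (x y : R) : tPoly D hln (x + y) = tPoly D hln x + tPoly D hln y := by
  ext d
  simp only [Polynomial.coeff_add, coeff_tPoly, tCoeff, map_add, mul_add]

lemma tPoly_algebraMap (a : k) : tPoly D hln (algebraMap k R a) = Polynomial.C (algebraMap k R a) := by
  ext d
  rw [coeff_tPoly, Polynomial.coeff_C]
  rcases d with _ | d
  · simp [tCoeff]
  · rw [if_neg (Nat.succ_ne_zero d)]
    refine tCoeff_eq_zero D (n := 1) ?_ (Nat.one_le_iff_ne_zero.mpr (Nat.succ_ne_zero d))
    simpa using D.map_algebraMap a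

lemma tPoly_of_ker {x : R} (hx : D x = 0) : tPoly D hln x = Polynomial.C x := by
  ext d
  rw [coeff_tPoly, Polynomial.coeff_C]
  rcases d with _ | d
  · simp [tCoeff]
  · rw [if_neg (Nat.succ_ne_zero d)]
    exact tCoeff_eq_zero D (n := 1) (by simpa using hx) (Nat.one_le_iff_ne_zero.mpr (Nat.succ_ne_zero d))

lemma tPoly_eq_sum {x : R} {n : ℕ} (hx : (D.toLinearMap ^ n) x = 0) :
    tPoly D hln x = ∑ j ∈ Finset.range n, Polynomial.monomial j (tCoeff D x j) := by
  ext d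
  rw [coeff_tPoly, Polynomial.finset_sum_coeff]
  simp only [Polynomial.coeff_monomial]
  rw [Finset.sum_ite_eq' (Finset.range n) d (tCoeff D x)]
  by_cases hd : d ∈ Finset.range n
  · rw [if_pos hd]
  · rw [if_neg hd]
    exact tCoeff_eq_zero D hx (le_of_not_gt (fun h => hd (Finset.mem_range.mpr h)))

variable {L : Type*} [CommRing L] [Algebra k L] [Algebra R L] [IsScalarTower k R L]

/-- The exponential homomorphism `x ↦ Σ (1/j!) Dʲ(x) tʲ`. -/
noncomputable def taylorHom (t : L) : R →ₐ[k] L where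
  toFun x := Polynomial.eval₂ (algebraMap R L) t (tPoly D hln x)
  map_one' := by
    show Polynomial.eval₂ (algebraMap R L) t (tPoly D hln 1) = 1
    have : (1 : R) = algebraMap k R 1 := by rw [map_one]
    rw [this, tPoly_algebraMap, Polynomial.eval₂_C, map_one, map_one]
  map_mul' x y := by
    show Polynomial.eval₂ (algebraMap R L) t (tPoly D hln (x * y)) =
      Polynomial.eval₂ (algebraMap R L) t (tPoly D hln x) *
        Polynomial.eval₂ (algebraMap R L) t (tPoly D hln y)
    rw [tPoly_mul, Polynomial.eval₂_mul]
  map_add' x y := by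
    show Polynomial.eval₂ (algebraMap R L) t (tPoly D hln (x + y)) =
      Polynomial.eval₂ (algebraMap R L) t (tPoly D hln x) +
        Polynomial.eval₂ (algebraMap R L) t (tPoly D hln y)
    rw [tPoly_add, Polynomial.eval₂_add]
  map_zero' := by
    show Polynomial.eval₂ (algebraMap R L) t (tPoly D hln 0) = 0
    have : (0 : R) = algebraMap k R 0 := by rw [map_zero]
    rw [this, tPoly_algebraMap, Polynomial.eval₂_C, map_zero, map_zero]
  commutes' a := by
    show Polynomial.eval₂ (algebraMap R L) t (tPoly D hln (algebraMap k R a)) = algebraMap k L a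
    rw [tPoly_algebraMap, Polynomial.eval₂_C, ← IsScalarTower.algebraMap_apply]

lemma taylorHom_of_ker (t : L) {x : R} (hx : D x = 0) :
    taylorHom D hln t x = algebraMap R L x := by
  show Polynomial.eval₂ (algebraMap R L) t (tPoly D hln x) = algebraMap R L x
  rw [tPoly_of_ker D hln hx, Polynomial.eval₂_C]

lemma taylorHom_eq_sum (t : L) {x : R} {n : ℕ} (hx : (D.toLinearMap ^ n) x = 0) :
    taylorHom D hln t x = ∑ j ∈ Finset.range n, algebraMap R L (tCoeff D x j) * t ^ j := by
  show Polynomial.eval₂ (algebraMap R L) t (tPoly D hln x) = _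
  rw [tPoly_eq_sum D hln hx, Polynomial.eval₂_finset_sum]
  exact Finset.sum_congr rfl fun j _ => Polynomial.eval₂_monomial _ _

lemma succ_mul_fact_inv (j : ℕ) :
    (((j+1 : ℕ) : k)) * ((((j+1).factorial : ℕ) : k))⁻¹ = (((j.factorial : ℕ) : k))⁻¹ := by
  have h1 : (((j+1).factorial : ℕ) : k) = ((j+1 : ℕ) : k) * ((j.factorial : ℕ) : k) := by
    rw [Nat.factorial_succ]; push_cast; ring
  have h2 : ((j+1 : ℕ) : k) ≠ 0 := Nat.cast_ne_zero.mpr (Nat.succ_ne_zero j)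
  rw [h1, mul_inv, ← mul_assoc, mul_inv_cancel₀ h2, one_mul]

lemma telescope (s f : R) (hf : f = D s) (hDf : D f = 0) {x : R} {n : ℕ}
    (hx : (D.toLinearMap ^ n) x = 0) :
    D (∑ j ∈ Finset.range n, tCoeff D x j * (-s) ^ j * f ^ (n - j)) = 0 := by
  have hD : ∀ (m : ℕ) (z : R), (D.toLinearMap ^ (m + 1)) z = D ((D.toLinearMap ^ m) z) := by
    intro m z; rw [pow_succ']; rfl
  set g : ℕ → R := fun j => (j : R) *
    (algebraMap k R (((j.factorial : ℕ) : k))⁻¹ *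
      ((D.toLinearMap ^ j) x * ((-s) ^ (j-1) * f ^ (n - j + 1)))) with hg
  have key : ∀ j ∈ Finset.range n,
      D (tCoeff D x j * (-s) ^ j * f ^ (n - j)) = g (j+1) - g j := by
    intro j hj
    have hjn : j < n := Finset.mem_range.mp hj
    have hfp : ∀ m : ℕ, D (f ^ m) = 0 := by
      intro m; rw [Derivation.leibniz_pow, hDf, smul_zero, smul_zero]
    have hDs : D (-s) = -f := by rw [map_neg, hf]
    have hDc : D (tCoeff D x j) = algebraMap k R (((j.factorial : ℕ) : k))⁻¹ *
        (D.toLinearMap ^ (j+1)) x := by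
      rw [tCoeff, Algebra.smul_def ((j.factorial : k))⁻¹ ((D.toLinearMap ^ j) x) |>.symm,
        Derivation.map_smul, hD, Algebra.smul_def]
    rw [Derivation.leibniz, Derivation.leibniz, hfp, Derivation.leibniz_pow, hDs, hDc]
    have e1 : g (j+1) = algebraMap k R (((j.factorial : ℕ) : k))⁻¹ *
        ((D.toLinearMap ^ (j+1)) x * ((-s) ^ j * f ^ (n - j))) := by
      rw [hg]
      have c1 : ((j+1 : ℕ) : R) = algebraMap k R ((j+1 : ℕ) : k) := (map_natCast _ _).symm
      have c2 : (j + 1) - 1 = j := rfl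
      have c3 : n - (j+1) + 1 = n - j := by omega
      simp only [c2, c3]
      rw [c1, ← mul_assoc, ← map_mul, succ_mul_fact_inv]
    have e2 : g j = (j : R) * (algebraMap k R (((j.factorial : ℕ) : k))⁻¹ *
        ((D.toLinearMap ^ j) x * ((-s) ^ (j-1) * f ^ (n - j + 1)))) := rfl
    rw [e1, e2, tCoeff]
    have c4 : n - j + 1 = n - j + 1 := rfl
    have c5 : f ^ (n - j + 1) = f ^ (n - j) * f := by rw [pow_succ]
    rw [c5]
    simp only [smul_eq_mul, nsmul_eq_mul, smul_zero]
    ring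
  rw [map_sum, Finset.sum_congr rfl key, Finset.sum_range_sub g n]
  have hgn : g n = 0 := by rw [hg]; simp [hx]
  have hg0 : g 0 = 0 := by rw [hg]; simp
  rw [hgn, hg0, sub_zero]

end Aux

set_option maxHeartbeats 1000000 in
/-- Lemma 3.1 of the paper (first step of van den Essen's algorithm): if `s` is a local slice
of the locally nilpotent derivation `D` with `f = D(s) ≠ 0`, then the localization of `ker D`
at `f` is generated as a `k`-algebra by `f`, `1/f` and the elements
`π(bᵢ) = Σ_j (1/j!) Dʲ(bᵢ) (−s/f)ʲ`, where the `bᵢ` generate `R`. -/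
theorem localized_kernel_of_lnd_generated_by_local_slice
    {k R : Type*} [Field k] [CharZero k] [CommRing R] [IsDomain R] [Algebra k R]
    {m : ℕ} (b : Fin m → R) (hgen : Algebra.adjoin k (Set.range b) = ⊤)
    (D : Derivation k R R)
    (hln : ∀ x : R, ∃ n : ℕ, (D.toLinearMap ^ n) x = 0)
    (s f : R) (hf : f = D s) (hf0 : f ≠ 0) (hD2 : D (D s) = 0)
    (N : Fin m → ℕ) (hN : ∀ i, (D.toLinearMap ^ (N i)) (b i) = 0)
    (π : Fin m → Localization.Away f)
    (hπ : ∀ i, π i = ∑ j ∈ Finset.range (N i),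
      algebraMap R (Localization.Away f)
          (algebraMap k R ((j.factorial : k)⁻¹) * (D.toLinearMap ^ j) (b i)) *
        (-(algebraMap R (Localization.Away f) s) * IsLocalization.Away.invSelf f) ^ j) :
    {g : Localization.Away f | ∃ n : ℕ, ∃ r : R, D r = 0 ∧
        algebraMap R (Localization.Away f) f ^ n * g = algebraMap R (Localization.Away f) r} =
      (Algebra.adjoin k
        ({algebraMap R (Localization.Away f) f, IsLocalization.Away.invSelf f} ∪ Set.range π) :
        Subalgebra k (Localization.Away f)) := by
  classical
  have hDf : D f = 0 := by rw [hf]; exact hD2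
  have hfp : ∀ q : ℕ, D (f ^ q) = 0 := by
    intro q; rw [Derivation.leibniz_pow, hDf, smul_zero, smul_zero]
  have hfu : algebraMap R (Localization.Away f) f * IsLocalization.Away.invSelf f = 1 :=
    IsLocalization.Away.mul_invSelf f
  set t : Localization.Away f :=
    -(algebraMap R (Localization.Away f) s) * IsLocalization.Away.invSelf f with hT
  set Φ : R →ₐ[k] Localization.Away f := taylorHom D hln t with hΦ
  have hΦb : ∀ i, Φ (b i) = π i := by
    intro i
    rw [hπ i, hΦ, taylorHom_eq_sum D hln t (hN i)]
    simp only [tCoeff]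
  apply Set.Subset.antisymm
  · rintro g ⟨n, r, hr, hfg⟩
    have hginv : g = algebraMap R (Localization.Away f) r *
        (IsLocalization.Away.invSelf f) ^ n := by
      calc g = (algebraMap R (Localization.Away f) f * IsLocalization.Away.invSelf f) ^ n * g := by
            rw [hfu, one_pow, one_mul]
        _ = IsLocalization.Away.invSelf f ^ n *
              (algebraMap R (Localization.Away f) f ^ n * g) := by ring
        _ = _ := by rw [hfg]; ring
    have hrmem : algebraMap R (Localization.Away f) r ∈ Algebra.adjoin k (Set.range π) := by
      have h0 : algebraMap R (Localization.Away f) r = Φ r := (taylorHom_of_ker D hln t hr).symm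
      have hrtop : r ∈ Algebra.adjoin k (Set.range b) := by rw [hgen]; exact Algebra.mem_top
      have h2 : Φ r ∈ Subalgebra.map Φ (Algebra.adjoin k (Set.range b)) := ⟨r, hrtop, rfl⟩
      rw [AlgHom.map_adjoin] at h2
      have h3 : ⇑Φ '' Set.range b = Set.range π := by
        rw [← Set.range_comp]
        exact congrArg Set.range (funext hΦb)
      rw [h3] at h2
      rw [h0]; exact h2
    rw [hginv]
    refine SetLike.mem_coe.mpr ?_
    have hu : IsLocalization.Away.invSelf f ∈
        ({algebraMap R (Localization.Away f) f, IsLocalization.Away.invSelf f} ∪ Set.range π :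
          Set (Localization.Away f)) := by
      left; right; rfl
    have hu2 := Algebra.subset_adjoin (R := k) hu
    exact mul_mem (Algebra.adjoin_mono Set.subset_union_right hrmem) (pow_mem hu2 n)
  · intro g hg
    let S : Subalgebra k (Localization.Away f) :=
      { carrier := {g : Localization.Away f | ∃ n : ℕ, ∃ r : R, D r = 0 ∧
          algebraMap R (Localization.Away f) f ^ n * g = algebraMap R (Localization.Away f) r}
        mul_mem' := by
          rintro g₁ g₂ ⟨n₁, r₁, h₁, e₁⟩ ⟨n₂, r₂, h₂, e₂⟩
          refine ⟨n₁ + n₂, r₁ * r₂, ?_, ?_⟩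
          · rw [Derivation.leibniz, h₁, h₂, smul_zero, smul_zero, add_zero]
          · rw [map_mul, ← e₁, ← e₂, pow_add]; ring
        one_mem' := ⟨0, 1, by simp, by simp⟩
        add_mem' := by
          rintro g₁ g₂ ⟨n₁, r₁, h₁, e₁⟩ ⟨n₂, r₂, h₂, e₂⟩
          refine ⟨n₁ + n₂, f ^ n₂ * r₁ + f ^ n₁ * r₂, ?_, ?_⟩
          · rw [map_add, Derivation.leibniz, Derivation.leibniz, h₁, h₂, hfp, hfp]
            simp
          · rw [map_add, map_mul, map_mul, map_pow, map_pow, ← e₁, ← e₂, pow_add]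
            ring
        zero_mem' := ⟨0, 0, map_zero D, by simp⟩
        algebraMap_mem' := fun a => ⟨0, algebraMap k R a, D.map_algebraMap a, by
          rw [pow_zero, one_mul, ← IsScalarTower.algebraMap_apply]⟩ }
    have hle : Algebra.adjoin k
        ({algebraMap R (Localization.Away f) f, IsLocalization.Away.invSelf f} ∪ Set.range π)
        ≤ S := by
      apply Algebra.adjoin_le
      rintro z hz
      simp only [Set.mem_union, Set.mem_insert_iff, Set.mem_singleton_iff, Set.mem_range] at hz
      rcases hz with (rfl | rfl) | ⟨i, rfl⟩
      · exact ⟨0, f, hDf, by rw [pow_zero, one_mul]⟩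
      · exact ⟨1, 1, by simp, by rw [pow_one, hfu, map_one]⟩
      · refine ⟨N i, ∑ j ∈ Finset.range (N i), tCoeff D (b i) j * (-s) ^ j * f ^ (N i - j),
          telescope D s f hf hDf (hN i), ?_⟩
        rw [hπ i, Finset.mul_sum, map_sum]
        refine Finset.sum_congr rfl fun j hj => ?_
        have hjN : j ≤ N i := le_of_lt (Finset.mem_range.mp hj)
        have hpow : (algebraMap R (Localization.Away f) f) ^ (N i) *
            (IsLocalization.Away.invSelf f) ^ j
            = (algebraMap R (Localization.Away f) f) ^ (N i - j) := by
          calc _ = (algebraMap R (Localization.Away f) f) ^ (N i - j) *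
                ((algebraMap R (Localization.Away f) f * IsLocalization.Away.invSelf f) ^ j) := by
                rw [mul_pow, ← mul_assoc, ← pow_add, Nat.sub_add_cancel hjN]
            _ = _ := by rw [hfu, one_pow, mul_one]
        simp only [tCoeff, map_mul, map_pow, map_neg, mul_pow]
        conv_rhs => rw [← hpow]
        ring
    exact hle hg
end

section
/- Let k be an algebraically closed field of characteristic zero, let R = k[x, s, t, u, v] be the polynomial ring in five variables, and let Δ be the unique k-derivation of R with Δ(x) = 0, Δ(s) = x³, Δ(t) = s, Δ(u) = t, Δ(v) = x². Let A be the k-subalgebra of R generated by x, 2x³t − s², 3x⁶u − 3x³ts + s³, xv − s, x²ts − s²v + 2x³tv − 3x⁵u, and −18x³tsu + 9x⁶u² + 8x³t³ + 6s³u − 3t²s². Then for every g ∈ R with Δ(g) = 0 there exists n ≥ 0 such that xⁿ·g ∈ A, and there exists n ≥ 0 such that (2x³t − s²)ⁿ·g ∈ A (i.e. A_x = (ker Δ)_x and A_{2x³t−s²} = (ker Δ)_{2x³t−s²}). -/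
set_option maxRecDepth 1000000
set_option maxHeartbeats 4000000
set_option synthInstance.maxHeartbeats 1000000

open MvPolynomial

section Aux

variable {k R : Type*} [CommRing k] [CommRing R] [Algebra k R]

/-- Restrict the base of a derivation to a subalgebra contained in its kernel. -/
def Derivation.restrictBase (Δ : Derivation k R R) (B : Subalgebra k R)
    (hB : ∀ b : B, Δ (b : R) = 0) : Derivation B R R where
  toLinearMap :=
    { toFun := fun r => Δ r
      map_add' := fun a b => map_add Δ a b
      map_smul' := fun b r => by
        simp only [RingHom.id_apply]
        rw [Algebra.smul_def, Δ.leibniz]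
        have hb0 : Δ ((algebraMap B R) b) = 0 := hB b
        rw [hb0, smul_zero, add_zero]
        simp [Algebra.smul_def] }
  map_one_eq_zero' := Δ.map_one_eq_zero
  leibniz' := fun a b => Δ.leibniz a b

@[simp] lemma Derivation.restrictBase_apply (Δ : Derivation k R R) (B : Subalgebra k R)
    (hB : ∀ b : B, Δ (b : R) = 0) (r : R) : Δ.restrictBase B hB r = Δ r := rfl

end Aux

section Slice

variable {B R : Type*} [CommRing B] [CommRing R] [Algebra B R]

theorem aeval_zero_of_deriv_slice [IsDomain R] [NoZeroSMulDivisors ℕ B]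
    (hinj : Function.Injective (algebraMap B R))
    (d : Derivation B R R) (w : R) (hw : d w ≠ 0) :
    ∀ (n : ℕ) (q : Polynomial B), q.natDegree ≤ n → Polynomial.aeval w q = 0 → q = 0 := by
  have hconst : ∀ q : Polynomial B, q.natDegree = 0 → Polynomial.aeval w q = 0 → q = 0 := by
    intro q hq h0
    rw [Polynomial.eq_C_of_natDegree_eq_zero hq] at h0 ⊢
    rw [Polynomial.aeval_C] at h0
    have : q.coeff 0 = 0 := hinj (by simpa using h0)
    rw [this, map_zero]
  intro n
  induction n with
  | zero => exact fun q hq => hconst q (Nat.le_zero.mp hq)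
  | succ n ih =>
    intro q hq h0
    have hd : Polynomial.aeval w (Polynomial.derivative q) * d w = 0 := by
      have h1 := Derivation.comp_aeval_eq w d q
      rw [h0, map_zero] at h1
      rw [← smul_eq_mul, ← h1]
    rcases mul_eq_zero.mp hd with h | h
    · have hder := ih (Polynomial.derivative q)
        (le_trans (Polynomial.natDegree_derivative_le q) (by omega)) h
      haveI : IsAddTorsionFree B := ⟨fun n hn a b hab => sub_eq_zero.mp ((smul_eq_zero.mp (by rw [smul_sub]; exact sub_eq_zero.mpr hab)).resolve_left hn)⟩
      exact hconst q (Polynomial.natDegree_eq_zero_of_derivative_eq_zero hder) h0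
    · exact absurd h hw

theorem aeval_eq_C_of_deriv_eq_zero [IsDomain R] [NoZeroSMulDivisors ℕ B]
    (hinj : Function.Injective (algebraMap B R))
    (d : Derivation B R R) (w : R) (hw : d w ≠ 0)
    (q : Polynomial B) (h0 : d (Polynomial.aeval w q) = 0) :
    Polynomial.aeval w q = algebraMap B R (q.coeff 0) := by
  have hd : Polynomial.aeval w (Polynomial.derivative q) * d w = 0 := by
    have h1 := Derivation.comp_aeval_eq w d q
    rw [h0] at h1
    rw [← smul_eq_mul, ← h1]
  rcases mul_eq_zero.mp hd with h | h
  · have hder := aeval_zero_of_deriv_slice hinj d w hw (Polynomial.derivative q).natDegree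
      (Polynomial.derivative q) le_rfl h
    haveI : IsAddTorsionFree B := ⟨fun n hn a b hab => sub_eq_zero.mp ((smul_eq_zero.mp (by rw [smul_sub]; exact sub_eq_zero.mpr hab)).resolve_left hn)⟩
    have hq0 := Polynomial.natDegree_eq_zero_of_derivative_eq_zero hder
    rw [Polynomial.eq_C_of_natDegree_eq_zero hq0, Polynomial.aeval_C, Polynomial.coeff_C_zero]
  · exact absurd h hw

end Slice

/-- In the Daigle–Freudenburg example (variables `x = X 0`, `s = X 1`, `t = X 2`, `u = X 3`,
`v = X 4`), the localizations of Winkelmann's algebra `A` at `x` and at `2x³t − s²` agree with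
those of the kernel of `Δ`: for every invariant `g`, some power of `x` (resp. of `2x³t − s²`)
multiplies `g` into `A`. -/
theorem daigle_freudenburg_localizations_agree
    {k : Type*} [Field k] [IsAlgClosed k] [CharZero k]
    (Δ : Derivation k (MvPolynomial (Fin 5) k) (MvPolynomial (Fin 5) k))
    (hΔ : Δ = mkDerivation k ![0, (X 0) ^ 3, X 1, X 2, (X 0) ^ 2])
    (A : Subalgebra k (MvPolynomial (Fin 5) k))
    (hA : A = Algebra.adjoin k
      {X 0,
       2 * (X 0) ^ 3 * X 2 - (X 1) ^ 2,
       3 * (X 0) ^ 6 * X 3 - 3 * (X 0) ^ 3 * X 2 * X 1 + (X 1) ^ 3,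
       X 0 * X 4 - X 1,
       (X 0) ^ 2 * X 2 * X 1 - (X 1) ^ 2 * X 4 + 2 * (X 0) ^ 3 * X 2 * X 4
         - 3 * (X 0) ^ 5 * X 3,
       -18 * (X 0) ^ 3 * X 2 * X 1 * X 3 + 9 * (X 0) ^ 6 * (X 3) ^ 2
         + 8 * (X 0) ^ 3 * (X 2) ^ 3 + 6 * (X 1) ^ 3 * X 3 - 3 * (X 2) ^ 2 * (X 1) ^ 2}) :
    ∀ g : MvPolynomial (Fin 5) k, Δ g = 0 →
      (∃ n : ℕ, (X 0 : MvPolynomial (Fin 5) k) ^ n * g ∈ A) ∧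
      (∃ n : ℕ, (2 * (X 0) ^ 3 * X 2 - (X 1) ^ 2 : MvPolynomial (Fin 5) k) ^ n * g ∈ A) := by
  set R := MvPolynomial (Fin 5) k with hR
  -- values of Δ on the variables
  have hx : Δ (X 0 : R) = 0 := by rw [hΔ, mkDerivation_X]; rfl
  have hs : Δ (X 1 : R) = (X 0) ^ 3 := by rw [hΔ, mkDerivation_X]; rfl
  have ht : Δ (X 2 : R) = X 1 := by rw [hΔ, mkDerivation_X]; rfl
  have hu : Δ (X 3 : R) = X 2 := by rw [hΔ, mkDerivation_X]; rfl
  have hv : Δ (X 4 : R) = (X 0) ^ 2 := by rw [hΔ, mkDerivation_X]; rfl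
  -- Δ kills numerals
  have hnum : ∀ c : k, Δ (algebraMap k R c) = 0 := fun c => Δ.map_algebraMap c
  have h2 : Δ (2 : R) = 0 := by rw [← map_ofNat (algebraMap k R) 2]; exact hnum _
  have h3 : Δ (3 : R) = 0 := by rw [← map_ofNat (algebraMap k R) 3]; exact hnum _
  have h6 : Δ (6 : R) = 0 := by rw [← map_ofNat (algebraMap k R) 6]; exact hnum _
  have h8 : Δ (8 : R) = 0 := by rw [← map_ofNat (algebraMap k R) 8]; exact hnum _
  have h9 : Δ (9 : R) = 0 := by rw [← map_ofNat (algebraMap k R) 9]; exact hnum _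
  have h18 : Δ (18 : R) = 0 := by rw [← map_ofNat (algebraMap k R) 18]; exact hnum _
  -- Δ kills the six generators
  have hg1 : Δ (X 0 : R) = 0 := hx
  have hg2 : Δ (2 * (X 0) ^ 3 * X 2 - (X 1) ^ 2 : R) = 0 := by
    simp only [Derivation.leibniz, Derivation.leibniz_pow, map_sub, map_add,
      hx, hs, ht, hu, hv, h2, h3, h6, h8, h9, h18, smul_eq_mul, nsmul_eq_mul]
    ring
  have hg3 : Δ (3 * (X 0) ^ 6 * X 3 - 3 * (X 0) ^ 3 * X 2 * X 1 + (X 1) ^ 3 : R) = 0 := by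
    simp only [Derivation.leibniz, Derivation.leibniz_pow, map_sub, map_add,
      hx, hs, ht, hu, hv, h2, h3, h6, h8, h9, h18, smul_eq_mul, nsmul_eq_mul]
    ring
  have hg4 : Δ (X 0 * X 4 - X 1 : R) = 0 := by
    simp only [Derivation.leibniz, Derivation.leibniz_pow, map_sub, map_add,
      hx, hs, ht, hu, hv, h2, h3, h6, h8, h9, h18, smul_eq_mul, nsmul_eq_mul]
    ring
  have hg5 : Δ ((X 0) ^ 2 * X 2 * X 1 - (X 1) ^ 2 * X 4 + 2 * (X 0) ^ 3 * X 2 * X 4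
      - 3 * (X 0) ^ 5 * X 3 : R) = 0 := by
    simp only [Derivation.leibniz, Derivation.leibniz_pow, map_sub, map_add,
      hx, hs, ht, hu, hv, h2, h3, h6, h8, h9, h18, smul_eq_mul, nsmul_eq_mul]
    ring
  have hg6 : Δ (-18 * (X 0) ^ 3 * X 2 * X 1 * X 3 + 9 * (X 0) ^ 6 * (X 3) ^ 2
      + 8 * (X 0) ^ 3 * (X 2) ^ 3 + 6 * (X 1) ^ 3 * X 3 - 3 * (X 2) ^ 2 * (X 1) ^ 2 : R) = 0 := by
    simp only [Derivation.leibniz, Derivation.leibniz_pow, map_sub, map_add, map_neg,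
      hx, hs, ht, hu, hv, h2, h3, h6, h8, h9, h18, smul_eq_mul, nsmul_eq_mul]
    ring
  -- membership of the generators
  have mx : (X 0 : R) ∈ A := by
    rw [hA]; exact Algebra.subset_adjoin (by simp only [Set.mem_insert_iff]; tauto)
  have m2 : (2 * (X 0) ^ 3 * X 2 - (X 1) ^ 2 : R) ∈ A := by
    rw [hA]
    exact Algebra.subset_adjoin (by simp only [Set.mem_insert_iff, Set.mem_singleton_iff]; tauto)
  have m3 : (3 * (X 0) ^ 6 * X 3 - 3 * (X 0) ^ 3 * X 2 * X 1 + (X 1) ^ 3 : R) ∈ A := by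
    rw [hA]
    exact Algebra.subset_adjoin (by simp only [Set.mem_insert_iff, Set.mem_singleton_iff]; tauto)
  have m4 : (X 0 * X 4 - X 1 : R) ∈ A := by
    rw [hA]
    exact Algebra.subset_adjoin (by simp only [Set.mem_insert_iff, Set.mem_singleton_iff]; tauto)
  have m5 : ((X 0) ^ 2 * X 2 * X 1 - (X 1) ^ 2 * X 4 + 2 * (X 0) ^ 3 * X 2 * X 4
      - 3 * (X 0) ^ 5 * X 3 : R) ∈ A := by
    rw [hA]
    exact Algebra.subset_adjoin (by simp only [Set.mem_insert_iff, Set.mem_singleton_iff]; tauto)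
  have m6 : (-18 * (X 0) ^ 3 * X 2 * X 1 * X 3 + 9 * (X 0) ^ 6 * (X 3) ^ 2
      + 8 * (X 0) ^ 3 * (X 2) ^ 3 + 6 * (X 1) ^ 3 * X 3 - 3 * (X 2) ^ 2 * (X 1) ^ 2 : R) ∈ A := by
    rw [hA]
    exact Algebra.subset_adjoin (by simp only [Set.mem_insert_iff, Set.mem_singleton_iff]; tauto)
  -- A is contained in the kernel of Δ
  have hker' : ∀ r : R, r ∈ A → Δ r = 0 := by
    intro r hr
    rw [hA] at hr
    induction hr using Algebra.adjoin_induction with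
    | mem r hr =>
      simp only [Set.mem_insert_iff, Set.mem_singleton_iff] at hr
      rcases hr with rfl | rfl | rfl | rfl | rfl | rfl
      · exact hg1
      · exact hg2
      · exact hg3
      · exact hg4
      · exact hg5
      · exact hg6
    | algebraMap r => exact hnum r
    | add p q hp hq ihp ihq => rw [map_add, ihp, ihq, add_zero]
    | mul p q hp hq ihp ihq => rw [Δ.leibniz, ihp, ihq, smul_zero, smul_zero, add_zero]
  have hker : ∀ b : A, Δ (b : R) = 0 := fun b => hker' b b.2
  -- basic instances and facts
  have hAinj : Function.Injective (algebraMap A R) := fun a b h => Subtype.ext h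
  haveI : NoZeroSMulDivisors ℕ A := by
    constructor
    intro n b h
    have hcast : (n : R) * (b : R) = 0 := by
      have := congrArg (Subtype.val) h
      push_cast at this
      simpa [nsmul_eq_mul] using this
    rcases mul_eq_zero.mp hcast with h' | h'
    · exact Or.inl (by exact_mod_cast h')
    · exact Or.inr (by exact_mod_cast h')
  have hAR : ∀ z : A, algebraMap A R z = (z : R) := fun _ => rfl
  -- the generators as elements of A
  set gx : A := ⟨X 0, mx⟩ with hgxdef
  set g2 : A := ⟨_, m2⟩ with hg2def
  set g3 : A := ⟨_, m3⟩ with hg3def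
  set g4 : A := ⟨_, m4⟩ with hg4def
  set g5 : A := ⟨_, m5⟩ with hg5def
  set g6 : A := ⟨_, m6⟩ with hg6def
  have cgx : ((gx : A) : R) = X 0 := rfl
  have cg2 : ((g2 : A) : R) = 2 * (X 0) ^ 3 * X 2 - (X 1) ^ 2 := rfl
  have cg3 : ((g3 : A) : R) = 3 * (X 0) ^ 6 * X 3 - 3 * (X 0) ^ 3 * X 2 * X 1 + (X 1) ^ 3 := rfl
  have cg4 : ((g4 : A) : R) = X 0 * X 4 - X 1 := rfl
  have cg5 : ((g5 : A) : R) = (X 0) ^ 2 * X 2 * X 1 - (X 1) ^ 2 * X 4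
      + 2 * (X 0) ^ 3 * X 2 * X 4 - 3 * (X 0) ^ 5 * X 3 := rfl
  have cg6 : ((g6 : A) : R) = -18 * (X 0) ^ 3 * X 2 * X 1 * X 3 + 9 * (X 0) ^ 6 * (X 3) ^ 2
      + 8 * (X 0) ^ 3 * (X 2) ^ 3 + 6 * (X 1) ^ 3 * X 3 - 3 * (X 2) ^ 2 * (X 1) ^ 2 := rfl
  -- the generic localization argument
  have main : ∀ h w : R, Δ h = 0 → Δ w ≠ 0 → h ∈ A →
      (∀ i : Fin 5, ∃ (N : ℕ) (c : k) (q : Polynomial A), c ≠ 0 ∧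
        algebraMap k R c * (h ^ N * X i) = Polynomial.aeval w q) →
      ∀ g : R, Δ g = 0 → ∃ n : ℕ, h ^ n * g ∈ A := by
    intro h w hh hw hmem hvars
    set bh : A := ⟨h, hmem⟩ with hbhdef
    have hbh : algebraMap A R bh = h := rfl
    have hkAR : ∀ c : k, algebraMap A R (algebraMap k A c) = algebraMap k R c := fun _ => rfl
    have hall : ∀ g : R, ∃ (N : ℕ) (c : k) (q : Polynomial A), c ≠ 0 ∧
        algebraMap k R c * (h ^ N * g) = Polynomial.aeval w q := by
      intro g
      induction g using MvPolynomial.induction_on with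
      | C a =>
        refine ⟨0, 1, Polynomial.C (algebraMap k A a), by norm_num, ?_⟩
        rw [Polynomial.aeval_C, map_one, one_mul, pow_zero, one_mul]
        rw [← IsScalarTower.algebraMap_apply k A R, MvPolynomial.algebraMap_eq]
      | add p q hp hq =>
        obtain ⟨N1, c1, q1, hc1, e1⟩ := hp
        obtain ⟨N2, c2, q2, hc2, e2⟩ := hq
        refine ⟨N1 + N2, c1 * c2,
          Polynomial.C (algebraMap k A c2 * bh ^ N2) * q1
          + Polynomial.C (algebraMap k A c1 * bh ^ N1) * q2,
          mul_ne_zero hc1 hc2, ?_⟩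
        have expand : Polynomial.aeval w (Polynomial.C (algebraMap k A c2 * bh ^ N2) * q1
            + Polynomial.C (algebraMap k A c1 * bh ^ N1) * q2)
            = (algebraMap k R c2 * h ^ N2) * Polynomial.aeval w q1
              + (algebraMap k R c1 * h ^ N1) * Polynomial.aeval w q2 := by
          simp only [map_add, map_mul, map_pow, Polynomial.aeval_C, hbh, hkAR]
        rw [expand, ← e1, ← e2, map_mul (algebraMap k R) c1 c2]
        ring
      | mul_X p i hp =>
        obtain ⟨N1, c1, q1, hc1, e1⟩ := hp
        obtain ⟨N2, c2, q2, hc2, e2⟩ := hvars i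
        refine ⟨N1 + N2, c1 * c2, q1 * q2, mul_ne_zero hc1 hc2, ?_⟩
        have expand : Polynomial.aeval w (q1 * q2)
            = Polynomial.aeval w q1 * Polynomial.aeval w q2 := map_mul _ _ _
        rw [expand, ← e1, ← e2, map_mul (algebraMap k R) c1 c2]
        ring
    intro g hg
    obtain ⟨N, c, q, hc, e⟩ := hall g
    have h0 : Δ (Polynomial.aeval w q) = 0 := by
      rw [← e, Δ.leibniz, Δ.leibniz, Δ.leibniz_pow, hh, hg, hnum c]
      simp
    have hw' : (Δ.restrictBase A hker) w ≠ 0 := by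
      rw [Derivation.restrictBase_apply]; exact hw
    have h0' : (Δ.restrictBase A hker) (Polynomial.aeval w q) = 0 := by
      rw [Derivation.restrictBase_apply]; exact h0
    have hkey := aeval_eq_C_of_deriv_eq_zero (B := A) hAinj (Δ.restrictBase A hker) w hw' q h0'
    refine ⟨N, ?_⟩
    have : h ^ N * g = algebraMap k R c⁻¹ * algebraMap A R (q.coeff 0) := by
      rw [← hkey, ← e, ← mul_assoc, ← map_mul, inv_mul_cancel₀ hc, map_one, one_mul]
    rw [this, hAR]
    exact A.mul_mem (A.algebraMap_mem _) (q.coeff 0).2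
  intro g hg
  constructor
  -- Part 1 : localization at x
  · refine main (X 0) (X 4) hx ?_ mx ?_ g hg
    · rw [hv]
      exact pow_ne_zero 2 (MvPolynomial.X_ne_zero 0)
    · have hfin : ∀ i : Fin 5, i = 0 ∨ i = 1 ∨ i = 2 ∨ i = 3 ∨ i = 4 := by decide
      intro i
      rcases hfin i with rfl | rfl | rfl | rfl | rfl
      · -- X 0
        refine ⟨0, 1, Polynomial.C gx, by norm_num, ?_⟩
        rw [Polynomial.aeval_C, hAR, map_one, cgx]
        ring
      · -- X 1 = s :  s = -a4 + x * v
        refine ⟨0, 1, Polynomial.C (-g4) + Polynomial.C gx * Polynomial.X, by norm_num, ?_⟩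
        simp only [map_add, map_mul, map_neg, Polynomial.aeval_C, Polynomial.aeval_X, hAR,
          map_one]
        push_cast [cgx, cg4]
        ring
      · -- X 2 = t :  2 x^3 t = (a2 + a4^2) - 2 a4 x v + x^2 v^2
        refine ⟨3, 2, Polynomial.C (g2 + g4 ^ 2) + Polynomial.C (-(2 * g4 * gx)) * Polynomial.X
          + Polynomial.C (gx ^ 2) * Polynomial.X ^ 2, by norm_num, ?_⟩
        simp only [map_add, map_mul, map_pow, map_neg, Polynomial.aeval_C, Polynomial.aeval_X,
          hAR, map_ofNat]
        push_cast [cgx, cg2, cg4]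
        ring
      · -- X 3 = u :  6 x^6 u = (2a3 - 3a2a4 - a4^3) + 3(a2+a4^2) x v - 3 a4 x^2 v^2 + x^3 v^3
        refine ⟨6, 6, Polynomial.C (2 * g3 - 3 * g2 * g4 - g4 ^ 3)
          + Polynomial.C (3 * (g2 + g4 ^ 2) * gx) * Polynomial.X
          + Polynomial.C (-(3 * g4 * gx ^ 2)) * Polynomial.X ^ 2
          + Polynomial.C (gx ^ 3) * Polynomial.X ^ 3, by norm_num, ?_⟩
        simp only [map_add, map_mul, map_pow, map_neg, map_sub, Polynomial.aeval_C,
          Polynomial.aeval_X, hAR, map_ofNat]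
        push_cast [cgx, cg2, cg3, cg4]
        ring
      · -- X 4 = v
        refine ⟨0, 1, Polynomial.X, by norm_num, ?_⟩
        rw [Polynomial.aeval_X, map_one]
        ring
  -- Part 2 : localization at f = 2x^3 t - s^2,  slice w = 3 x^3 u - s t
  · have hΔw : Δ (3 * (X 0) ^ 3 * X 3 - X 1 * X 2 : R) = 2 * (X 0) ^ 3 * X 2 - (X 1) ^ 2 := by
      simp only [Derivation.leibniz, Derivation.leibniz_pow, map_sub, map_add,
        hx, hs, ht, hu, hv, h2, h3, h6, h8, h9, h18, smul_eq_mul, nsmul_eq_mul]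
      ring
    have hfne : (2 * (X 0) ^ 3 * X 2 - (X 1) ^ 2 : R) ≠ 0 := by
      intro hf0
      have := congrArg (eval (fun j : Fin 5 => if j = 0 then (1 : k) else if j = 2 then 1 else 0)) hf0
      simp at this
    refine main (2 * (X 0) ^ 3 * X 2 - (X 1) ^ 2) (3 * (X 0) ^ 3 * X 3 - X 1 * X 2) hg2 ?_ m2 ?_ g hg
    · rw [hΔw]; exact hfne
    · have hfin : ∀ i : Fin 5, i = 0 ∨ i = 1 ∨ i = 2 ∨ i = 3 ∨ i = 4 := by decide
      intro i
      rcases hfin i with rfl | rfl | rfl | rfl | rfl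
      · -- X 0
        refine ⟨0, 1, Polynomial.C gx, by norm_num, ?_⟩
        rw [Polynomial.aeval_C, hAR, map_one, cgx]
        ring
      · -- X 1 = s :  a2 * s = -a3 + x^3 w
        refine ⟨1, 1, Polynomial.C (-g3) + Polynomial.C (gx ^ 3) * Polynomial.X, by norm_num, ?_⟩
        simp only [map_add, map_mul, map_pow, map_neg, Polynomial.aeval_C, Polynomial.aeval_X,
          hAR, map_one]
        push_cast [cgx, cg3]
        ring
      · -- X 2 = t :  2 a2^2 t = x^3 a6 - 2 a3 w + x^3 w^2
        refine ⟨2, 2, Polynomial.C (gx ^ 3 * g6) + Polynomial.C (-(2 * g3)) * Polynomial.X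
          + Polynomial.C (gx ^ 3) * Polynomial.X ^ 2, by norm_num, ?_⟩
        simp only [map_add, map_mul, map_pow, map_neg, Polynomial.aeval_C, Polynomial.aeval_X,
          hAR, map_ofNat]
        push_cast [cgx, cg3, cg6]
        ring
      · -- X 3 = u
        refine ⟨9, 6, 
        (Polynomial.C ((-1) * gx ^ 12 * g3 * g6 ^ 3 + gx ^ 6 * g2 ^ 3 * g3 * g6 ^ 2 + gx ^ 6 * g3 ^ 3 * g6 ^ 2 + (-1) * g2 ^ 6 * g3 * g6) +
        Polynomial.C (gx ^ 15 * g6 ^ 3 + gx ^ 9 * g2 ^ 3 * g6 ^ 2 + 3 * gx ^ 9 * g3 ^ 2 * g6 ^ 2 + gx ^ 3 * g2 ^ 6 * g6 + (-6) * gx ^ 3 * g2 ^ 3 * g3 ^ 2 * g6 + (-4) * gx ^ 3 * g3 ^ 4 * g6) * Polynomial.X +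
        Polynomial.C ((-6) * gx ^ 12 * g3 * g6 ^ 2 + 2 * gx ^ 6 * g2 ^ 3 * g3 * g6 + 2 * gx ^ 6 * g3 ^ 3 * g6 + g2 ^ 6 * g3 + 8 * g2 ^ 3 * g3 ^ 3 + 4 * g3 ^ 5) * Polynomial.X ^ 2 +
        Polynomial.C (2 * gx ^ 15 * g6 ^ 2 + 6 * gx ^ 9 * g3 ^ 2 * g6 + (-1) * gx ^ 3 * g2 ^ 6 + (-10) * gx ^ 3 * g2 ^ 3 * g3 ^ 2 + (-8) * gx ^ 3 * g3 ^ 4) * Polynomial.X ^ 3 +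
        Polynomial.C ((-5) * gx ^ 12 * g3 * g6 + 5 * gx ^ 6 * g2 ^ 3 * g3 + 5 * gx ^ 6 * g3 ^ 3) * Polynomial.X ^ 4 +
        Polynomial.C (gx ^ 15 * g6 + (-1) * gx ^ 9 * g2 ^ 3 + (-1) * gx ^ 9 * g3 ^ 2) * Polynomial.X ^ 5), by norm_num, ?_⟩
        simp only [map_add, map_mul, map_pow, map_neg, Polynomial.aeval_C, Polynomial.aeval_X,
          hAR, map_ofNat]
        push_cast [cgx, cg2, cg3, cg5, cg6]
        ring
      · -- X 4 = v
        refine ⟨10, 2, 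
        (Polynomial.C ((-1) * gx ^ 17 * g3 * g6 ^ 3 + gx ^ 11 * g2 ^ 3 * g3 * g6 ^ 2 + gx ^ 11 * g3 ^ 3 * g6 ^ 2 + 2 * g2 ^ 9 * g5) +
        Polynomial.C (gx ^ 20 * g6 ^ 3 + gx ^ 14 * g2 ^ 3 * g6 ^ 2 + 3 * gx ^ 14 * g3 ^ 2 * g6 ^ 2 + (-6) * gx ^ 8 * g2 ^ 3 * g3 ^ 2 * g6 + (-4) * gx ^ 8 * g3 ^ 4 * g6 + (-2) * gx ^ 2 * g2 ^ 6 * g3 ^ 2) * Polynomial.X +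
        Polynomial.C ((-6) * gx ^ 17 * g3 * g6 ^ 2 + 2 * gx ^ 11 * g2 ^ 3 * g3 * g6 + 2 * gx ^ 11 * g3 ^ 3 * g6 + 4 * gx ^ 5 * g2 ^ 6 * g3 + 8 * gx ^ 5 * g2 ^ 3 * g3 ^ 3 + 4 * gx ^ 5 * g3 ^ 5) * Polynomial.X ^ 2 +
        Polynomial.C (2 * gx ^ 20 * g6 ^ 2 + 6 * gx ^ 14 * g3 ^ 2 * g6 + (-2) * gx ^ 8 * g2 ^ 6 + (-10) * gx ^ 8 * g2 ^ 3 * g3 ^ 2 + (-8) * gx ^ 8 * g3 ^ 4) * Polynomial.X ^ 3 +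
        Polynomial.C ((-5) * gx ^ 17 * g3 * g6 + 5 * gx ^ 11 * g2 ^ 3 * g3 + 5 * gx ^ 11 * g3 ^ 3) * Polynomial.X ^ 4 +
        Polynomial.C (gx ^ 20 * g6 + (-1) * gx ^ 14 * g2 ^ 3 + (-1) * gx ^ 14 * g3 ^ 2) * Polynomial.X ^ 5), by norm_num, ?_⟩
        simp only [map_add, map_mul, map_pow, map_neg, Polynomial.aeval_C, Polynomial.aeval_X,
          hAR, map_ofNat]
        push_cast [cgx, cg2, cg3, cg5, cg6]
        ring
end

section
/- Let k be an algebraically closed field of characteristic zero, let R = k[x, s, t, u, v] be the polynomial ring in five variables, and let Δ be the unique k-derivation of R with Δ(x) = 0, Δ(s) = x³, Δ(t) = s, Δ(u) = t, Δ(v) = x². Let A be the k-subalgebra of R generated by x, 2x³t − s², 3x⁶u − 3x³ts + s³, xv − s, x²ts − s²v + 2x³tv − 3x⁵u, and −18x³tsu + 9x⁶u² + 8x³t³ + 6s³u − 3t²s². Then, inside the fraction field Frac(R), the image of the kernel of Δ equals the set of all q ∈ Frac(R) for which there exists n ≥ 1 such that xⁿ·q and (2x³t − s²)ⁿ·q both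 lie in the image of A. (That is, ker Δ is the ring of regular functions on the quasi-affine variety Spec(A) \ V(x, 2x³t − s²).) -/
open MvPolynomial

namespace DaigleFreudenburgAux

set_option linter.unusedSectionVars false
set_option maxHeartbeats 1000000

variable {k : Type*} [Field k] [CharZero k]

local notation "R5" => MvPolynomial (Fin 5) k

noncomputable def DD (k : Type*) [Field k] :
    Derivation k (MvPolynomial (Fin 5) k) (MvPolynomial (Fin 5) k) :=
  mkDerivation k ![0, (X 0) ^ 3, X 1, X 2, (X 0) ^ 2]

@[simp] lemma DD_X0 : DD k (X 0) = 0 := by simp [DD, mkDerivation_X]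
@[simp] lemma DD_X1 : DD k (X 1) = (X 0) ^ 3 := by simp [DD, mkDerivation_X]
@[simp] lemma DD_X2 : DD k (X 2) = X 1 := by simp [DD, mkDerivation_X]
@[simp] lemma DD_X3 : DD k (X 3) = X 2 := by simp [DD, mkDerivation_X]
@[simp] lemma DD_X4 : DD k (X 4) = (X 0) ^ 2 := by simp [DD, mkDerivation_X]

lemma DD_ofNat (n : ℕ) [n.AtLeastTwo] :
    DD k (OfNat.ofNat n : MvPolynomial (Fin 5) k) = 0 := by
  have h : (OfNat.ofNat n : MvPolynomial (Fin 5) k)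
      = algebraMap k _ (OfNat.ofNat n : k) := by
    rw [algebraMap_eq, map_ofNat]
  rw [h]; exact Derivation.map_algebraMap _ _

@[simp] lemma DD_two : DD k (2 : MvPolynomial (Fin 5) k) = 0 := DD_ofNat 2
@[simp] lemma DD_three : DD k (3 : MvPolynomial (Fin 5) k) = 0 := DD_ofNat 3
@[simp] lemma DD_six : DD k (6 : MvPolynomial (Fin 5) k) = 0 := DD_ofNat 6
@[simp] lemma DD_eight : DD k (8 : MvPolynomial (Fin 5) k) = 0 := DD_ofNat 8
@[simp] lemma DD_nine : DD k (9 : MvPolynomial (Fin 5) k) = 0 := DD_ofNat 9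
@[simp] lemma DD_eighteen : DD k (18 : MvPolynomial (Fin 5) k) = 0 := DD_ofNat 18

noncomputable def fP (k : Type*) [Field k] : MvPolynomial (Fin 5) k :=
  2 * (X 0) ^ 3 * X 2 - (X 1) ^ 2
noncomputable def g3P (k : Type*) [Field k] : MvPolynomial (Fin 5) k :=
  3 * (X 0) ^ 6 * X 3 - 3 * (X 0) ^ 3 * X 2 * X 1 + (X 1) ^ 3
noncomputable def aP (k : Type*) [Field k] : MvPolynomial (Fin 5) k :=
  X 0 * X 4 - X 1
noncomputable def g5P (k : Type*) [Field k] : MvPolynomial (Fin 5) k :=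
  (X 0) ^ 2 * X 2 * X 1 - (X 1) ^ 2 * X 4 + 2 * (X 0) ^ 3 * X 2 * X 4 - 3 * (X 0) ^ 5 * X 3
noncomputable def g6P (k : Type*) [Field k] : MvPolynomial (Fin 5) k :=
  -18 * (X 0) ^ 3 * X 2 * X 1 * X 3 + 9 * (X 0) ^ 6 * (X 3) ^ 2
    + 8 * (X 0) ^ 3 * (X 2) ^ 3 + 6 * (X 1) ^ 3 * X 3 - 3 * (X 2) ^ 2 * (X 1) ^ 2

noncomputable def Gset (k : Type*) [Field k] : Set (MvPolynomial (Fin 5) k) :=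
  {X 0, fP k, g3P k, aP k, g5P k, g6P k}

noncomputable def bP (k : Type*) [Field k] : MvPolynomial (Fin 5) k :=
  2 * (X 0) ^ 2 * X 2 - 2 * X 4 * X 1 + X 0 * (X 4) ^ 2
noncomputable def cP (k : Type*) [Field k] : MvPolynomial (Fin 5) k :=
  6 * (X 0) ^ 4 * X 3 - 6 * (X 0) ^ 2 * X 4 * X 2 + 3 * (X 4) ^ 2 * X 1 - X 0 * (X 4) ^ 3
noncomputable def eP (k : Type*) [Field k] : MvPolynomial (Fin 5) k :=
  3 * (X 0) ^ 3 * X 3 - X 1 * X 2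

lemma DD_fP : DD k (fP k) = 0 := by
  simp [fP, Derivation.leibniz, Derivation.leibniz_pow, smul_eq_mul]; ring
lemma DD_g3P : DD k (g3P k) = 0 := by
  simp [g3P, Derivation.leibniz, Derivation.leibniz_pow, smul_eq_mul]; ring
lemma DD_aP : DD k (aP k) = 0 := by
  simp [aP, Derivation.leibniz, Derivation.leibniz_pow, smul_eq_mul]; ring
lemma DD_g5P : DD k (g5P k) = 0 := by
  simp [g5P, Derivation.leibniz, Derivation.leibniz_pow, smul_eq_mul]; ring
lemma DD_g6P : DD k (g6P k) = 0 := by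
  simp [g6P, Derivation.leibniz, Derivation.leibniz_pow, smul_eq_mul]; ring
lemma DD_bP : DD k (bP k) = 0 := by
  simp [bP, Derivation.leibniz, Derivation.leibniz_pow, smul_eq_mul]; ring
lemma DD_cP : DD k (cP k) = 0 := by
  simp [cP, Derivation.leibniz, Derivation.leibniz_pow, smul_eq_mul]; ring
lemma DD_eP : DD k (eP k) = fP k := by
  simp [eP, fP, Derivation.leibniz, Derivation.leibniz_pow, smul_eq_mul]; ring

/-- the kernel of a derivation as a subalgebra -/
def kerS (D : Derivation k (MvPolynomial (Fin 5) k) (MvPolynomial (Fin 5) k)) :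
    Subalgebra k (MvPolynomial (Fin 5) k) where
  carrier := {g | D g = 0}
  mul_mem' := by
    intro a b ha hb
    simp only [Set.mem_setOf_eq] at *
    rw [Derivation.leibniz, ha, hb]; simp
  add_mem' := by
    intro a b ha hb
    simp only [Set.mem_setOf_eq] at *
    rw [map_add, ha, hb, add_zero]
  algebraMap_mem' := fun r => Derivation.map_algebraMap _ r

@[simp] lemma mem_kerS {D : Derivation k (MvPolynomial (Fin 5) k) (MvPolynomial (Fin 5) k)}
    {g : MvPolynomial (Fin 5) k} : g ∈ kerS D ↔ D g = 0 := Iff.rfl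

lemma coeffs_eq_zero (w h : R5) (hDw : DD k w = h) (hh : h ≠ 0) :
    ∀ m : ℕ, ∀ c : ℕ → R5, (∀ j, DD k (c j) = 0) →
      (∑ j ∈ Finset.range m, c j * w ^ j) = 0 → ∀ j < m, c j = 0 := by
  intro m
  induction m with
  | zero => intro c _ _ j hj; omega
  | succ m ih =>
    intro c hc hsum
    have h1 : DD k (∑ j ∈ Finset.range (m + 1), c j * w ^ j) = 0 := by rw [hsum]; simp
    rw [map_sum] at h1
    have h2 : ∀ j ∈ Finset.range (m + 1),
        DD k (c j * w ^ j) = h * ((j : R5) * (c j * w ^ (j - 1))) := by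
      intro j _
      rw [Derivation.leibniz, Derivation.leibniz_pow, hDw, hc j]
      simp only [smul_eq_mul, nsmul_eq_mul, smul_zero, mul_zero, add_zero]
      ring
    rw [Finset.sum_congr rfl h2, ← Finset.mul_sum] at h1
    have h3 : (∑ j ∈ Finset.range (m + 1), (j : R5) * (c j * w ^ (j - 1))) = 0 :=
      (mul_eq_zero.mp h1).resolve_left hh
    rw [Finset.sum_range_succ'] at h3
    simp only [Nat.cast_zero, zero_mul, add_zero, Nat.cast_add, Nat.cast_one,
      Nat.add_sub_cancel] at h3
    have hz1 : ∀ j < m, ((j : R5) + 1) * c (j + 1) = 0 := by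
      apply ih (fun j => ((j : R5) + 1) * c (j + 1))
      · intro j
        rw [Derivation.leibniz]
        have : DD k ((j : R5) + 1) = 0 := by
          rw [show ((j : R5) + 1) = ((j + 1 : ℕ) : R5) by push_cast; ring]
          rw [show (((j + 1 : ℕ)) : R5) = algebraMap k _ ((j + 1 : ℕ) : k) by push_cast; simp]
          exact Derivation.map_algebraMap _ _
        rw [this, hc]; simp
      · rw [← h3]
        exact Finset.sum_congr rfl fun j _ => by ring
    have hz : ∀ j, 1 ≤ j → j < m + 1 → c j = 0 := by
      intro j hj1 hj2
      obtain ⟨i, rfl⟩ : ∃ i, j = i + 1 := ⟨j - 1, by omega⟩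
      have := hz1 i (by omega)
      rcases mul_eq_zero.mp this with hcon | h
      · exfalso
        have : ((i : R5) + 1) ≠ 0 := by
          rw [show ((i : R5) + 1) = ((i + 1 : ℕ) : R5) by push_cast; ring]
          exact Nat.cast_ne_zero.mpr (Nat.succ_ne_zero i)
        exact this hcon
      · exact h
    intro j hj
    rcases Nat.eq_zero_or_pos j with rfl | hj1
    · have : (∑ j ∈ Finset.range (m + 1), c j * w ^ j) = c 0 := by
        rw [Finset.sum_eq_single_of_mem 0 (by simp)]
        · simp
        · intro b hbmem hb
          rw [hz b (by omega) (by simpa using Finset.mem_range.mp hbmem), zero_mul]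
      rw [this] at hsum; exact hsum
    · exact hz j hj1 hj

lemma adjoin_insert_ker (S : Set R5) (hS : ∀ y ∈ S, DD k y = 0)
    (w h : R5) (hDw : DD k w = h) (hh : h ≠ 0) (z : R5)
    (hz : z ∈ Algebra.adjoin k (insert w S)) (hzk : DD k z = 0) :
    z ∈ Algebra.adjoin k S := by
  set B := Algebra.adjoin k S with hB
  let ψ : Polynomial B →ₐ[B] MvPolynomial (Fin 5) k := Polynomial.aeval w
  have hrange : Algebra.adjoin k (insert w S) ≤ (ψ.range.restrictScalars k) := by
    apply Algebra.adjoin_le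
    rintro y (rfl | hy)
    · exact ⟨Polynomial.X, by simp [ψ]⟩
    · refine ⟨Polynomial.C ⟨y, Algebra.subset_adjoin hy⟩, ?_⟩
      show (Polynomial.aeval w : Polynomial ↥B →ₐ[↥B] R5) (Polynomial.C ⟨y, _⟩) = y
      rw [Polynomial.aeval_C]
      rfl
  obtain ⟨q, hq⟩ := hrange hz
  have hrep : z = ∑ j ∈ Finset.range (q.natDegree + 1), ((q.coeff j : R5) * w ^ j) := by
    rw [← hq]
    show (Polynomial.aeval w) q = _
    rw [Polynomial.aeval_eq_sum_range]
    exact Finset.sum_congr rfl fun j _ => by rw [Algebra.smul_def]; rfl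
  have hBker : ∀ b : B, DD k (b : R5) = 0 := by
    intro b
    have hle : B ≤ kerS (DD k) := Algebra.adjoin_le fun y hy => mem_kerS.mpr (hS y hy)
    exact mem_kerS.mp (hle b.2)
  have key := coeffs_eq_zero w h hDw hh (q.natDegree + 1)
      (fun j => (q.coeff j : R5) - if j = 0 then z else 0)
      (by
        intro j
        rw [map_sub, hBker]
        by_cases hj : j = 0 <;> simp [hj, hzk])
      (by
        have : (∑ j ∈ Finset.range (q.natDegree + 1),
            ((q.coeff j : R5) - if j = 0 then z else 0) * w ^ j)
            = (∑ j ∈ Finset.range (q.natDegree + 1), (q.coeff j : R5) * w ^ j)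
              - (∑ j ∈ Finset.range (q.natDegree + 1), (if j = 0 then z else 0) * w ^ j) := by
          rw [← Finset.sum_sub_distrib]
          exact Finset.sum_congr rfl fun j _ => by ring
        rw [this, ← hrep]
        have h0 : (∑ j ∈ Finset.range (q.natDegree + 1), (if j = 0 then z else 0) * w ^ j)
            = z := by
          rw [Finset.sum_eq_single_of_mem 0 (by simp)]
          · simp
          · intro b _ hb; simp [hb]
        rw [h0, sub_self])
  have h0 := key 0 (by omega)
  simp only [if_pos, sub_eq_zero] at h0
  exact h0 ▸ (q.coeff 0).2

lemma pow_mul_adjoin (w : R5) (T : Subalgebra k R5) (hw : w ∈ T) (S : Set R5)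
    (hgen : ∀ y ∈ S, ∃ N, w ^ N * y ∈ T) :
    ∀ z ∈ Algebra.adjoin k S, ∃ N, w ^ N * z ∈ T := by
  intro z hz
  induction hz using Algebra.adjoin_induction with
  | mem y hy => exact hgen y hy
  | algebraMap r => exact ⟨0, by simpa using T.algebraMap_mem r⟩
  | add a b ha hb iha ihb =>
    obtain ⟨N, hN⟩ := iha
    obtain ⟨M, hM⟩ := ihb
    refine ⟨N + M, ?_⟩
    have : w ^ (N + M) * (a + b) = w ^ M * (w ^ N * a) + w ^ N * (w ^ M * b) := by
      rw [pow_add]; ring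
    rw [this]
    exact T.add_mem (T.mul_mem (T.pow_mem hw M) hN) (T.mul_mem (T.pow_mem hw N) hM)
  | mul a b ha hb iha ihb =>
    obtain ⟨N, hN⟩ := iha
    obtain ⟨M, hM⟩ := ihb
    refine ⟨N + M, ?_⟩
    have : w ^ (N + M) * (a * b) = (w ^ N * a) * (w ^ M * b) := by rw [pow_add]; ring
    rw [this]
    exact T.mul_mem hN hM

lemma pow_mul_top (w : R5) (T : Subalgebra k R5) (hw : w ∈ T)
    (hvar : ∀ i : Fin 5, ∃ N, w ^ N * X i ∈ T) (g : R5) : ∃ N, w ^ N * g ∈ T := by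
  apply pow_mul_adjoin w T hw (Set.range X)
  · rintro y ⟨i, rfl⟩; exact hvar i
  · rw [MvPolynomial.adjoin_range_X]; trivial

lemma primeX0 : Prime (X 0 : R5) := by
  rw [← MulEquiv.prime_iff (MvPolynomial.finSuccEquiv k 4).toMulEquiv]
  show Prime (MvPolynomial.finSuccEquiv k 4 (X 0))
  rw [MvPolynomial.finSuccEquiv_X_zero]
  exact Polynomial.prime_X

lemma fP_ne_zero : fP k ≠ 0 := by
  intro hcon
  have := congrArg (eval (fun i : Fin 5 => if i = 1 then (1 : k) else 0)) hcon
  simp [fP] at this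

lemma X0_not_dvd_fP : ¬ (X 0 : R5) ∣ fP k := by
  rintro ⟨d, hd⟩
  have := congrArg (aeval (fun i : Fin 5 => if i = 0 then 0 else X i) :
    R5 →ₐ[k] R5) hd
  simp [fP] at this

lemma mem_of_smul_mem (c : k) (hc : c ≠ 0) {p : R5} {T : Subalgebra k R5}
    (h : c • p ∈ T) : p ∈ T := by
  have := T.smul_mem h c⁻¹
  rwa [smul_smul, inv_mul_cancel₀ hc, one_smul] at this

/-- the x-chart: every invariant, multiplied by a power of x, lies in A -/
lemma xchart (g : R5) (hg : DD k g = 0) :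
    ∃ N, (X 0 : R5) ^ N * g ∈ Algebra.adjoin k (Gset k) := by
  classical
  set S4 : Set R5 := {X 0, aP k, bP k, cP k} with hS4
  set AD5 := Algebra.adjoin k (insert (X 4) S4) with hAD5
  have hx : (X 0 : R5) ∈ AD5 := Algebra.subset_adjoin (by simp [S4])
  have hv : (X 4 : R5) ∈ AD5 := Algebra.subset_adjoin (by simp)
  have ha : aP k ∈ AD5 := Algebra.subset_adjoin (by simp [S4])
  have hb : bP k ∈ AD5 := Algebra.subset_adjoin (by simp [S4])
  have hc : cP k ∈ AD5 := Algebra.subset_adjoin (by simp [S4])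
  have hs : (X 1 : R5) ∈ AD5 := by
    have h1 : (X 1 : R5) = X 0 * X 4 - aP k := by rw [aP]; ring
    rw [h1]; exact sub_mem (mul_mem hx hv) ha
  have ht : (X 0 : R5) ^ 2 * X 2 ∈ AD5 := by
    apply mem_of_smul_mem (2 : k) two_ne_zero
    have h1 : ((2 : k) • ((X 0 : R5) ^ 2 * X 2))
        = bP k + 2 * X 4 * X 1 - X 0 * (X 4) ^ 2 := by
      rw [smul_eq_C_mul, map_ofNat, bP]; ring
    rw [h1]
    exact sub_mem (add_mem hb (mul_mem (mul_mem (ofNat_mem AD5 2) hv) hs))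
      (mul_mem hx (pow_mem hv 2))
  have hu : (X 0 : R5) ^ 4 * X 3 ∈ AD5 := by
    apply mem_of_smul_mem (6 : k) (by norm_num)
    have h1 : ((6 : k) • ((X 0 : R5) ^ 4 * X 3))
        = cP k + 6 * X 4 * ((X 0) ^ 2 * X 2) - 3 * (X 4) ^ 2 * X 1 + X 0 * (X 4) ^ 3 := by
      rw [smul_eq_C_mul, map_ofNat, cP]; ring
    rw [h1]
    refine add_mem (sub_mem (add_mem hc ?_) ?_) (mul_mem hx (pow_mem hv 3))
    · exact mul_mem (mul_mem (ofNat_mem AD5 6) hv) ht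
    · exact mul_mem (mul_mem (ofNat_mem AD5 3) (pow_mem hv 2)) hs
  have hvar : ∀ i : Fin 5, ∃ N, (X 0 : R5) ^ N * X i ∈ AD5 := by
    intro i
    fin_cases i
    · exact ⟨0, by simpa using hx⟩
    · exact ⟨0, by simpa using hs⟩
    · exact ⟨2, ht⟩
    · exact ⟨4, hu⟩
    · exact ⟨0, by simpa using hv⟩
  obtain ⟨N, hN⟩ := pow_mul_top (X 0) AD5 hx hvar g
  have hDz : DD k ((X 0 : R5) ^ N * g) = 0 := by
    rw [Derivation.leibniz, Derivation.leibniz_pow, DD_X0, hg]; simp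
  have hz4 : (X 0 : R5) ^ N * g ∈ Algebra.adjoin k S4 := by
    apply adjoin_insert_ker S4 ?_ (X 4) ((X 0) ^ 2) DD_X4
      (pow_ne_zero 2 (X_ne_zero 0)) _ hN hDz
    rintro y (rfl | rfl | rfl | rfl)
    · exact DD_X0
    · exact DD_aP
    · exact DD_bP
    · exact DD_cP
  -- now push from adjoin S4 into A with powers of x
  have hgen : ∀ y ∈ S4, ∃ M, (X 0 : R5) ^ M * y ∈ Algebra.adjoin k (Gset k) := by
    rintro y (rfl | rfl | rfl | rfl)
    · exact ⟨0, by simpa using Algebra.subset_adjoin (show (X 0 : R5) ∈ Gset k by simp [Gset])⟩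
    · exact ⟨0, by simpa using Algebra.subset_adjoin (show aP k ∈ Gset k by simp [Gset])⟩
    · refine ⟨1, ?_⟩
      have h1 : (X 0 : R5) ^ 1 * bP k = fP k + (aP k) ^ 2 := by
        rw [bP, fP, aP]; ring
      rw [h1]
      exact add_mem (Algebra.subset_adjoin (by simp [Gset]))
        (pow_mem (Algebra.subset_adjoin (by simp [Gset])) 2)
    · refine ⟨2, ?_⟩
      have h1 : (X 0 : R5) ^ 2 * cP k
          = -(aP k * (fP k + (aP k) ^ 2)) - 2 * (X 0 * g5P k) := by
        rw [cP, aP, fP, g5P]; ring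
      rw [h1]
      have hma : aP k ∈ Algebra.adjoin k (Gset k) :=
        Algebra.subset_adjoin (show aP k ∈ Gset k by simp [Gset])
      have hmf : fP k ∈ Algebra.adjoin k (Gset k) :=
        Algebra.subset_adjoin (show fP k ∈ Gset k by simp [Gset])
      have hmx : (X 0 : R5) ∈ Algebra.adjoin k (Gset k) :=
        Algebra.subset_adjoin (show (X 0 : R5) ∈ Gset k by simp [Gset])
      have hm5 : g5P k ∈ Algebra.adjoin k (Gset k) :=
        Algebra.subset_adjoin (show g5P k ∈ Gset k by simp [Gset])
      refine sub_mem (neg_mem (mul_mem hma (add_mem hmf (pow_mem hma 2)))) ?_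
      exact mul_mem (ofNat_mem _ 2) (mul_mem hmx hm5)
  obtain ⟨M, hM⟩ := pow_mul_adjoin (X 0) (Algebra.adjoin k (Gset k))
    (Algebra.subset_adjoin (by simp [Gset])) S4 hgen _ hz4
  exact ⟨M + N, by rw [pow_add, mul_assoc]; exact hM⟩

/-- the f-chart: every invariant, multiplied by a power of f, lies in A -/
lemma fchart (g : R5) (hg : DD k g = 0) :
    ∃ N, (fP k) ^ N * g ∈ Algebra.adjoin k (Gset k) := by
  classical
  set AD6 := Algebra.adjoin k (insert (eP k) (Gset k)) with hAD6
  have hx : (X 0 : R5) ∈ AD6 := Algebra.subset_adjoin (by simp [Gset])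
  have hf : fP k ∈ AD6 := Algebra.subset_adjoin (by simp [Gset])
  have hg3 : g3P k ∈ AD6 := Algebra.subset_adjoin (by simp [Gset])
  have hg5 : g5P k ∈ AD6 := Algebra.subset_adjoin (by simp [Gset])
  have hg6 : g6P k ∈ AD6 := Algebra.subset_adjoin (by simp [Gset])
  have he : eP k ∈ AD6 := Algebra.subset_adjoin (by simp)
  have hvar : ∀ i : Fin 5, ∃ N, (fP k) ^ N * X i ∈ AD6 := by
    intro i
    fin_cases i
    · exact ⟨0, by simpa using hx⟩
    · refine ⟨1, ?_⟩
      show (fP k) ^ 1 * (X 1 : R5) ∈ AD6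
      have h1 : (fP k) ^ 1 * X 1 = -(g3P k) + eP k * (X 0) ^ 3 := by
        rw [fP, g3P, eP]; ring
      rw [h1]
      exact add_mem (neg_mem hg3) (mul_mem he (pow_mem hx 3))
    · refine ⟨2, ?_⟩
      show (fP k) ^ 2 * (X 2 : R5) ∈ AD6
      apply mem_of_smul_mem (2 : k) two_ne_zero
      have h1 : ((2 : k) • ((fP k) ^ 2 * X 2))
          = (X 0) ^ 3 * g6P k - 2 * (eP k * g3P k) + (eP k) ^ 2 * (X 0) ^ 3 := by
        rw [smul_eq_C_mul, map_ofNat, fP, g3P, g6P, eP]; ring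
      rw [h1]
      refine add_mem (sub_mem (mul_mem (pow_mem hx 3) hg6) ?_)
        (mul_mem (pow_mem he 2) (pow_mem hx 3))
      exact mul_mem (ofNat_mem _ 2) (mul_mem he hg3)
    · refine ⟨3, ?_⟩
      show (fP k) ^ 3 * (X 3 : R5) ∈ AD6
      apply mem_of_smul_mem (6 : k) (by norm_num)
      have h1 : ((6 : k) • ((fP k) ^ 3 * X 3))
          = -(g3P k * g6P k) + 3 * (eP k * ((X 0) ^ 3 * g6P k))
            - 3 * ((eP k) ^ 2 * g3P k) + (eP k) ^ 3 * (X 0) ^ 3 := by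
        rw [smul_eq_C_mul, map_ofNat, fP, g3P, g6P, eP]; ring
      rw [h1]
      refine add_mem (sub_mem (add_mem (neg_mem (mul_mem hg3 hg6)) ?_) ?_)
        (mul_mem (pow_mem he 3) (pow_mem hx 3))
      · exact mul_mem (ofNat_mem _ 3) (mul_mem he (mul_mem (pow_mem hx 3) hg6))
      · exact mul_mem (ofNat_mem _ 3) (mul_mem (pow_mem he 2) hg3)
    · refine ⟨1, ?_⟩
      show (fP k) ^ 1 * (X 4 : R5) ∈ AD6
      have h1 : (fP k) ^ 1 * X 4 = g5P k + eP k * (X 0) ^ 2 := by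
        rw [fP, g5P, eP]; ring
      rw [h1]
      exact add_mem hg5 (mul_mem he (pow_mem hx 2))
  obtain ⟨N, hN⟩ := pow_mul_top (fP k) AD6 hf hvar g
  have hDz : DD k ((fP k) ^ N * g) = 0 := by
    rw [Derivation.leibniz, Derivation.leibniz_pow, DD_fP, hg]; simp
  refine ⟨N, ?_⟩
  apply adjoin_insert_ker (Gset k) ?_ (eP k) (fP k) DD_eP fP_ne_zero _ hN hDz
  rintro y (rfl | rfl | rfl | rfl | rfl | rfl)
  · exact DD_X0
  · exact DD_fP
  · exact DD_g3P
  · exact DD_aP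
  · exact DD_g5P
  · exact DD_g6P

lemma Gset_ker : ∀ y ∈ Gset k, DD k y = 0 := by
  rintro y (rfl | rfl | rfl | rfl | rfl | rfl)
  · exact DD_X0
  · exact DD_fP
  · exact DD_g3P
  · exact DD_aP
  · exact DD_g5P
  · exact DD_g6P

end DaigleFreudenburgAux

open DaigleFreudenburgAux in
/-- In the Daigle–Freudenburg example (variables `x = X 0`, `s = X 1`, `t = X 2`, `u = X 3`,
`v = X 4`), the kernel of `Δ` is the ring of regular functions on the quasi-affine variety
`Spec(A) \ V(x, 2x³t − s²)`: inside the fraction field, the image of `ker Δ` equals the set of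
`q` such that some common power of `x` and `2x³t − s²` multiplies `q` into the image of `A`. -/
theorem daigle_freudenburg_invariants_are_ideal_transform
    {k : Type*} [Field k] [IsAlgClosed k] [CharZero k]
    (Δ : Derivation k (MvPolynomial (Fin 5) k) (MvPolynomial (Fin 5) k))
    (hΔ : Δ = mkDerivation k ![0, (X 0) ^ 3, X 1, X 2, (X 0) ^ 2])
    (A : Subalgebra k (MvPolynomial (Fin 5) k))
    (hA : A = Algebra.adjoin k
      {X 0,
       2 * (X 0) ^ 3 * X 2 - (X 1) ^ 2,
       3 * (X 0) ^ 6 * X 3 - 3 * (X 0) ^ 3 * X 2 * X 1 + (X 1) ^ 3,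
       X 0 * X 4 - X 1,
       (X 0) ^ 2 * X 2 * X 1 - (X 1) ^ 2 * X 4 + 2 * (X 0) ^ 3 * X 2 * X 4
         - 3 * (X 0) ^ 5 * X 3,
       -18 * (X 0) ^ 3 * X 2 * X 1 * X 3 + 9 * (X 0) ^ 6 * (X 3) ^ 2
         + 8 * (X 0) ^ 3 * (X 2) ^ 3 + 6 * (X 1) ^ 3 * X 3 - 3 * (X 2) ^ 2 * (X 1) ^ 2}) :
    (algebraMap (MvPolynomial (Fin 5) k) (FractionRing (MvPolynomial (Fin 5) k))) ''
        {g : MvPolynomial (Fin 5) k | Δ g = 0} =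
      {q : FractionRing (MvPolynomial (Fin 5) k) | ∃ n : ℕ, 1 ≤ n ∧
        (∃ a ∈ A, algebraMap (MvPolynomial (Fin 5) k) (FractionRing (MvPolynomial (Fin 5) k)) a
          = algebraMap (MvPolynomial (Fin 5) k) (FractionRing (MvPolynomial (Fin 5) k))
              (X 0) ^ n * q) ∧
        (∃ a ∈ A, algebraMap (MvPolynomial (Fin 5) k) (FractionRing (MvPolynomial (Fin 5) k)) a
          = algebraMap (MvPolynomial (Fin 5) k) (FractionRing (MvPolynomial (Fin 5) k))
              (2 * (X 0) ^ 3 * X 2 - (X 1) ^ 2) ^ n * q)} := by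
  have hΔ' : Δ = DD k := hΔ
  have hA' : A = Algebra.adjoin k (Gset k) := hA
  subst hΔ'
  subst hA'
  set ι := algebraMap (MvPolynomial (Fin 5) k) (FractionRing (MvPolynomial (Fin 5) k)) with hι
  have hinj : Function.Injective ι := IsFractionRing.injective _ _
  have hι0 : ι (X 0) ≠ 0 := fun h => X_ne_zero 0 (hinj (by rw [h, map_zero]))
  have hAker : ∀ a ∈ Algebra.adjoin k (Gset k), DD k a = 0 := fun a ha =>
    mem_kerS.mp ((Algebra.adjoin_le (fun y hy => mem_kerS.mpr (Gset_ker y hy))) ha)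
  have hmx : (X 0 : MvPolynomial (Fin 5) k) ∈ Algebra.adjoin k (Gset k) :=
    Algebra.subset_adjoin (by simp [Gset])
  have hmf : fP k ∈ Algebra.adjoin k (Gset k) :=
    Algebra.subset_adjoin (show fP k ∈ Gset k by simp [Gset])
  ext q
  simp only [Set.mem_image, Set.mem_setOf_eq]
  constructor
  · rintro ⟨g, hg, rfl⟩
    obtain ⟨N1, hN1⟩ := xchart g hg
    obtain ⟨N2, hN2⟩ := fchart g hg
    refine ⟨N1 + N2 + 1, by omega,
      ⟨(X 0) ^ (N1 + N2 + 1) * g, ?_, by rw [map_mul, map_pow]⟩,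
      ⟨(fP k) ^ (N1 + N2 + 1) * g, ?_, by rw [map_mul, map_pow]; rfl⟩⟩
    · rw [show N1 + N2 + 1 = (N2 + 1) + N1 by omega, pow_add, mul_assoc]
      exact mul_mem (pow_mem hmx _) hN1
    · rw [show N1 + N2 + 1 = (N1 + 1) + N2 by omega, pow_add, mul_assoc]
      exact mul_mem (pow_mem hmf _) hN2
  · rintro ⟨n, hn, ⟨a1, ha1A, ha1⟩, ⟨a2, ha2A, ha2⟩⟩
    have ha2' : ι a2 = ι (fP k) ^ n * q := ha2
    have key : a1 * (fP k) ^ n = a2 * (X 0) ^ n := by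
      apply hinj
      rw [map_mul, map_mul, map_pow, map_pow, ha1, ha2']
      ring
    have hndvd : ¬ (X 0 : MvPolynomial (Fin 5) k) ∣ (fP k) ^ n :=
      fun hd => X0_not_dvd_fP (primeX0.dvd_of_dvd_pow hd)
    have hdvd : (X 0 : MvPolynomial (Fin 5) k) ^ n ∣ a1 :=
      primeX0.pow_dvd_of_dvd_mul_right n hndvd ⟨a2, by rw [key]; ring⟩
    obtain ⟨g, hg⟩ := hdvd
    have hq : q = ι g := by
      have h1 : ι (X 0) ^ n * q = ι (X 0) ^ n * ι g := by
        rw [← ha1, hg, map_mul, map_pow]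
      exact mul_left_cancel₀ (pow_ne_zero n hι0) h1
    have ha2eq : a2 = (fP k) ^ n * g := by
      apply hinj
      rw [ha2', hq, map_mul, map_pow]
    have hDg : DD k g = 0 := by
      have hDa2 : DD k a2 = 0 := hAker a2 ha2A
      rw [ha2eq, Derivation.leibniz, Derivation.leibniz_pow, DD_fP] at hDa2
      simp only [smul_eq_mul, mul_zero, smul_zero, zero_mul, add_zero] at hDa2
      rcases mul_eq_zero.mp hDa2 with h | h
      · exact absurd h (pow_ne_zero n fP_ne_zero)
      · exact h
    exact ⟨g, hDg, hq.symm⟩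
end

section
/- Let k be an algebraically closed field of characteristic zero, let m ≥ 2 be an integer, let B = k[x₁, x₂, x₃, y₁, y₂, y₃, v] be the polynomial ring in seven variables, and let D be the unique k-derivation of B with D(xᵢ) = 0, D(yᵢ) = xᵢ^{m+1}, and D(v) = (x₁x₂x₃)^m. Let φ₁ = x₁^{m+1}y₂ − x₂^{m+1}y₁, φ₂ = x₁^{m+1}y₃ − x₃^{m+1}y₁, φ₃ = x₂^{m+1}y₃ − x₃^{m+1}y₂, φ₄ = (x₁x₂)^m y₃ − x₃v, φ₅ = (x₁x₃)^m y₂ − x₂v, φ₆ = (x₂x₃)^m y₁ − x₁v, and let A be the k-subalgebra of B generated by x₁, x₂, x₃, φ₁, φ₂, φ₃, φ₄, φ₅, φ₆. Then, inside the fraction field Frac(B), the image of the kernel of D equals the set of all q ∈ Frac(B) for which there exists n ≥ 1 such that xᵢⁿ·q lies in the image of A for i = 1, 2, 3. (That is, ker D is the ring of regular functions on the quasi-affine variety Spec(A) \ V(x₁, x₂, x₃).) -/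
set_option maxHeartbeats 1000000
set_option synthInstance.maxHeartbeats 200000

open MvPolynomial

section RobertsAux

lemma roberts_primeXfin {k : Type*} [Field k] {n : ℕ} (i : Fin (n+1)) :
    Prime (X i : MvPolynomial (Fin (n+1)) k) := by
  have hp : Prime ((MvPolynomial.finSuccEquiv k n) (X 0)) := by
    rw [finSuccEquiv_X_zero]; exact Polynomial.prime_X
  have h0 : Prime (X 0 : MvPolynomial (Fin (n+1)) k) :=
    (MulEquiv.prime_iff (p := X 0) (MvPolynomial.finSuccEquiv k n).toRingEquiv.toMulEquiv).mp
      (by simpa using hp)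
  have h1 : Prime ((renameEquiv k (Equiv.swap (0 : Fin (n+1)) i)).toRingEquiv.toMulEquiv
      (X 0 : MvPolynomial (Fin (n+1)) k)) :=
    (MulEquiv.prime_iff _).mpr h0
  simpa [Equiv.swap_apply_left] using h1

lemma roberts_notXdvdX {k : Type*} [Field k] {n : ℕ} {i j : Fin n} (hij : i ≠ j) :
    ¬ ((X i : MvPolynomial (Fin n) k) ∣ X j) := by
  rintro ⟨c, hc⟩
  have h := congrArg (eval (fun t => if t = i then 0 else 1)) hc
  simp [hij, Ne.symm hij] at h

lemma roberts_primePowDvd {R : Type*} [CommRing R] [IsDomain R] {p b : R}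
    (hp : Prime p) (hpb : ¬ p ∣ b) (m : ℕ) :
    ∀ (n : ℕ) (a : R), p ^ n ∣ b ^ m * a → p ^ n ∣ a := by
  intro n
  induction n with
  | zero => simp
  | succ n ih =>
    intro a h
    have h1 : p ∣ a := by
      rcases hp.dvd_mul.mp (dvd_trans (dvd_pow_self p (Nat.succ_ne_zero n)) h) with h' | h'
      · exact absurd (hp.dvd_of_dvd_pow h') hpb
      · exact h'
    obtain ⟨a', rfl⟩ := h1
    have h2 : p ^ n ∣ b ^ m * a' := by
      refine (mul_dvd_mul_iff_left (b := p ^ n) (c := b ^ m * a') hp.ne_zero).mp ?_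
      calc p * p ^ n = p ^ (n+1) := (pow_succ' p n).symm
        _ ∣ b ^ m * (p * a') := h
        _ = p * (b ^ m * a') := by ring
    calc p ^ (n+1) = p * p ^ n := pow_succ' p n
      _ ∣ p * a' := mul_dvd_mul_left p (ih a' h2)

lemma roberts_derivAevalComm {k : Type*} [Field k] (w : Fin 7 → MvPolynomial (Fin 7) k)
    (hw : ∀ i : Fin 7,
      aeval (fun j => Polynomial.C (X j) + Polynomial.X * Polynomial.C (w j)) (w i)
        = Polynomial.C (w i)) (g : MvPolynomial (Fin 7) k) :
    Polynomial.derivative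
        (aeval (fun j => Polynomial.C (X j) + Polynomial.X * Polynomial.C (w j)) g)
      = aeval (fun j => Polynomial.C (X j) + Polynomial.X * Polynomial.C (w j))
          (mkDerivation k w g) := by
  induction g using MvPolynomial.induction_on with
  | C a => simp [← MvPolynomial.algebraMap_eq]
  | add p q hp hq => simp only [map_add, hp, hq]
  | mul_X p i hp =>
    simp only [map_mul, Polynomial.derivative_mul, hp, aeval_X, Derivation.leibniz,
      mkDerivation_X, smul_eq_mul, map_add, hw, Polynomial.derivative_add,
      Polynomial.derivative_C, Polynomial.derivative_X, zero_add, mul_one]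
    ring

lemma roberts_TgC {k : Type*} [Field k] [CharZero k] (w : Fin 7 → MvPolynomial (Fin 7) k)
    (hw : ∀ i : Fin 7,
      aeval (fun j => Polynomial.C (X j) + Polynomial.X * Polynomial.C (w j)) (w i)
        = Polynomial.C (w i))
    (g : MvPolynomial (Fin 7) k) (hg : mkDerivation k w g = 0) :
    aeval (fun j => Polynomial.C (X j) + Polynomial.X * Polynomial.C (w j)) g
      = Polynomial.C g := by
  set f : Fin 7 → Polynomial (MvPolynomial (Fin 7) k) :=
    fun j => Polynomial.C (X j) + Polynomial.X * Polynomial.C (w j) with hf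
  have hder : Polynomial.derivative (aeval f g) = 0 := by
    rw [roberts_derivAevalComm w hw, hg, map_zero]
  have hnd := Polynomial.natDegree_eq_zero_of_derivative_eq_zero hder
  have hC := Polynomial.eq_C_of_natDegree_eq_zero hnd
  have hev : Polynomial.eval 0 (aeval f g) = g := by
    have : (Polynomial.evalRingHom (0 : MvPolynomial (Fin 7) k)).comp
        ((aeval f : MvPolynomial (Fin 7) k →ₐ[k] Polynomial (MvPolynomial (Fin 7) k)) :
          MvPolynomial (Fin 7) k →+* Polynomial (MvPolynomial (Fin 7) k))
        = RingHom.id _ := by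
      apply MvPolynomial.ringHom_ext
      · intro a; simp [hf, ← MvPolynomial.algebraMap_eq]
      · intro i; simp [hf]
    exact congrFun (congrArg (fun h => h.toFun) this) g
  rw [hC, Polynomial.eval_C] at hev
  rw [hC, hev]

noncomputable def robertsLocSub {k : Type*} [Field k] (A : Subalgebra k (MvPolynomial (Fin 7) k))
    (x : MvPolynomial (Fin 7) k) (hx : x ∈ A) :
    Subalgebra k (FractionRing (MvPolynomial (Fin 7) k)) where
  carrier := {q | ∃ N : ℕ, ∃ a ∈ A,
    (algebraMap (MvPolynomial (Fin 7) k) (FractionRing (MvPolynomial (Fin 7) k)) x) ^ N * q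
      = algebraMap _ _ a}
  mul_mem' := by
    rintro q r ⟨N, a, ha, hqa⟩ ⟨M, b, hb, hrb⟩
    exact ⟨N + M, a * b, mul_mem ha hb, by rw [RingHom.map_mul, ← hqa, ← hrb]; ring⟩
  add_mem' := by
    rintro q r ⟨N, a, ha, hqa⟩ ⟨M, b, hb, hrb⟩
    refine ⟨N + M, x ^ M * a + x ^ N * b,
      add_mem (mul_mem (pow_mem hx M) ha) (mul_mem (pow_mem hx N) hb), ?_⟩
    rw [RingHom.map_add, RingHom.map_mul, RingHom.map_mul, RingHom.map_pow, RingHom.map_pow,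
      ← hqa, ← hrb]
    ring
  algebraMap_mem' := fun c => ⟨0, algebraMap k _ c, Subalgebra.algebraMap_mem A c, by
    rw [pow_zero, one_mul, ← IsScalarTower.algebraMap_apply]⟩

lemma roberts_key {k : Type*} [Field k] [CharZero k]
    (w : Fin 7 → MvPolynomial (Fin 7) k)
    (hw : ∀ i : Fin 7,
      aeval (fun j => Polynomial.C (X j) + Polynomial.X * Polynomial.C (w j)) (w i)
        = Polynomial.C (w i))
    (A : Subalgebra k (MvPolynomial (Fin 7) k))
    (x : MvPolynomial (Fin 7) k) (hx : x ∈ A)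
    (s : FractionRing (MvPolynomial (Fin 7) k))
    (hgen : ∀ i : Fin 7,
      (algebraMap (MvPolynomial (Fin 7) k) (FractionRing (MvPolynomial (Fin 7) k)) (X i)
        + s * algebraMap (MvPolynomial (Fin 7) k) (FractionRing (MvPolynomial (Fin 7) k)) (w i))
        ∈ robertsLocSub A x hx)
    (g : MvPolynomial (Fin 7) k) (hg : mkDerivation k w g = 0) :
    ∃ N : ℕ, ∃ a ∈ A, x ^ N * g = a := by
  set f : Fin 7 → Polynomial (MvPolynomial (Fin 7) k) :=
    fun j => Polynomial.C (X j) + Polynomial.X * Polynomial.C (w j) with hf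
  have hTg : aeval f g = Polynomial.C g := roberts_TgC w hw g hg
  set σ : MvPolynomial (Fin 7) k →ₐ[k] FractionRing (MvPolynomial (Fin 7) k) :=
    ((Polynomial.aeval s).restrictScalars k).comp
      (aeval f : MvPolynomial (Fin 7) k →ₐ[k] Polynomial (MvPolynomial (Fin 7) k)) with hσ
  have hσg : σ g = algebraMap _ _ g := by
    simp [hσ, hTg]
  have hσX : ∀ i : Fin 7, σ (X i)
      = algebraMap (MvPolynomial (Fin 7) k) (FractionRing (MvPolynomial (Fin 7) k)) (X i)
        + s * algebraMap (MvPolynomial (Fin 7) k) (FractionRing (MvPolynomial (Fin 7) k)) (w i) := by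
    intro i
    rw [hσ, AlgHom.comp_apply, aeval_X]
    simp [hf, Polynomial.aeval_C]
    ring
  have hmem : σ g ∈ Algebra.adjoin k (Set.range fun i => σ (X i)) := by
    have h1 : g ∈ Algebra.adjoin k (Set.range (X : Fin 7 → MvPolynomial (Fin 7) k)) := by
      rw [adjoin_range_X]; trivial
    have h2 : σ g ∈ (Algebra.adjoin k (Set.range (X : Fin 7 → MvPolynomial (Fin 7) k))).map σ :=
      ⟨g, h1, rfl⟩
    rw [AlgHom.map_adjoin, ← Set.range_comp] at h2
    exact h2
  have hle : Algebra.adjoin k (Set.range fun i => σ (X i)) ≤ robertsLocSub A x hx :=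
    Algebra.adjoin_le (by
      rintro _ ⟨i, rfl⟩
      have h := hgen i
      rw [← hσX i] at h
      simpa using h)
  have := hle hmem
  rw [hσg] at this
  obtain ⟨N, a, ha, heq⟩ := this
  refine ⟨N, a, ha, IsFractionRing.injective (MvPolynomial (Fin 7) k)
    (FractionRing (MvPolynomial (Fin 7) k)) ?_⟩
  rw [RingHom.map_mul, RingHom.map_pow]
  exact heq

end RobertsAux

/-- In Roberts's example (variables `x₁ = X 0`, `x₂ = X 1`, `x₃ = X 2`, `y₁ = X 3`,
`y₂ = X 4`, `y₃ = X 5`, `v = X 6`), the kernel of `D` is the ring of regular functions on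
`Spec(A) \ V(x₁, x₂, x₃)`: inside the fraction field, the image of `ker D` equals the set of
`q` such that some common power of each `xᵢ` multiplies `q` into the image of `A`. -/
theorem roberts_invariants_are_ideal_transform
    {k : Type*} [Field k] [IsAlgClosed k] [CharZero k]
    (m : ℕ) (hm : 2 ≤ m)
    (D : Derivation k (MvPolynomial (Fin 7) k) (MvPolynomial (Fin 7) k))
    (hD : D = mkDerivation k
      ![0, 0, 0, (X 0) ^ (m + 1), (X 1) ^ (m + 1), (X 2) ^ (m + 1), (X 0 * X 1 * X 2) ^ m])
    (A : Subalgebra k (MvPolynomial (Fin 7) k))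
    (hA : A = Algebra.adjoin k
      {X 0, X 1, X 2,
       (X 0) ^ (m + 1) * X 4 - (X 1) ^ (m + 1) * X 3,
       (X 0) ^ (m + 1) * X 5 - (X 2) ^ (m + 1) * X 3,
       (X 1) ^ (m + 1) * X 5 - (X 2) ^ (m + 1) * X 4,
       (X 0 * X 1) ^ m * X 5 - X 2 * X 6,
       (X 0 * X 2) ^ m * X 4 - X 1 * X 6,
       (X 1 * X 2) ^ m * X 3 - X 0 * X 6}) :
    (algebraMap (MvPolynomial (Fin 7) k) (FractionRing (MvPolynomial (Fin 7) k))) ''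
        {g : MvPolynomial (Fin 7) k | D g = 0} =
      {q : FractionRing (MvPolynomial (Fin 7) k) | ∃ n : ℕ, 1 ≤ n ∧
        ∀ i : Fin 3,
          ∃ a ∈ A, algebraMap (MvPolynomial (Fin 7) k) (FractionRing (MvPolynomial (Fin 7) k)) a
            = algebraMap (MvPolynomial (Fin 7) k) (FractionRing (MvPolynomial (Fin 7) k))
                (X (Fin.castLE (by omega) i)) ^ n * q} := by
  classical
  have hι : Function.Injective (algebraMap (MvPolynomial (Fin 7) k)
      (FractionRing (MvPolynomial (Fin 7) k))) := IsFractionRing.injective _ _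
  set w : Fin 7 → MvPolynomial (Fin 7) k :=
    ![0, 0, 0, (X 0) ^ (m + 1), (X 1) ^ (m + 1), (X 2) ^ (m + 1), (X 0 * X 1 * X 2) ^ m]
    with hwdef
  have hDX : ∀ i : Fin 7, D (X i) = w i := by intro i; rw [hD, mkDerivation_X]
  have w0 : w 0 = 0 := rfl
  have w1 : w 1 = 0 := rfl
  have w2 : w 2 = 0 := rfl
  have w3 : w 3 = (X 0) ^ (m+1) := rfl
  have w4 : w 4 = (X 1) ^ (m+1) := rfl
  have w5 : w 5 = (X 2) ^ (m+1) := rfl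
  have w6 : w 6 = (X 0 * X 1 * X 2) ^ m := rfl
  have e0 : D (X 0) = 0 := (hDX 0).trans w0
  have e1 : D (X 1) = 0 := (hDX 1).trans w1
  have e2 : D (X 2) = 0 := (hDX 2).trans w2
  have e3 : D (X 3) = (X 0) ^ (m+1) := (hDX 3).trans w3
  have e4 : D (X 4) = (X 1) ^ (m+1) := (hDX 4).trans w4
  have e5 : D (X 5) = (X 2) ^ (m+1) := (hDX 5).trans w5
  have e6 : D (X 6) = (X 0 * X 1 * X 2) ^ m := (hDX 6).trans w6
  have hpw : ∀ p : MvPolynomial (Fin 7) k, D p = 0 → ∀ n : ℕ, D (p ^ n) = 0 := by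
    intro p hp n
    rw [Derivation.leibniz_pow, hp, smul_zero, smul_zero]
  have e01 : D (X 0 * X 1) = 0 := by
    rw [Derivation.leibniz, e0, e1, smul_zero, smul_zero, add_zero]
  have e02 : D (X 0 * X 2) = 0 := by
    rw [Derivation.leibniz, e0, e2, smul_zero, smul_zero, add_zero]
  have e12 : D (X 1 * X 2) = 0 := by
    rw [Derivation.leibniz, e1, e2, smul_zero, smul_zero, add_zero]
  -- membership of the generators in A
  have hsub : ∀ p ∈ ({X 0, X 1, X 2,
       (X 0) ^ (m + 1) * X 4 - (X 1) ^ (m + 1) * X 3,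
       (X 0) ^ (m + 1) * X 5 - (X 2) ^ (m + 1) * X 3,
       (X 1) ^ (m + 1) * X 5 - (X 2) ^ (m + 1) * X 4,
       (X 0 * X 1) ^ m * X 5 - X 2 * X 6,
       (X 0 * X 2) ^ m * X 4 - X 1 * X 6,
       (X 1 * X 2) ^ m * X 3 - X 0 * X 6} : Set (MvPolynomial (Fin 7) k)), p ∈ A := by
    rw [hA]; exact fun p hp => Algebra.subset_adjoin hp
  have hA0 : (X 0 : MvPolynomial (Fin 7) k) ∈ A := hsub _ (by simp)
  have hA1 : (X 1 : MvPolynomial (Fin 7) k) ∈ A := hsub _ (by simp)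
  have hA2 : (X 2 : MvPolynomial (Fin 7) k) ∈ A := hsub _ (by simp)
  have hF1 : ((X 0) ^ (m + 1) * X 4 - (X 1) ^ (m + 1) * X 3 : MvPolynomial (Fin 7) k) ∈ A :=
    hsub _ (by simp)
  have hF2 : ((X 0) ^ (m + 1) * X 5 - (X 2) ^ (m + 1) * X 3 : MvPolynomial (Fin 7) k) ∈ A :=
    hsub _ (by simp)
  have hF3 : ((X 1) ^ (m + 1) * X 5 - (X 2) ^ (m + 1) * X 4 : MvPolynomial (Fin 7) k) ∈ A :=
    hsub _ (by simp)
  have hF4 : ((X 0 * X 1) ^ m * X 5 - X 2 * X 6 : MvPolynomial (Fin 7) k) ∈ A :=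
    hsub _ (by simp)
  have hF5 : ((X 0 * X 2) ^ m * X 4 - X 1 * X 6 : MvPolynomial (Fin 7) k) ∈ A :=
    hsub _ (by simp)
  have hF6 : ((X 1 * X 2) ^ m * X 3 - X 0 * X 6 : MvPolynomial (Fin 7) k) ∈ A :=
    hsub _ (by simp)
  -- A is contained in the kernel of D
  have hker : ∀ a ∈ A, D a = 0 := by
    let S : Subalgebra k (MvPolynomial (Fin 7) k) :=
      { carrier := {b | D b = 0}
        mul_mem' := fun {p q} hp hq => by
          simp only [Set.mem_setOf_eq] at *
          rw [Derivation.leibniz, hp, hq, smul_zero, smul_zero, add_zero]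
        one_mem' := by simp only [Set.mem_setOf_eq]; exact D.map_one_eq_zero
        add_mem' := fun {p q} hp hq => by
          simp only [Set.mem_setOf_eq] at *
          rw [map_add, hp, hq, add_zero]
        zero_mem' := by simp only [Set.mem_setOf_eq]; exact map_zero D
        algebraMap_mem' := fun c => D.map_algebraMap c }
    have hle : A ≤ S := by
      rw [hA]
      apply Algebra.adjoin_le
      intro b hb
      simp only [Set.mem_insert_iff, Set.mem_singleton_iff] at hb
      rcases hb with rfl|rfl|rfl|rfl|rfl|rfl|rfl|rfl|rfl
      · exact e0
      · exact e1
      · exact e2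
      · show D _ = 0
        rw [map_sub, Derivation.leibniz, Derivation.leibniz, hpw _ e0 (m+1), hpw _ e1 (m+1),
          e3, e4, smul_zero, smul_zero, add_zero, add_zero, smul_eq_mul, smul_eq_mul]
        ring
      · show D _ = 0
        rw [map_sub, Derivation.leibniz, Derivation.leibniz, hpw _ e0 (m+1), hpw _ e2 (m+1),
          e3, e5, smul_zero, smul_zero, add_zero, add_zero, smul_eq_mul, smul_eq_mul]
        ring
      · show D _ = 0
        rw [map_sub, Derivation.leibniz, Derivation.leibniz, hpw _ e1 (m+1), hpw _ e2 (m+1),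
          e4, e5, smul_zero, smul_zero, add_zero, add_zero, smul_eq_mul, smul_eq_mul]
        ring
      · show D _ = 0
        rw [map_sub, Derivation.leibniz, Derivation.leibniz, hpw _ e01 m, e2, e5, e6,
          smul_zero, smul_zero, add_zero, add_zero, smul_eq_mul, smul_eq_mul]
        ring
      · show D _ = 0
        rw [map_sub, Derivation.leibniz, Derivation.leibniz, hpw _ e02 m, e1, e4, e6,
          smul_zero, smul_zero, add_zero, add_zero, smul_eq_mul, smul_eq_mul]
        ring
      · show D _ = 0
        rw [map_sub, Derivation.leibniz, Derivation.leibniz, hpw _ e12 m, e0, e3, e6,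
          smul_zero, smul_zero, add_zero, add_zero, smul_eq_mul, smul_eq_mul]
        ring
    exact fun a ha => hle ha
  have hne : ∀ j : Fin 7, algebraMap (MvPolynomial (Fin 7) k)
      (FractionRing (MvPolynomial (Fin 7) k)) (X j) ≠ 0 := by
    intro j h
    exact MvPolynomial.X_ne_zero j (hι (by rw [h, RingHom.map_zero]))
  ext q
  simp only [Set.mem_image, Set.mem_setOf_eq]
  constructor
  · rintro ⟨g, hg, rfl⟩
    have hg' : mkDerivation k w g = 0 := by rw [← hD]; exact hg
    set ι' := algebraMap (MvPolynomial (Fin 7) k) (FractionRing (MvPolynomial (Fin 7) k))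
      with hι'def
    have hne' : ∀ j : Fin 7, ι' (X j) ≠ 0 := hne
    set F : Fin 7 → Polynomial (MvPolynomial (Fin 7) k) :=
      fun j => Polynomial.C (X j) + Polynomial.X * Polynomial.C (w j) with hFdef
    have hwC : ∀ i : Fin 7, aeval F (w i) = Polynomial.C (w i) := by
      have c0 : aeval F (w 0) = Polynomial.C (w 0) := by rw [w0]; simp
      have c1 : aeval F (w 1) = Polynomial.C (w 1) := by rw [w1]; simp
      have c2 : aeval F (w 2) = Polynomial.C (w 2) := by rw [w2]; simp
      have c3 : aeval F (w 3) = Polynomial.C (w 3) := by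
        rw [w3]; simp [hFdef, map_pow, w0]
      have c4 : aeval F (w 4) = Polynomial.C (w 4) := by
        rw [w4]; simp [hFdef, map_pow, w1]
      have c5 : aeval F (w 5) = Polynomial.C (w 5) := by
        rw [w5]; simp [hFdef, map_pow, w2]
      have c6 : aeval F (w 6) = Polynomial.C (w 6) := by
        rw [w6]; simp [hFdef, map_pow, map_mul, w0, w1, w2]
      intro i; fin_cases i; exacts [c0, c1, c2, c3, c4, c5, c6]
    -- localization at X 0
    have hgen0 : ∀ i : Fin 7,
        (ι' (X i) + (-(ι' (X 3)) / (ι' (X 0)) ^ (m+1)) * ι' (w i))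
          ∈ robertsLocSub A (X 0) hA0 := by
      have d0 : (ι' (X 0) + (-(ι' (X 3)) / (ι' (X 0)) ^ (m+1)) * ι' (w 0))
          ∈ robertsLocSub A (X 0) hA0 :=
        ⟨0, X 0, hA0, by simp only [← hι'def]; rw [w0, RingHom.map_zero]; simp⟩
      have d1 : (ι' (X 1) + (-(ι' (X 3)) / (ι' (X 0)) ^ (m+1)) * ι' (w 1))
          ∈ robertsLocSub A (X 0) hA0 :=
        ⟨0, X 1, hA1, by simp only [← hι'def]; rw [w1, RingHom.map_zero]; simp⟩
      have d2 : (ι' (X 2) + (-(ι' (X 3)) / (ι' (X 0)) ^ (m+1)) * ι' (w 2))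
          ∈ robertsLocSub A (X 0) hA0 :=
        ⟨0, X 2, hA2, by simp only [← hι'def]; rw [w2, RingHom.map_zero]; simp⟩
      have d3 : (ι' (X 3) + (-(ι' (X 3)) / (ι' (X 0)) ^ (m+1)) * ι' (w 3))
          ∈ robertsLocSub A (X 0) hA0 := by
        refine ⟨m+1, 0, zero_mem A, ?_⟩
        simp only [← hι'def]
        rw [w3]
        simp only [RingHom.map_pow, RingHom.map_zero]
        field_simp [hne' 0, hne' 1, hne' 2]
        ring
      have d4 : (ι' (X 4) + (-(ι' (X 3)) / (ι' (X 0)) ^ (m+1)) * ι' (w 4))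
          ∈ robertsLocSub A (X 0) hA0 := by
        refine ⟨m+1, (X 0) ^ (m + 1) * X 4 - (X 1) ^ (m + 1) * X 3, hF1, ?_⟩
        simp only [← hι'def]
        rw [w4]
        simp only [RingHom.map_pow, RingHom.map_sub, RingHom.map_mul]
        field_simp [hne' 0, hne' 1, hne' 2]
        ring
      have d5 : (ι' (X 5) + (-(ι' (X 3)) / (ι' (X 0)) ^ (m+1)) * ι' (w 5))
          ∈ robertsLocSub A (X 0) hA0 := by
        refine ⟨m+1, (X 0) ^ (m + 1) * X 5 - (X 2) ^ (m + 1) * X 3, hF2, ?_⟩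
        simp only [← hι'def]
        rw [w5]
        simp only [RingHom.map_pow, RingHom.map_sub, RingHom.map_mul]
        field_simp [hne' 0, hne' 1, hne' 2]
        ring
      have d6 : (ι' (X 6) + (-(ι' (X 3)) / (ι' (X 0)) ^ (m+1)) * ι' (w 6))
          ∈ robertsLocSub A (X 0) hA0 := by
        refine ⟨m+1, -((X 0) ^ m * ((X 1 * X 2) ^ m * X 3 - X 0 * X 6)),
          neg_mem (mul_mem (pow_mem hA0 m) hF6), ?_⟩
        simp only [← hι'def]
        rw [w6]
        simp only [RingHom.map_pow, RingHom.map_sub, RingHom.map_mul, RingHom.map_neg]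
        field_simp [hne' 0, hne' 1, hne' 2]
        ring
      intro i; fin_cases i; exacts [d0, d1, d2, d3, d4, d5, d6]
    -- localization at X 1
    have hgen1 : ∀ i : Fin 7,
        (ι' (X i) + (-(ι' (X 4)) / (ι' (X 1)) ^ (m+1)) * ι' (w i))
          ∈ robertsLocSub A (X 1) hA1 := by
      have d0 : (ι' (X 0) + (-(ι' (X 4)) / (ι' (X 1)) ^ (m+1)) * ι' (w 0))
          ∈ robertsLocSub A (X 1) hA1 :=
        ⟨0, X 0, hA0, by simp only [← hι'def]; rw [w0, RingHom.map_zero]; simp⟩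
      have d1 : (ι' (X 1) + (-(ι' (X 4)) / (ι' (X 1)) ^ (m+1)) * ι' (w 1))
          ∈ robertsLocSub A (X 1) hA1 :=
        ⟨0, X 1, hA1, by simp only [← hι'def]; rw [w1, RingHom.map_zero]; simp⟩
      have d2 : (ι' (X 2) + (-(ι' (X 4)) / (ι' (X 1)) ^ (m+1)) * ι' (w 2))
          ∈ robertsLocSub A (X 1) hA1 :=
        ⟨0, X 2, hA2, by simp only [← hι'def]; rw [w2, RingHom.map_zero]; simp⟩
      have d3 : (ι' (X 3) + (-(ι' (X 4)) / (ι' (X 1)) ^ (m+1)) * ι' (w 3))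
          ∈ robertsLocSub A (X 1) hA1 := by
        refine ⟨m+1, -((X 0) ^ (m + 1) * X 4 - (X 1) ^ (m + 1) * X 3), neg_mem hF1, ?_⟩
        simp only [← hι'def]
        rw [w3]
        simp only [RingHom.map_pow, RingHom.map_sub, RingHom.map_mul, RingHom.map_neg]
        field_simp [hne' 0, hne' 1, hne' 2]
        ring
      have d4 : (ι' (X 4) + (-(ι' (X 4)) / (ι' (X 1)) ^ (m+1)) * ι' (w 4))
          ∈ robertsLocSub A (X 1) hA1 := by
        refine ⟨m+1, 0, zero_mem A, ?_⟩
        simp only [← hι'def]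
        rw [w4]
        simp only [RingHom.map_pow, RingHom.map_zero]
        field_simp [hne' 0, hne' 1, hne' 2]
        ring
      have d5 : (ι' (X 5) + (-(ι' (X 4)) / (ι' (X 1)) ^ (m+1)) * ι' (w 5))
          ∈ robertsLocSub A (X 1) hA1 := by
        refine ⟨m+1, (X 1) ^ (m + 1) * X 5 - (X 2) ^ (m + 1) * X 4, hF3, ?_⟩
        simp only [← hι'def]
        rw [w5]
        simp only [RingHom.map_pow, RingHom.map_sub, RingHom.map_mul]
        field_simp [hne' 0, hne' 1, hne' 2]
        ring
      have d6 : (ι' (X 6) + (-(ι' (X 4)) / (ι' (X 1)) ^ (m+1)) * ι' (w 6))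
          ∈ robertsLocSub A (X 1) hA1 := by
        refine ⟨m+1, -((X 1) ^ m * ((X 0 * X 2) ^ m * X 4 - X 1 * X 6)),
          neg_mem (mul_mem (pow_mem hA1 m) hF5), ?_⟩
        simp only [← hι'def]
        rw [w6]
        simp only [RingHom.map_pow, RingHom.map_sub, RingHom.map_mul, RingHom.map_neg]
        field_simp [hne' 0, hne' 1, hne' 2]
        ring
      intro i; fin_cases i; exacts [d0, d1, d2, d3, d4, d5, d6]
    -- localization at X 2
    have hgen2 : ∀ i : Fin 7,
        (ι' (X i) + (-(ι' (X 5)) / (ι' (X 2)) ^ (m+1)) * ι' (w i))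
          ∈ robertsLocSub A (X 2) hA2 := by
      have d0 : (ι' (X 0) + (-(ι' (X 5)) / (ι' (X 2)) ^ (m+1)) * ι' (w 0))
          ∈ robertsLocSub A (X 2) hA2 :=
        ⟨0, X 0, hA0, by simp only [← hι'def]; rw [w0, RingHom.map_zero]; simp⟩
      have d1 : (ι' (X 1) + (-(ι' (X 5)) / (ι' (X 2)) ^ (m+1)) * ι' (w 1))
          ∈ robertsLocSub A (X 2) hA2 :=
        ⟨0, X 1, hA1, by simp only [← hι'def]; rw [w1, RingHom.map_zero]; simp⟩
      have d2 : (ι' (X 2) + (-(ι' (X 5)) / (ι' (X 2)) ^ (m+1)) * ι' (w 2))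
          ∈ robertsLocSub A (X 2) hA2 :=
        ⟨0, X 2, hA2, by simp only [← hι'def]; rw [w2, RingHom.map_zero]; simp⟩
      have d3 : (ι' (X 3) + (-(ι' (X 5)) / (ι' (X 2)) ^ (m+1)) * ι' (w 3))
          ∈ robertsLocSub A (X 2) hA2 := by
        refine ⟨m+1, -((X 0) ^ (m + 1) * X 5 - (X 2) ^ (m + 1) * X 3), neg_mem hF2, ?_⟩
        simp only [← hι'def]
        rw [w3]
        simp only [RingHom.map_pow, RingHom.map_sub, RingHom.map_mul, RingHom.map_neg]
        field_simp [hne' 0, hne' 1, hne' 2]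
        ring
      have d4 : (ι' (X 4) + (-(ι' (X 5)) / (ι' (X 2)) ^ (m+1)) * ι' (w 4))
          ∈ robertsLocSub A (X 2) hA2 := by
        refine ⟨m+1, -((X 1) ^ (m + 1) * X 5 - (X 2) ^ (m + 1) * X 4), neg_mem hF3, ?_⟩
        simp only [← hι'def]
        rw [w4]
        simp only [RingHom.map_pow, RingHom.map_sub, RingHom.map_mul, RingHom.map_neg]
        field_simp [hne' 0, hne' 1, hne' 2]
        ring
      have d5 : (ι' (X 5) + (-(ι' (X 5)) / (ι' (X 2)) ^ (m+1)) * ι' (w 5))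
          ∈ robertsLocSub A (X 2) hA2 := by
        refine ⟨m+1, 0, zero_mem A, ?_⟩
        simp only [← hι'def]
        rw [w5]
        simp only [RingHom.map_pow, RingHom.map_zero]
        field_simp [hne' 0, hne' 1, hne' 2]
        ring
      have d6 : (ι' (X 6) + (-(ι' (X 5)) / (ι' (X 2)) ^ (m+1)) * ι' (w 6))
          ∈ robertsLocSub A (X 2) hA2 := by
        refine ⟨m+1, -((X 2) ^ m * ((X 0 * X 1) ^ m * X 5 - X 2 * X 6)),
          neg_mem (mul_mem (pow_mem hA2 m) hF4), ?_⟩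
        simp only [← hι'def]
        rw [w6]
        simp only [RingHom.map_pow, RingHom.map_sub, RingHom.map_mul, RingHom.map_neg]
        field_simp [hne' 0, hne' 1, hne' 2]
        ring
      intro i; fin_cases i; exacts [d0, d1, d2, d3, d4, d5, d6]
    obtain ⟨N₀, a₀, ha₀, hb₀⟩ := roberts_key w hwC A (X 0) hA0 _ hgen0 g hg'
    obtain ⟨N₁, a₁, ha₁, hb₁⟩ := roberts_key w hwC A (X 1) hA1 _ hgen1 g hg'
    obtain ⟨N₂, a₂, ha₂, hb₂⟩ := roberts_key w hwC A (X 2) hA2 _ hgen2 g hg'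
    refine ⟨N₀ + N₁ + N₂ + 1, by omega, ?_⟩
    have case0 : ∃ a ∈ A, ι' a = ι' (X 0) ^ (N₀ + N₁ + N₂ + 1) * ι' g := by
      refine ⟨X 0 ^ (N₀ + N₁ + N₂ + 1 - N₀) * a₀, mul_mem (pow_mem hA0 _) ha₀, ?_⟩
      have hBeq : X 0 ^ (N₀ + N₁ + N₂ + 1 - N₀) * a₀
          = X 0 ^ (N₀ + N₁ + N₂ + 1) * g := by
        rw [← hb₀, ← mul_assoc, ← pow_add]
        congr 2
        omega
      rw [hBeq, RingHom.map_mul, RingHom.map_pow]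
    have case1 : ∃ a ∈ A, ι' a = ι' (X 1) ^ (N₀ + N₁ + N₂ + 1) * ι' g := by
      refine ⟨X 1 ^ (N₀ + N₁ + N₂ + 1 - N₁) * a₁, mul_mem (pow_mem hA1 _) ha₁, ?_⟩
      have hBeq : X 1 ^ (N₀ + N₁ + N₂ + 1 - N₁) * a₁
          = X 1 ^ (N₀ + N₁ + N₂ + 1) * g := by
        rw [← hb₁, ← mul_assoc, ← pow_add]
        congr 2
        omega
      rw [hBeq, RingHom.map_mul, RingHom.map_pow]
    have case2 : ∃ a ∈ A, ι' a = ι' (X 2) ^ (N₀ + N₁ + N₂ + 1) * ι' g := by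
      refine ⟨X 2 ^ (N₀ + N₁ + N₂ + 1 - N₂) * a₂, mul_mem (pow_mem hA2 _) ha₂, ?_⟩
      have hBeq : X 2 ^ (N₀ + N₁ + N₂ + 1 - N₂) * a₂
          = X 2 ^ (N₀ + N₁ + N₂ + 1) * g := by
        rw [← hb₂, ← mul_assoc, ← pow_add]
        congr 2
        omega
      rw [hBeq, RingHom.map_mul, RingHom.map_pow]
    intro i
    fin_cases i
    · exact case0
    · exact case1
    · exact case2
  · rintro ⟨n, hn, hgen3⟩
    obtain ⟨a₀, ha₀, he₀⟩ := hgen3 0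
    obtain ⟨a₁, ha₁, he₁⟩ := hgen3 1
    have he₀' : algebraMap (MvPolynomial (Fin 7) k) (FractionRing (MvPolynomial (Fin 7) k)) a₀
        = algebraMap (MvPolynomial (Fin 7) k) (FractionRing (MvPolynomial (Fin 7) k)) (X 0) ^ n * q
      := he₀
    have he₁' : algebraMap (MvPolynomial (Fin 7) k) (FractionRing (MvPolynomial (Fin 7) k)) a₁
        = algebraMap (MvPolynomial (Fin 7) k) (FractionRing (MvPolynomial (Fin 7) k)) (X 1) ^ n * q
      := he₁
    have hB : X 1 ^ n * a₀ = X 0 ^ n * a₁ := by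
      apply hι
      rw [RingHom.map_mul, RingHom.map_pow, RingHom.map_mul, RingHom.map_pow, he₀', he₁']
      ring
    obtain ⟨g, hg⟩ := roberts_primePowDvd (roberts_primeXfin 0)
      (roberts_notXdvdX (show (0 : Fin 7) ≠ 1 by decide)) n n a₀ ⟨a₁, hB⟩
    refine ⟨g, ?_, ?_⟩
    · have hDa : D a₀ = 0 := hker a₀ ha₀
      rw [hg, Derivation.leibniz, hpw _ e0 n, smul_zero, add_zero, smul_eq_mul] at hDa
      rcases mul_eq_zero.mp hDa with h | h
      · exact absurd h (pow_ne_zero n (MvPolynomial.X_ne_zero 0))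
      · exact h
    · have hq : (algebraMap (MvPolynomial (Fin 7) k) (FractionRing (MvPolynomial (Fin 7) k))
          (X 0)) ^ n * algebraMap _ _ g
          = (algebraMap (MvPolynomial (Fin 7) k) (FractionRing (MvPolynomial (Fin 7) k))
          (X 0)) ^ n * q := by
        rw [← RingHom.map_pow, ← RingHom.map_mul, ← hg, he₀', RingHom.map_pow]
      exact mul_left_cancel₀ (pow_ne_zero n (hne 0)) hq
end

section
/- Let k be an algebraically closed field of characteristic zero, let m ≥ 2 be an integer, let B = k[x₁, x₂, x₃, y₁, y₂, y₃, v] be the polynomial ring in seven variables, and let D be the unique k-derivation of B with D(xᵢ) = 0, D(yᵢ) = xᵢ^{m+1}, and D(v) = (x₁x₂x₃)^m. Let φ₁ = x₁^{m+1}y₂ − x₂^{m+1}y₁, φ₂ = x₁^{m+1}y₃ − x₃^{m+1}y₁, φ₃ = x₂^{m+1}y₃ − x₃^{m+1}y₂, φ₄ = (x₁x₂)^m y₃ − x₃v, φ₅ = (x₁x₃)^m y₂ − x₂v, φ₆ = (x₂x₃)^m y₁ − x₁v, and let A' be the k-subalgebra of B generated by x₁, x₂, x₃, φ₁, φ₂,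 φ₃, φ₅, φ₆ (omitting φ₄). Then A' is not a separating set: for the two points a = (0,0,1,0,0,0,1) and b = (0,0,1,0,0,0,0) of k⁷ (coordinates in the order x₁,x₂,x₃,y₁,y₂,y₃,v), the invariant φ₄ satisfies D(φ₄) = 0 and φ₄(a) ≠ φ₄(b), yet every g ∈ A' satisfies g(a) = g(b). -/
set_option maxRecDepth 4000


open MvPolynomial

/-- In Roberts's example (variables `x₁ = X 0`, `x₂ = X 1`, `x₃ = X 2`, `y₁ = X 3`,
`y₂ = X 4`, `y₃ = X 5`, `v = X 6`), the algebra `A'` obtained by omitting `φ₄` is not a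
separating set: the invariant `φ₄` separates the points `(0,0,1,0,0,0,1)` and
`(0,0,1,0,0,0,0)`, but no element of `A'` does. -/
theorem roberts_omitting_phi4_not_separating
    {k : Type*} [Field k] [IsAlgClosed k] [CharZero k]
    (m : ℕ) (hm : 2 ≤ m)
    (D : Derivation k (MvPolynomial (Fin 7) k) (MvPolynomial (Fin 7) k))
    (hD : D = mkDerivation k
      ![0, 0, 0, (X 0) ^ (m + 1), (X 1) ^ (m + 1), (X 2) ^ (m + 1), (X 0 * X 1 * X 2) ^ m])
    (A' : Subalgebra k (MvPolynomial (Fin 7) k))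
    (hA' : A' = Algebra.adjoin k
      {X 0, X 1, X 2,
       (X 0) ^ (m + 1) * X 4 - (X 1) ^ (m + 1) * X 3,
       (X 0) ^ (m + 1) * X 5 - (X 2) ^ (m + 1) * X 3,
       (X 1) ^ (m + 1) * X 5 - (X 2) ^ (m + 1) * X 4,
       (X 0 * X 2) ^ m * X 4 - X 1 * X 6,
       (X 1 * X 2) ^ m * X 3 - X 0 * X 6}) :
    D ((X 0 * X 1) ^ m * X 5 - X 2 * X 6) = 0 ∧
    eval (![0, 0, 1, 0, 0, 0, 1] : Fin 7 → k) ((X 0 * X 1) ^ m * X 5 - X 2 * X 6) ≠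
      eval (![0, 0, 1, 0, 0, 0, 0] : Fin 7 → k) ((X 0 * X 1) ^ m * X 5 - X 2 * X 6) ∧
    ∀ g ∈ A', eval (![0, 0, 1, 0, 0, 0, 1] : Fin 7 → k) g =
      eval (![0, 0, 1, 0, 0, 0, 0] : Fin 7 → k) g := by
  have hm0 : m ≠ 0 := by omega
  refine ⟨?_, ?_, ?_⟩
  · have hX0 : D (X 0) = 0 := by rw [hD]; simp [mkDerivation_X]
    have hX1 : D (X 1) = 0 := by rw [hD]; simp [mkDerivation_X]
    have hX2 : D (X 2) = 0 := by rw [hD]; simp [mkDerivation_X]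
    have hX5 : D (X 5) = (X 2) ^ (m + 1) := by rw [hD, mkDerivation_X]; rfl
    have hX6 : D (X 6) = (X 0 * X 1 * X 2) ^ m := by rw [hD, mkDerivation_X]; rfl
    have h01 : D (X 0 * X 1) = 0 := by
      rw [Derivation.leibniz, hX0, hX1]; simp
    have hpow : D ((X 0 * X 1) ^ m) = 0 := by
      rw [Derivation.leibniz_pow, h01]; simp
    rw [map_sub, Derivation.leibniz, Derivation.leibniz, hpow, hX5, hX6, hX2]
    simp only [smul_zero, smul_eq_mul, add_zero, zero_add]
    ring
  · have ha : eval (![0, 0, 1, 0, 0, 0, 1] : Fin 7 → k)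
        ((X 0 * X 1) ^ m * X 5 - X 2 * X 6) = -1 := by
      simp [zero_pow hm0, show (![0,0,1,0,0,0,1] : Fin 7 → k) 6 = 1 from rfl,
        show (![0,0,1,0,0,0,0] : Fin 7 → k) 6 = 0 from rfl]
    have hb : eval (![0, 0, 1, 0, 0, 0, 0] : Fin 7 → k)
        ((X 0 * X 1) ^ m * X 5 - X 2 * X 6) = 0 := by
      simp [zero_pow hm0, show (![0,0,1,0,0,0,1] : Fin 7 → k) 6 = 1 from rfl,
        show (![0,0,1,0,0,0,0] : Fin 7 → k) 6 = 0 from rfl]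
    rw [ha, hb]
    simp
  · intro g hg
    subst hA'
    have key : Algebra.adjoin k
        ({X 0, X 1, X 2,
         (X 0) ^ (m + 1) * X 4 - (X 1) ^ (m + 1) * X 3,
         (X 0) ^ (m + 1) * X 5 - (X 2) ^ (m + 1) * X 3,
         (X 1) ^ (m + 1) * X 5 - (X 2) ^ (m + 1) * X 4,
         (X 0 * X 2) ^ m * X 4 - X 1 * X 6,
         (X 1 * X 2) ^ m * X 3 - X 0 * X 6} : Set (MvPolynomial (Fin 7) k)) ≤
        AlgHom.equalizer (aeval (![0, 0, 1, 0, 0, 0, 1] : Fin 7 → k))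
          (aeval (![0, 0, 1, 0, 0, 0, 0] : Fin 7 → k)) := by
      apply Algebra.adjoin_le
      intro p hp
      simp only [Set.mem_insert_iff, Set.mem_singleton_iff] at hp
      rcases hp with rfl | rfl | rfl | rfl | rfl | rfl | rfl | rfl <;>
        simp [AlgHom.mem_equalizer, zero_pow hm0, zero_pow (Nat.succ_ne_zero m),
          show (![0,0,1,0,0,0,1] : Fin 7 → k) 6 = 1 from rfl,
          show (![0,0,1,0,0,0,0] : Fin 7 → k) 6 = 0 from rfl]
    have := key hg
    rw [AlgHom.mem_equalizer] at this
    rw [← RingHom.congr_fun (coe_aeval_eq_eval (![0, 0, 1, 0, 0, 0, 1] : Fin 7 → k)) g,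
      ← RingHom.congr_fun (coe_aeval_eq_eval (![0, 0, 1, 0, 0, 0, 0] : Fin 7 → k)) g]
    exact this
end

section
/- Let k be an algebraically closed field of characteristic zero, let m ≥ 2 be an integer, let B = k[x₁, x₂, x₃, y₁, y₂, y₃, v] be the polynomial ring in seven variables, and let D be the unique k-derivation of B with D(xᵢ) = 0, D(yᵢ) = xᵢ^{m+1}, and D(v) = (x₁x₂x₃)^m. Let φ₁ = x₁^{m+1}y₂ − x₂^{m+1}y₁, φ₂ = x₁^{m+1}y₃ − x₃^{m+1}y₁, φ₃ = x₂^{m+1}y₃ − x₃^{m+1}y₂, φ₅ = (x₁x₃)^m y₂ − x₂v, φ₆ = (x₂x₃)^m y₁ − x₁v, and let A' be the k-subalgebra of B generated by x₁, x₂, x₃, φ₁, φ₂, φ₃, φ₅, φ₆. Then, inside the fraction field Frac(B), the image of the kernel of D equals the set of all q ∈ Frac(B) for which there exists n ≥ 1 such that x₁ⁿ·q and x₂ⁿ·q both lie in the image of A'. (That is, ker D is the ring of regular functions on Spec(A') \ V(x₁, x₂), even though A' is not a separating algebra.) -/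
open MvPolynomial

section RobertsAux

variable {k : Type*} [Field k]

/-- Each variable `X i` is prime in `k[x₀,…,x₆]`. -/
lemma roberts_primeX (i : Fin 7) : Prime (X i : MvPolynomial (Fin 7) k) := by
  have h0 : Prime (X 0 : MvPolynomial (Fin 7) k) := by
    rw [← MulEquiv.prime_iff (finSuccEquiv k 6).toMulEquiv]
    show Prime (finSuccEquiv k 6 (X 0))
    rw [finSuccEquiv_X_zero]
    exact Polynomial.prime_X
  have := (MulEquiv.prime_iff (renameEquiv k (Equiv.swap (0 : Fin 7) i)).toMulEquiv).mpr h0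
  simpa [renameEquiv_apply, rename_X] using this

/-- The "flow" homomorphism `g ↦ g(X j + t·d j)` into `B[t]`. -/
noncomputable def robertsFlow (d : Fin 7 → MvPolynomial (Fin 7) k) :
    MvPolynomial (Fin 7) k →ₐ[k] Polynomial (MvPolynomial (Fin 7) k) :=
  aeval (fun j => Polynomial.C (X j) + Polynomial.X * Polynomial.C (d j))

lemma robertsFlow_X (d : Fin 7 → MvPolynomial (Fin 7) k) (j : Fin 7) :
    robertsFlow d (X j) = Polynomial.C (X j) + Polynomial.X * Polynomial.C (d j) := by
  simp [robertsFlow]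

lemma derivative_robertsFlow (d : Fin 7 → MvPolynomial (Fin 7) k)
    (D : Derivation k (MvPolynomial (Fin 7) k) (MvPolynomial (Fin 7) k))
    (hDX : ∀ i, D (X i) = d i)
    (hC : ∀ i, robertsFlow d (d i) = Polynomial.C (d i)) (g : MvPolynomial (Fin 7) k) :
    Polynomial.derivative (robertsFlow d g) = robertsFlow d (D g) := by
  induction g using MvPolynomial.induction_on with
  | C a =>
      rw [show (C a : MvPolynomial (Fin 7) k) = algebraMap k _ a from rfl,
        Derivation.map_algebraMap, map_zero, AlgHom.commutes]
      simp
  | add p q hp hq => simp [map_add, hp, hq]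
  | mul_X p i hp =>
      rw [map_mul, Polynomial.derivative_mul, hp, D.leibniz, hDX, map_add,
        smul_eq_mul, smul_eq_mul, map_mul, map_mul, hC]
      rw [robertsFlow_X]
      simp only [Polynomial.derivative_add, Polynomial.derivative_C,
        Polynomial.derivative_mul, Polynomial.derivative_X, one_mul, mul_zero, add_zero, zero_add]
      ring

lemma eval_zero_robertsFlow (d : Fin 7 → MvPolynomial (Fin 7) k) (g : MvPolynomial (Fin 7) k) :
    Polynomial.eval 0 (robertsFlow d g) = g := by
  induction g using MvPolynomial.induction_on with
  | C a => simp [robertsFlow, algebraMap_eq]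
  | add p q hp hq => simp [hp, hq]
  | mul_X p i hp => rw [map_mul, Polynomial.eval_mul, hp, robertsFlow_X]; simp

lemma robertsFlow_eq_C [CharZero k] (d : Fin 7 → MvPolynomial (Fin 7) k)
    (g : MvPolynomial (Fin 7) k)
    (h : Polynomial.derivative (robertsFlow d g) = 0) :
    robertsFlow d g = Polynomial.C g := by
  have hc := Polynomial.eq_C_of_derivative_eq_zero h
  have := eval_zero_robertsFlow d g
  rw [hc] at this ⊢
  rw [Polynomial.eval_C] at this
  rw [this]

lemma eval₂_robertsFlow {L : Type*} [Field L] [Algebra k L]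
    [Algebra (MvPolynomial (Fin 7) k) L] [IsScalarTower k (MvPolynomial (Fin 7) k) L]
    (d : Fin 7 → MvPolynomial (Fin 7) k) (t₀ : L) (g : MvPolynomial (Fin 7) k) :
    Polynomial.eval₂ (algebraMap (MvPolynomial (Fin 7) k) L) t₀ (robertsFlow d g) =
      aeval (fun i => algebraMap (MvPolynomial (Fin 7) k) L (X i)
        + t₀ * algebraMap (MvPolynomial (Fin 7) k) L (d i)) g := by
  induction g using MvPolynomial.induction_on with
  | C a =>
      rw [show (C a : MvPolynomial (Fin 7) k) = algebraMap k _ a from rfl, AlgHom.commutes]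
      simp [← IsScalarTower.algebraMap_apply]
      rw [IsScalarTower.algebraMap_apply k (MvPolynomial (Fin 7) k) L]
      simp [algebraMap_eq]
  | add p q hp hq => simp [map_add, Polynomial.eval₂_add, hp, hq]
  | mul_X p i hp =>
      rw [map_mul, Polynomial.eval₂_mul, hp, robertsFlow_X]
      simp only [Polynomial.eval₂_add, Polynomial.eval₂_mul, Polynomial.eval₂_C,
        Polynomial.eval₂_X, map_mul, aeval_X]

lemma roberts_pow_mul_aeval_mem {L : Type*} [Field L] [Algebra k L]
    [Algebra (MvPolynomial (Fin 7) k) L] [IsScalarTower k (MvPolynomial (Fin 7) k) L]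
    (S : Subalgebra k (MvPolynomial (Fin 7) k)) (p : MvPolynomial (Fin 7) k) (hp : p ∈ S)
    (c : ℕ) (s : Fin 7 → L)
    (hs : ∀ i, ∃ a ∈ S, algebraMap (MvPolynomial (Fin 7) k) L a
        = algebraMap (MvPolynomial (Fin 7) k) L p ^ c * s i)
    (g : MvPolynomial (Fin 7) k) :
    ∃ N, ∃ a ∈ S, algebraMap (MvPolynomial (Fin 7) k) L a
        = algebraMap (MvPolynomial (Fin 7) k) L p ^ N * aeval s g := by
  induction g using MvPolynomial.induction_on with
  | C a =>
      refine ⟨0, algebraMap k _ a, S.algebraMap_mem a, ?_⟩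
      rw [pow_zero, one_mul, aeval_C]
      exact (IsScalarTower.algebraMap_apply k (MvPolynomial (Fin 7) k) L a).symm
  | add f g hf hg =>
      obtain ⟨Nf, a, haS, ha⟩ := hf
      obtain ⟨Ng, b, hbS, hb⟩ := hg
      refine ⟨Nf + Ng, p ^ Ng * a + p ^ Nf * b,
        S.add_mem (S.mul_mem (S.pow_mem hp _) haS) (S.mul_mem (S.pow_mem hp _) hbS), ?_⟩
      rw [map_add, map_mul, map_mul, map_pow, map_pow, ha, hb, map_add]
      ring
  | mul_X f i hf =>
      obtain ⟨Nf, a, haS, ha⟩ := hf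
      obtain ⟨b, hbS, hb⟩ := hs i
      refine ⟨Nf + c, a * b, S.mul_mem haS hbS, ?_⟩
      rw [map_mul, ha, hb, map_mul, aeval_X]
      ring

end RobertsAux

set_option maxHeartbeats 2000000 in
/-- In Roberts's example (variables `x₁ = X 0`, `x₂ = X 1`, `x₃ = X 2`, `y₁ = X 3`,
`y₂ = X 4`, `y₃ = X 5`, `v = X 6`), even though `A'` (omitting `φ₄`) is not a separating
algebra, `ker D` is still the ring of regular functions on `Spec(A') \ V(x₁, x₂)`: inside the
fraction field, the image of `ker D` equals the set of `q` such that some common power of `x₁`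
and `x₂` multiplies `q` into the image of `A'`. -/
theorem roberts_omitting_phi4_ideal_transform
    {k : Type*} [Field k] [IsAlgClosed k] [CharZero k]
    (m : ℕ) (hm : 2 ≤ m)
    (D : Derivation k (MvPolynomial (Fin 7) k) (MvPolynomial (Fin 7) k))
    (hD : D = mkDerivation k
      ![0, 0, 0, (X 0) ^ (m + 1), (X 1) ^ (m + 1), (X 2) ^ (m + 1), (X 0 * X 1 * X 2) ^ m])
    (A' : Subalgebra k (MvPolynomial (Fin 7) k))
    (hA' : A' = Algebra.adjoin k
      {X 0, X 1, X 2,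
       (X 0) ^ (m + 1) * X 4 - (X 1) ^ (m + 1) * X 3,
       (X 0) ^ (m + 1) * X 5 - (X 2) ^ (m + 1) * X 3,
       (X 1) ^ (m + 1) * X 5 - (X 2) ^ (m + 1) * X 4,
       (X 0 * X 2) ^ m * X 4 - X 1 * X 6,
       (X 1 * X 2) ^ m * X 3 - X 0 * X 6}) :
    (algebraMap (MvPolynomial (Fin 7) k) (FractionRing (MvPolynomial (Fin 7) k))) ''
        {g : MvPolynomial (Fin 7) k | D g = 0} =
      {q : FractionRing (MvPolynomial (Fin 7) k) | ∃ n : ℕ, 1 ≤ n ∧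
        (∃ a ∈ A', algebraMap (MvPolynomial (Fin 7) k) (FractionRing (MvPolynomial (Fin 7) k)) a
          = algebraMap (MvPolynomial (Fin 7) k) (FractionRing (MvPolynomial (Fin 7) k))
              (X 0) ^ n * q) ∧
        (∃ a ∈ A', algebraMap (MvPolynomial (Fin 7) k) (FractionRing (MvPolynomial (Fin 7) k)) a
          = algebraMap (MvPolynomial (Fin 7) k) (FractionRing (MvPolynomial (Fin 7) k))
              (X 1) ^ n * q)} := by
  classical
  set ι := algebraMap (MvPolynomial (Fin 7) k) (FractionRing (MvPolynomial (Fin 7) k)) with hιdef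
  have hι : Function.Injective ι :=
    IsFractionRing.injective (MvPolynomial (Fin 7) k) (FractionRing (MvPolynomial (Fin 7) k))
  set d : Fin 7 → MvPolynomial (Fin 7) k :=
    ![0, 0, 0, (X 0) ^ (m + 1), (X 1) ^ (m + 1), (X 2) ^ (m + 1), (X 0 * X 1 * X 2) ^ m]
    with hddef
  have hDX : ∀ i, D (X i) = d i := fun i => by rw [hD, mkDerivation_X]
  have hd0 : d 0 = 0 := rfl
  have hd1 : d 1 = 0 := rfl
  have hd2 : d 2 = 0 := rfl
  have hd3 : d 3 = (X 0) ^ (m + 1) := rfl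
  have hd4 : d 4 = (X 1) ^ (m + 1) := rfl
  have hd5 : d 5 = (X 2) ^ (m + 1) := rfl
  have hd6 : d 6 = (X 0 * X 1 * X 2) ^ m := rfl
  have hX0 : D (X 0) = 0 := by rw [hDX, hd0]
  have hX1 : D (X 1) = 0 := by rw [hDX, hd1]
  have hX2 : D (X 2) = 0 := by rw [hDX, hd2]
  have hX3 : D (X 3) = (X 0) ^ (m + 1) := by rw [hDX, hd3]
  have hX4 : D (X 4) = (X 1) ^ (m + 1) := by rw [hDX, hd4]
  have hX5 : D (X 5) = (X 2) ^ (m + 1) := by rw [hDX, hd5]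
  have hX6 : D (X 6) = (X 0 * X 1 * X 2) ^ m := by rw [hDX, hd6]
  -- membership of the generators in A'
  have hX0A : (X 0 : MvPolynomial (Fin 7) k) ∈ A' := by
    rw [hA']; exact Algebra.subset_adjoin (by simp)
  have hX1A : (X 1 : MvPolynomial (Fin 7) k) ∈ A' := by
    rw [hA']; exact Algebra.subset_adjoin (by simp)
  have hX2A : (X 2 : MvPolynomial (Fin 7) k) ∈ A' := by
    rw [hA']; exact Algebra.subset_adjoin (by simp)
  have hφ1A : ((X 0) ^ (m + 1) * X 4 - (X 1) ^ (m + 1) * X 3 : MvPolynomial (Fin 7) k) ∈ A' := by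
    rw [hA']; exact Algebra.subset_adjoin (by simp)
  have hφ2A : ((X 0) ^ (m + 1) * X 5 - (X 2) ^ (m + 1) * X 3 : MvPolynomial (Fin 7) k) ∈ A' := by
    rw [hA']; exact Algebra.subset_adjoin (by simp)
  have hφ3A : ((X 1) ^ (m + 1) * X 5 - (X 2) ^ (m + 1) * X 4 : MvPolynomial (Fin 7) k) ∈ A' := by
    rw [hA']; exact Algebra.subset_adjoin (by simp)
  have hφ5A : ((X 0 * X 2) ^ m * X 4 - X 1 * X 6 : MvPolynomial (Fin 7) k) ∈ A' := by
    rw [hA']; exact Algebra.subset_adjoin (by simp)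
  have hφ6A : ((X 1 * X 2) ^ m * X 3 - X 0 * X 6 : MvPolynomial (Fin 7) k) ∈ A' := by
    rw [hA']; exact Algebra.subset_adjoin (by simp)
  -- A' consists of invariants
  have hDA : ∀ a ∈ A', D a = 0 := by
    intro a ha
    rw [hA'] at ha
    induction ha using Algebra.adjoin_induction with
    | mem x hx =>
        simp only [Set.mem_insert_iff, Set.mem_singleton_iff] at hx
        rcases hx with rfl | rfl | rfl | rfl | rfl | rfl | rfl | rfl
        · exact hX0
        · exact hX1
        · exact hX2
        · rw [map_sub, D.leibniz, D.leibniz, Derivation.leibniz_pow, Derivation.leibniz_pow,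
            hX0, hX1, hX3, hX4]
          simp only [smul_zero, smul_eq_mul, mul_zero, add_zero, zero_add]
          ring
        · rw [map_sub, D.leibniz, D.leibniz, Derivation.leibniz_pow, Derivation.leibniz_pow,
            hX0, hX2, hX3, hX5]
          simp only [smul_zero, smul_eq_mul, mul_zero, add_zero, zero_add]
          ring
        · rw [map_sub, D.leibniz, D.leibniz, Derivation.leibniz_pow, Derivation.leibniz_pow,
            hX1, hX2, hX4, hX5]
          simp only [smul_zero, smul_eq_mul, mul_zero, add_zero, zero_add]
          ring
        · rw [map_sub, D.leibniz, D.leibniz, Derivation.leibniz_pow, D.leibniz,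
            hX0, hX1, hX2, hX4, hX6]
          simp only [smul_zero, smul_eq_mul, mul_zero, add_zero, zero_add]
          ring
        · rw [map_sub, D.leibniz, D.leibniz, Derivation.leibniz_pow, D.leibniz,
            hX0, hX1, hX2, hX3, hX6]
          simp only [smul_zero, smul_eq_mul, mul_zero, add_zero, zero_add]
          ring
    | algebraMap r => exact Derivation.map_algebraMap D r
    | add x y _ _ hx hy => rw [map_add, hx, hy, add_zero]
    | mul x y _ _ hx hy => rw [D.leibniz, hx, hy, smul_zero, smul_zero, add_zero]
  have hx0ne : ι (X 0) ≠ 0 := fun h => X_ne_zero (σ := Fin 7) (R := k) 0 (hι (by simpa using h))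
  have hx1ne : ι (X 1) ≠ 0 := fun h => X_ne_zero (σ := Fin 7) (R := k) 1 (hι (by simpa using h))
  ext q
  constructor
  · rintro ⟨g, hg, rfl⟩
    -- forward direction
    have hCd : ∀ i, robertsFlow d (d i) = Polynomial.C (d i) := by
      have e0 : robertsFlow d (X 0) = Polynomial.C (X 0) := by
        rw [robertsFlow_X, hd0]; simp
      have e1 : robertsFlow d (X 1) = Polynomial.C (X 1) := by
        rw [robertsFlow_X, hd1]; simp
      have e2 : robertsFlow d (X 2) = Polynomial.C (X 2) := by
        rw [robertsFlow_X, hd2]; simp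
      intro i
      fin_cases i
      · show robertsFlow d (d 0) = Polynomial.C (d 0)
        rw [hd0]; simp
      · show robertsFlow d (d 1) = Polynomial.C (d 1)
        rw [hd1]; simp
      · show robertsFlow d (d 2) = Polynomial.C (d 2)
        rw [hd2]; simp
      · show robertsFlow d (d 3) = Polynomial.C (d 3)
        rw [hd3, map_pow, e0, ← map_pow]
      · show robertsFlow d (d 4) = Polynomial.C (d 4)
        rw [hd4, map_pow, e1, ← map_pow]
      · show robertsFlow d (d 5) = Polynomial.C (d 5)
        rw [hd5, map_pow, e2, ← map_pow]
      · show robertsFlow d (d 6) = Polynomial.C (d 6)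
        rw [hd6]
        simp only [map_pow, map_mul, e0, e1, e2]
    have flow : robertsFlow d g = Polynomial.C g :=
      robertsFlow_eq_C d g (by rw [derivative_robertsFlow d D hDX hCd g, hg, map_zero])
    have key : ∀ t₀ : FractionRing (MvPolynomial (Fin 7) k),
        aeval (fun i => ι (X i) + t₀ * ι (d i)) g = ι g := by
      intro t₀
      have h := eval₂_robertsFlow d t₀ g
      rw [flow, Polynomial.eval₂_C] at h
      exact h.symm
    -- the x₁ half
    have half1 : ∃ N, ∃ a ∈ A', ι a = ι (X 0) ^ N * ι g := by
      set t₀ : FractionRing (MvPolynomial (Fin 7) k) := -ι (X 3) * (ι (X 0))⁻¹ ^ (m + 1)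
        with ht₀
      set s : Fin 7 → FractionRing (MvPolynomial (Fin 7) k) :=
        fun i => ι (X i) + t₀ * ι (d i) with hs_def
      have hs : ∀ i, ∃ a ∈ A', ι a = ι (X 0) ^ (m + 1) * s i := by
        intro i
        fin_cases i
        · show ∃ a ∈ A', ι a = ι (X 0) ^ (m + 1) * s 0
          refine ⟨X 0 ^ (m + 2), A'.pow_mem hX0A _, ?_⟩
          simp only [hs_def]
          rw [hd0, map_zero, mul_zero, add_zero, map_pow, ← pow_succ]
        · show ∃ a ∈ A', ι a = ι (X 0) ^ (m + 1) * s 1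
          refine ⟨X 0 ^ (m + 1) * X 1, A'.mul_mem (A'.pow_mem hX0A _) hX1A, ?_⟩
          simp only [hs_def]
          rw [hd1, map_zero, mul_zero, add_zero, map_mul, map_pow]
        · show ∃ a ∈ A', ι a = ι (X 0) ^ (m + 1) * s 2
          refine ⟨X 0 ^ (m + 1) * X 2, A'.mul_mem (A'.pow_mem hX0A _) hX2A, ?_⟩
          simp only [hs_def]
          rw [hd2, map_zero, mul_zero, add_zero, map_mul, map_pow]
        · show ∃ a ∈ A', ι a = ι (X 0) ^ (m + 1) * s 3
          refine ⟨0, A'.zero_mem, ?_⟩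
          simp only [hs_def, ht₀]
          rw [hd3, map_zero, map_pow]
          rw [inv_pow]
          field_simp
          ring
        · show ∃ a ∈ A', ι a = ι (X 0) ^ (m + 1) * s 4
          refine ⟨(X 0) ^ (m + 1) * X 4 - (X 1) ^ (m + 1) * X 3, hφ1A, ?_⟩
          simp only [hs_def, ht₀]
          rw [hd4, map_sub, map_mul, map_mul, map_pow, map_pow]
          rw [inv_pow]
          field_simp
          ring
        · show ∃ a ∈ A', ι a = ι (X 0) ^ (m + 1) * s 5
          refine ⟨(X 0) ^ (m + 1) * X 5 - (X 2) ^ (m + 1) * X 3, hφ2A, ?_⟩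
          simp only [hs_def, ht₀]
          rw [hd5, map_sub, map_mul, map_mul, map_pow, map_pow]
          rw [inv_pow]
          field_simp
          ring
        · show ∃ a ∈ A', ι a = ι (X 0) ^ (m + 1) * s 6
          refine ⟨-(X 0 ^ m * ((X 1 * X 2) ^ m * X 3 - X 0 * X 6)),
            A'.neg_mem (A'.mul_mem (A'.pow_mem hX0A _) hφ6A), ?_⟩
          simp only [hs_def, ht₀]
          rw [hd6]
          simp only [map_neg, map_sub, map_mul, map_pow]
          rw [inv_pow]
          field_simp
          ring
      obtain ⟨N, a, haS, ha⟩ := roberts_pow_mul_aeval_mem A' (X 0) hX0A (m + 1) s hs g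
      exact ⟨N, a, haS, by rw [ha]; simp only [hs_def]; rw [key]⟩
    -- the x₂ half
    have half2 : ∃ N, ∃ a ∈ A', ι a = ι (X 1) ^ N * ι g := by
      set t₀ : FractionRing (MvPolynomial (Fin 7) k) := -ι (X 4) * (ι (X 1))⁻¹ ^ (m + 1)
        with ht₀
      set s : Fin 7 → FractionRing (MvPolynomial (Fin 7) k) :=
        fun i => ι (X i) + t₀ * ι (d i) with hs_def
      have hs : ∀ i, ∃ a ∈ A', ι a = ι (X 1) ^ (m + 1) * s i := by
        intro i
        fin_cases i
        · show ∃ a ∈ A', ι a = ι (X 1) ^ (m + 1) * s 0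
          refine ⟨X 1 ^ (m + 1) * X 0, A'.mul_mem (A'.pow_mem hX1A _) hX0A, ?_⟩
          simp only [hs_def]
          rw [hd0, map_zero, mul_zero, add_zero, map_mul, map_pow]
        · show ∃ a ∈ A', ι a = ι (X 1) ^ (m + 1) * s 1
          refine ⟨X 1 ^ (m + 2), A'.pow_mem hX1A _, ?_⟩
          simp only [hs_def]
          rw [hd1, map_zero, mul_zero, add_zero, map_pow, ← pow_succ]
        · show ∃ a ∈ A', ι a = ι (X 1) ^ (m + 1) * s 2
          refine ⟨X 1 ^ (m + 1) * X 2, A'.mul_mem (A'.pow_mem hX1A _) hX2A, ?_⟩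
          simp only [hs_def]
          rw [hd2, map_zero, mul_zero, add_zero, map_mul, map_pow]
        · show ∃ a ∈ A', ι a = ι (X 1) ^ (m + 1) * s 3
          refine ⟨-((X 0) ^ (m + 1) * X 4 - (X 1) ^ (m + 1) * X 3), A'.neg_mem hφ1A, ?_⟩
          simp only [hs_def, ht₀]
          rw [hd3, map_neg, map_sub, map_mul, map_mul, map_pow, map_pow]
          rw [inv_pow]
          field_simp
          ring
        · show ∃ a ∈ A', ι a = ι (X 1) ^ (m + 1) * s 4
          refine ⟨0, A'.zero_mem, ?_⟩
          simp only [hs_def, ht₀]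
          rw [hd4, map_zero, map_pow]
          rw [inv_pow]
          field_simp
          ring
        · show ∃ a ∈ A', ι a = ι (X 1) ^ (m + 1) * s 5
          refine ⟨(X 1) ^ (m + 1) * X 5 - (X 2) ^ (m + 1) * X 4, hφ3A, ?_⟩
          simp only [hs_def, ht₀]
          rw [hd5, map_sub, map_mul, map_mul, map_pow, map_pow]
          rw [inv_pow]
          field_simp
          ring
        · show ∃ a ∈ A', ι a = ι (X 1) ^ (m + 1) * s 6
          refine ⟨-(X 1 ^ m * ((X 0 * X 2) ^ m * X 4 - X 1 * X 6)),
            A'.neg_mem (A'.mul_mem (A'.pow_mem hX1A _) hφ5A), ?_⟩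
          simp only [hs_def, ht₀]
          rw [hd6]
          simp only [map_neg, map_sub, map_mul, map_pow]
          rw [inv_pow]
          field_simp
          ring
      obtain ⟨N, a, haS, ha⟩ := roberts_pow_mul_aeval_mem A' (X 1) hX1A (m + 1) s hs g
      exact ⟨N, a, haS, by rw [ha]; simp only [hs_def]; rw [key]⟩
    obtain ⟨N₁, a₁, ha₁S, ha₁⟩ := half1
    obtain ⟨N₂, a₂, ha₂S, ha₂⟩ := half2
    refine ⟨max (max N₁ N₂) 1, le_max_right _ _, ?_, ?_⟩
    · refine ⟨X 0 ^ (max (max N₁ N₂) 1 - N₁) * a₁,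
        A'.mul_mem (A'.pow_mem hX0A _) ha₁S, ?_⟩
      rw [map_mul, map_pow, ha₁, ← mul_assoc, ← pow_add,
        Nat.sub_add_cancel (le_trans (le_max_left _ _) (le_max_left _ _))]
    · refine ⟨X 1 ^ (max (max N₁ N₂) 1 - N₂) * a₂,
        A'.mul_mem (A'.pow_mem hX1A _) ha₂S, ?_⟩
      rw [map_mul, map_pow, ha₂, ← mul_assoc, ← pow_add,
        Nat.sub_add_cancel (le_trans (le_max_right _ _) (le_max_left _ _))]
  · rintro ⟨n, hn, ⟨a₁, ha₁S, ha₁⟩, ⟨a₂, ha₂S, ha₂⟩⟩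
    -- backward direction
    have deq : X 1 ^ n * a₁ = X 0 ^ n * a₂ := by
      apply hι
      rw [map_mul, map_mul, map_pow, map_pow, ha₁, ha₂]
      ring
    have hndvd : ¬ (X 0 : MvPolynomial (Fin 7) k) ∣ X 1 ^ n := by
      intro h
      have h' : (X 0 : MvPolynomial (Fin 7) k) ∣ X 1 :=
        (roberts_primeX 0).dvd_of_dvd_pow h
      obtain ⟨c, hc⟩ := h'
      have := congrArg (eval (fun j : Fin 7 => if j = 1 then (1 : k) else 0)) hc
      simp at this
    have hdvd : (X 0 : MvPolynomial (Fin 7) k) ^ n ∣ a₁ :=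
      (roberts_primeX 0).pow_dvd_of_dvd_mul_left n hndvd ⟨a₂, deq⟩
    obtain ⟨g, hg⟩ := hdvd
    have hq : q = ι g := by
      have : ι (X 0) ^ n * q = ι (X 0) ^ n * ι g := by
        rw [← ha₁, hg, map_mul, map_pow]
      exact (mul_left_cancel₀ (pow_ne_zero n hx0ne) this)
    have hDg : D g = 0 := by
      have hDa₁ : D a₁ = 0 := hDA a₁ ha₁S
      rw [hg, D.leibniz, Derivation.leibniz_pow, hX0, smul_zero, smul_zero, smul_zero,
        add_zero, smul_eq_mul] at hDa₁
      have hX0n : (X 0 : MvPolynomial (Fin 7) k) ^ n ≠ 0 :=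
        pow_ne_zero n (X_ne_zero 0)
      exact (mul_eq_zero.mp hDa₁).resolve_left hX0n
    exact ⟨g, hDg, hq.symm⟩
end

section
/- Let k be an algebraically closed field of characteristic zero, let a, b ≥ 1 be integers, let B = k[x₁, x₂, x₃, y₁, y₂, y₃, v] be the polynomial ring in seven variables, and let D be the unique k-derivation of B with D(xᵢ) = 0 for i = 1, 2, 3, D(yᵢ) = xᵢ^a for i = 1, 2, 3, and D(v) = (y₁y₂y₃)^b. Then the kernel of D is contained in k[y₁, y₂, y₃] ⊕ (x₁, x₂, x₃)B: for every f ∈ B with D(f) = 0 there exists a polynomial p ∈ B lying in the subalgebra generated by y₁, y₂, y₃ such that f − p lies in the ideal of B generated by x₁, x₂, x₃. -/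
open MvPolynomial

section Aux

variable {k : Type*} [Field k]

/-- The algebra map setting `x₁, x₂, x₃` to zero. -/
noncomputable def newExamplePhi (k : Type*) [Field k] :
    MvPolynomial (Fin 7) k →ₐ[k] MvPolynomial (Fin 7) k :=
  aeval ![0, 0, 0, X 3, X 4, X 5, X 6]

lemma newExamplePhi_X (n : Fin 7) :
    newExamplePhi k (X n) = (![0, 0, 0, X 3, X 4, X 5, X 6] : Fin 7 → MvPolynomial (Fin 7) k) n :=
  aeval_X _ n

lemma newExample_sub_phi_mem (f : MvPolynomial (Fin 7) k) :
    f - newExamplePhi k f ∈ Ideal.span {(X 0 : MvPolynomial (Fin 7) k), X 1, X 2} := by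
  induction f using MvPolynomial.induction_on with
  | C a => simp [newExamplePhi]
  | add p q hp hq =>
      have h : p + q - newExamplePhi k (p + q)
          = (p - newExamplePhi k p) + (q - newExamplePhi k q) := by
        rw [map_add]; ring
      rw [h]; exact add_mem hp hq
  | mul_X p n hp =>
      rw [map_mul, newExamplePhi_X]
      have hm0 : (X 0 : MvPolynomial (Fin 7) k) ∈
          Ideal.span {(X 0 : MvPolynomial (Fin 7) k), X 1, X 2} :=
        Ideal.subset_span (Or.inl rfl)
      have hm1 : (X 1 : MvPolynomial (Fin 7) k) ∈
          Ideal.span {(X 0 : MvPolynomial (Fin 7) k), X 1, X 2} :=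
        Ideal.subset_span (Or.inr (Or.inl rfl))
      have hm2 : (X 2 : MvPolynomial (Fin 7) k) ∈
          Ideal.span {(X 0 : MvPolynomial (Fin 7) k), X 1, X 2} :=
        Ideal.subset_span (Or.inr (Or.inr rfl))
      fin_cases n
      · show p * X 0 - newExamplePhi k p * 0 ∈ _
        rw [mul_zero, sub_zero]
        exact Ideal.mul_mem_left _ p hm0
      · show p * X 1 - newExamplePhi k p * 0 ∈ _
        rw [mul_zero, sub_zero]
        exact Ideal.mul_mem_left _ p hm1
      · show p * X 2 - newExamplePhi k p * 0 ∈ _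
        rw [mul_zero, sub_zero]
        exact Ideal.mul_mem_left _ p hm2
      · show p * X 3 - newExamplePhi k p * X 3 ∈ _
        rw [show p * X 3 - newExamplePhi k p * X 3 = (p - newExamplePhi k p) * X 3 by ring]
        exact Ideal.mul_mem_right _ _ hp
      · show p * X 4 - newExamplePhi k p * X 4 ∈ _
        rw [show p * X 4 - newExamplePhi k p * X 4 = (p - newExamplePhi k p) * X 4 by ring]
        exact Ideal.mul_mem_right _ _ hp
      · show p * X 5 - newExamplePhi k p * X 5 ∈ _
        rw [show p * X 5 - newExamplePhi k p * X 5 = (p - newExamplePhi k p) * X 5 by ring]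
        exact Ideal.mul_mem_right _ _ hp
      · show p * X 6 - newExamplePhi k p * X 6 ∈ _
        rw [show p * X 6 - newExamplePhi k p * X 6 = (p - newExamplePhi k p) * X 6 by ring]
        exact Ideal.mul_mem_right _ _ hp

lemma newExample_phi_comm (a b : ℕ) (ha : 1 ≤ a) (f : MvPolynomial (Fin 7) k) :
    newExamplePhi k
        (mkDerivation k
          ![0, 0, 0, (X 0) ^ a, (X 1) ^ a, (X 2) ^ a, (X 3 * X 4 * X 5) ^ b] f)
      = ((X 3 * X 4 * X 5 : MvPolynomial (Fin 7) k) ^ b)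
          * pderiv (6 : Fin 7) (newExamplePhi k f) := by
  set D := mkDerivation k
    ![0, 0, 0, (X 0 : MvPolynomial (Fin 7) k) ^ a, (X 1) ^ a, (X 2) ^ a,
      (X 3 * X 4 * X 5) ^ b] with hD
  have e0 : newExamplePhi k (X 0 : MvPolynomial (Fin 7) k) = 0 := newExamplePhi_X 0
  have e1 : newExamplePhi k (X 1 : MvPolynomial (Fin 7) k) = 0 := newExamplePhi_X 1
  have e2 : newExamplePhi k (X 2 : MvPolynomial (Fin 7) k) = 0 := newExamplePhi_X 2
  have e3 : newExamplePhi k (X 3 : MvPolynomial (Fin 7) k) = X 3 := newExamplePhi_X 3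
  have e4 : newExamplePhi k (X 4 : MvPolynomial (Fin 7) k) = X 4 := newExamplePhi_X 4
  have e5 : newExamplePhi k (X 5 : MvPolynomial (Fin 7) k) = X 5 := newExamplePhi_X 5
  have e6 : newExamplePhi k (X 6 : MvPolynomial (Fin 7) k) = X 6 := newExamplePhi_X 6
  have hbase : ∀ n : Fin 7, newExamplePhi k (D (X n))
      = ((X 3 * X 4 * X 5 : MvPolynomial (Fin 7) k) ^ b)
          * pderiv (6 : Fin 7) (newExamplePhi k (X n)) := by
    intro n
    have hzero : (0 : MvPolynomial (Fin 7) k) ^ a = 0 := zero_pow (by omega)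
    rw [hD, mkDerivation_X]
    fin_cases n
    · show newExamplePhi k 0 = _ * pderiv (6 : Fin 7) (newExamplePhi k (X 0))
      rw [map_zero, e0, map_zero, mul_zero]
    · show newExamplePhi k 0 = _ * pderiv (6 : Fin 7) (newExamplePhi k (X 1))
      rw [map_zero, e1, map_zero, mul_zero]
    · show newExamplePhi k 0 = _ * pderiv (6 : Fin 7) (newExamplePhi k (X 2))
      rw [map_zero, e2, map_zero, mul_zero]
    · show newExamplePhi k (X 0 ^ a) = _ * pderiv (6 : Fin 7) (newExamplePhi k (X 3))
      rw [map_pow, e0, e3, pderiv_X_of_ne (by decide), mul_zero, hzero]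
    · show newExamplePhi k (X 1 ^ a) = _ * pderiv (6 : Fin 7) (newExamplePhi k (X 4))
      rw [map_pow, e1, e4, pderiv_X_of_ne (by decide), mul_zero, hzero]
    · show newExamplePhi k (X 2 ^ a) = _ * pderiv (6 : Fin 7) (newExamplePhi k (X 5))
      rw [map_pow, e2, e5, pderiv_X_of_ne (by decide), mul_zero, hzero]
    · show newExamplePhi k ((X 3 * X 4 * X 5) ^ b)
          = _ * pderiv (6 : Fin 7) (newExamplePhi k (X 6))
      rw [e6, pderiv_X_self, mul_one, map_pow, map_mul, map_mul, e3, e4, e5]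
  induction f using MvPolynomial.induction_on with
  | C c =>
      rw [derivation_C, map_zero, show newExamplePhi k (C c) = C c from aeval_C _ c,
        pderiv_C, mul_zero]
  | add p q hp hq =>
      rw [map_add, map_add, map_add, map_add, hp, hq]; ring
  | mul_X p n hp =>
      rw [Derivation.leibniz, map_add, smul_eq_mul, smul_eq_mul, map_mul, map_mul,
        map_mul, Derivation.leibniz, smul_eq_mul, smul_eq_mul, hp, hbase]
      ring

lemma coeff_pderiv' {σ : Type*} [DecidableEq σ] {R : Type*} [CommSemiring R]
    (i : σ) (g : MvPolynomial σ R) (t : σ →₀ ℕ) :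
    coeff t (pderiv i g) = (t i + 1 : ℕ) * coeff (t + Finsupp.single i 1) g := by
  induction g using MvPolynomial.induction_on' with
  | add p q hp hq => rw [map_add, coeff_add, coeff_add, hp, hq]; ring
  | monomial s c =>
      rw [pderiv_monomial, coeff_monomial, coeff_monomial]
      by_cases hs : s = t + Finsupp.single i 1
      · subst hs
        rw [if_pos (add_tsub_cancel_right _ _), if_pos rfl, Finsupp.add_apply,
          Finsupp.single_eq_same, mul_comm]
      · rw [if_neg hs, mul_zero]
        by_cases hsi : s i = 0
        · simp [hsi]
        · have hle : Finsupp.single i 1 ≤ s := by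
            rw [Finsupp.single_le_iff]; omega
          have : s - Finsupp.single i 1 ≠ t := by
            intro h
            apply hs
            rw [← h, tsub_add_cancel_of_le hle]
          rw [if_neg this]

lemma not_mem_vars_of_pderiv_eq_zero {σ : Type*} [DecidableEq σ] {R : Type*}
    [CommRing R] [CharZero R] [NoZeroDivisors R] {g : MvPolynomial σ R} {i : σ}
    (h : pderiv i g = 0) : i ∉ g.vars := by
  intro hi
  rw [mem_vars] at hi
  obtain ⟨m, hm, him⟩ := hi
  have hmi : m i ≠ 0 := Finsupp.mem_support_iff.mp him
  have hle : Finsupp.single i 1 ≤ m := by rw [Finsupp.single_le_iff]; omega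
  have h0 : coeff (m - Finsupp.single i 1) (pderiv i g) = 0 := by rw [h]; simp
  rw [coeff_pderiv', tsub_add_cancel_of_le hle] at h0
  rcases mul_eq_zero.mp h0 with h1 | h1
  · exact (Nat.cast_ne_zero (R := R)).mpr (Nat.succ_ne_zero _) h1
  · exact Finsupp.mem_support_iff.mp hm h1

end Aux

/-- Lemma 5.1 of the paper: in the new seven-dimensional example (variables `x₁ = X 0`,
`x₂ = X 1`, `x₃ = X 2`, `y₁ = X 3`, `y₂ = X 4`, `y₃ = X 5`, `v = X 6`), every invariant is a
polynomial in `y₁, y₂, y₃` plus an element of the ideal `(x₁, x₂, x₃)`: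
`ker D ⊆ k[y₁,y₂,y₃] ⊕ (x₁,x₂,x₃)B`. -/
theorem new_example_invariants_in_ky_plus_ideal
    {k : Type*} [Field k] [IsAlgClosed k] [CharZero k]
    (a b : ℕ) (ha : 1 ≤ a) (hb : 1 ≤ b)
    (D : Derivation k (MvPolynomial (Fin 7) k) (MvPolynomial (Fin 7) k))
    (hD : D = mkDerivation k
      ![0, 0, 0, (X 0) ^ a, (X 1) ^ a, (X 2) ^ a, (X 3 * X 4 * X 5) ^ b]) :
    ∀ f : MvPolynomial (Fin 7) k, D f = 0 →
      ∃ p ∈ Algebra.adjoin k {(X 3 : MvPolynomial (Fin 7) k), X 4, X 5},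
        f - p ∈ Ideal.span {(X 0 : MvPolynomial (Fin 7) k), X 1, X 2} := by
  intro f hf
  refine ⟨newExamplePhi k f, ?_, newExample_sub_phi_mem f⟩
  -- the image under `φ` of an invariant has zero `v`-derivative
  have hcomm := newExample_phi_comm a b ha f
  rw [← hD, hf, map_zero] at hcomm
  have hc : ((X 3 * X 4 * X 5 : MvPolynomial (Fin 7) k) ^ b) ≠ 0 := by
    apply pow_ne_zero
    have h3 : (X 3 : MvPolynomial (Fin 7) k) ≠ 0 := X_ne_zero _
    have h4 : (X 4 : MvPolynomial (Fin 7) k) ≠ 0 := X_ne_zero _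
    have h5 : (X 5 : MvPolynomial (Fin 7) k) ≠ 0 := X_ne_zero _
    exact mul_ne_zero (mul_ne_zero h3 h4) h5
  have hpd : pderiv (6 : Fin 7) (newExamplePhi k f) = 0 := by
    rcases mul_eq_zero.mp hcomm.symm with h | h
    · exact absurd h hc
    · exact h
  have h6 : (6 : Fin 7) ∉ (newExamplePhi k f).vars := not_mem_vars_of_pderiv_eq_zero hpd
  -- `φ f` only involves the variables `3, 4, 5, 6`
  have hsupp : newExamplePhi k f ∈ supported k ({3, 4, 5, 6} : Set (Fin 7)) := by
    have h1 : newExamplePhi k f ∈ (Algebra.adjoin k (Set.range X)).map (newExamplePhi k) :=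
      ⟨f, by rw [adjoin_range_X]; trivial, rfl⟩
    rw [AlgHom.map_adjoin] at h1
    refine Algebra.adjoin_le ?_ h1
    rintro _ ⟨_, ⟨i, rfl⟩, rfl⟩
    rw [SetLike.mem_coe, newExamplePhi_X]
    fin_cases i
    · exact (supported k _).zero_mem
    · exact (supported k _).zero_mem
    · exact (supported k _).zero_mem
    · exact X_mem_supported.mpr (by simp)
    · exact X_mem_supported.mpr (by simp)
    · exact X_mem_supported.mpr (by simp)
    · exact X_mem_supported.mpr (by simp)
  rw [mem_supported] at hsupp
  -- combine: the variables lie in `{3, 4, 5}`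
  have hvars : ↑(newExamplePhi k f).vars ⊆ ({3, 4, 5} : Set (Fin 7)) := by
    intro x hx
    have hx4 := hsupp hx
    have hx6 : x ≠ 6 := fun h => h6 (h ▸ hx)
    simp only [Set.mem_insert_iff, Set.mem_singleton_iff] at hx4 ⊢
    rcases hx4 with h | h | h | h
    · exact Or.inl h
    · exact Or.inr (Or.inl h)
    · exact Or.inr (Or.inr h)
    · exact absurd h hx6
  have : newExamplePhi k f ∈ supported k ({3, 4, 5} : Set (Fin 7)) :=
    mem_supported.mpr hvars
  rw [supported_eq_adjoin_X] at this
  convert this using 2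
  rw [Set.image_insert_eq, Set.image_insert_eq, Set.image_singleton]
end

section
/- Let k be an algebraically closed field of characteristic zero, let a, b ≥ 1 be integers, let R = k[x, y, z, u, w] be the polynomial ring in five variables, and let Δ be the unique k-derivation of R with Δ(x) = 0, Δ(y) = x^a, Δ(z) = y, Δ(u) = z, Δ(w) = u^b. Then the kernel of Δ is contained in k ⊕ (x, y, z)R: for every f ∈ R with Δ(f) = 0 there exists a constant c ∈ k such that f − c lies in the ideal of R generated by x, y, z. -/
open MvPolynomial

section MaubachAux

private lemma maubach_coeff_pderiv {k : Type*} [CommRing k] (i : Fin 5) (d : Fin 5 →₀ ℕ)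
    (p : MvPolynomial (Fin 5) k) :
    coeff d (pderiv i p) = ((d i + 1 : ℕ) : k) * coeff (d + Finsupp.single i 1) p := by
  induction p using MvPolynomial.induction_on' with
  | monomial s r =>
    rw [pderiv_monomial, coeff_monomial, coeff_monomial]
    by_cases h : s = d + Finsupp.single i 1
    · subst h
      rw [if_pos (add_tsub_cancel_right _ _), if_pos rfl]
      simp [mul_comm]
    · rw [if_neg h]
      by_cases h2 : s - Finsupp.single i 1 = d
      · rcases Nat.eq_zero_or_pos (s i) with h3 | h3
        · simp [h3]
        · exfalso
          apply h
          rw [← h2]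
          ext j
          simp only [Finsupp.add_apply, Finsupp.tsub_apply, Finsupp.single_apply]
          by_cases hj : i = j
          · subst hj; rw [if_pos rfl]; omega
          · simp [hj]
      · rw [if_neg h2, mul_zero]
  | add p q hp hq => simp [hp, hq, mul_add]

private noncomputable def MM (α β γ δ : ℕ) : Fin 5 →₀ ℕ :=
  Finsupp.single 1 α + Finsupp.single 2 β + Finsupp.single 3 γ + Finsupp.single 4 δ

private lemma MM_apply0 (α β γ δ : ℕ) : MM α β γ δ 0 = 0 := by
  simp [MM, Finsupp.single_apply, show (1:Fin 5) ≠ 0 by decide, show (2:Fin 5) ≠ 0 by decide,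
    show (3:Fin 5) ≠ 0 by decide, show (4:Fin 5) ≠ 0 by decide]

private lemma MM_apply1 (α β γ δ : ℕ) : MM α β γ δ 1 = α := by
  simp [MM, Finsupp.single_apply, show (2:Fin 5) ≠ 1 by decide,
    show (3:Fin 5) ≠ 1 by decide, show (4:Fin 5) ≠ 1 by decide]

private lemma MM_apply2 (α β γ δ : ℕ) : MM α β γ δ 2 = β := by
  simp [MM, Finsupp.single_apply, show (1:Fin 5) ≠ 2 by decide,
    show (3:Fin 5) ≠ 2 by decide, show (4:Fin 5) ≠ 2 by decide]

private lemma MM_apply3 (α β γ δ : ℕ) : MM α β γ δ 3 = γ := by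
  simp [MM, Finsupp.single_apply, show (1:Fin 5) ≠ 3 by decide,
    show (2:Fin 5) ≠ 3 by decide, show (4:Fin 5) ≠ 3 by decide]

private lemma MM_apply4 (α β γ δ : ℕ) : MM α β γ δ 4 = δ := by
  simp [MM, Finsupp.single_apply, show (1:Fin 5) ≠ 4 by decide,
    show (2:Fin 5) ≠ 4 by decide, show (3:Fin 5) ≠ 4 by decide]

private lemma MM_ext (d : Fin 5 →₀ ℕ) :
    d = MM (d 1) (d 2) (d 3) (d 4) + Finsupp.single 0 (d 0) := by
  ext j
  fin_cases j <;>
    simp [MM_apply0, MM_apply1, MM_apply2, MM_apply3, MM_apply4, Finsupp.single_apply,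
      Finsupp.add_apply]

private lemma MM_sub1 (α β γ δ : ℕ) : MM α β γ δ - Finsupp.single 1 1 = MM (α-1) β γ δ := by
  ext j
  rw [Finsupp.tsub_apply]
  fin_cases j <;> simp [MM, Finsupp.single_apply, Finsupp.add_apply]

private lemma MM_sub2 (α β γ δ : ℕ) : MM α β γ δ - Finsupp.single 2 1 = MM α (β-1) γ δ := by
  ext j
  rw [Finsupp.tsub_apply]
  fin_cases j <;> simp [MM, Finsupp.single_apply, Finsupp.add_apply]

private lemma MM_sub3 (c α β γ δ : ℕ) : MM α β γ δ - Finsupp.single 3 c = MM α β (γ-c) δ := by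
  ext j
  rw [Finsupp.tsub_apply]
  fin_cases j <;> simp [MM, Finsupp.single_apply, Finsupp.add_apply]

private lemma MM_add2 (α β γ δ : ℕ) : MM α β γ δ + Finsupp.single 2 1 = MM α (β+1) γ δ := by
  ext j
  rw [Finsupp.add_apply]
  fin_cases j <;> simp [MM, Finsupp.single_apply, Finsupp.add_apply]

private lemma MM_add3 (α β γ δ : ℕ) : MM α β γ δ + Finsupp.single 3 1 = MM α β (γ+1) δ := by
  ext j
  rw [Finsupp.add_apply]
  fin_cases j <;> simp [MM, Finsupp.single_apply, Finsupp.add_apply]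

private lemma MM_add4 (α β γ δ : ℕ) : MM α β γ δ + Finsupp.single 4 1 = MM α β γ (δ+1) := by
  ext j
  rw [Finsupp.add_apply]
  fin_cases j <;> simp [MM, Finsupp.single_apply, Finsupp.add_apply]

private lemma MM_zero : MM 0 0 0 0 = 0 := by
  simp [MM]

private lemma maubach_rep {k : Type*} [CommRing k] (a b : ℕ) (p : MvPolynomial (Fin 5) k) :
    mkDerivation k ![0, (X 0) ^ a, X 1, X 2, (X 3) ^ b] p =
      (X 0)^a * pderiv 1 p + X 1 * pderiv 2 p + X 2 * pderiv 3 p + (X 3)^b * pderiv 4 p := by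
  have h : mkDerivation k ![0, (X 0) ^ a, X 1, X 2, (X 3) ^ b] =
      (((X 0 : MvPolynomial (Fin 5) k))^a •
          (pderiv 1 : Derivation k (MvPolynomial (Fin 5) k) (MvPolynomial (Fin 5) k))
        + (X 1 : MvPolynomial (Fin 5) k) •
          (pderiv 2 : Derivation k (MvPolynomial (Fin 5) k) (MvPolynomial (Fin 5) k))
        + (X 2 : MvPolynomial (Fin 5) k) •
          (pderiv 3 : Derivation k (MvPolynomial (Fin 5) k) (MvPolynomial (Fin 5) k))
        + ((X 3 : MvPolynomial (Fin 5) k))^b •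
          (pderiv 4 : Derivation k (MvPolynomial (Fin 5) k) (MvPolynomial (Fin 5) k))) := by
    apply derivation_ext
    intro i
    fin_cases i <;>
      simp [mkDerivation_X, Derivation.add_apply, Derivation.smul_apply, smul_eq_mul,
        pderiv_X, Pi.single_apply]
  rw [h]
  simp [Derivation.add_apply, Derivation.smul_apply, smul_eq_mul]

end MaubachAux

lemma key {k : Type*} [Field k] [CharZero k] (b : ℕ) (hb : 1 ≤ b)
    (G : ℕ → ℕ → ℕ → ℕ → k)
    (hrel : ∀ α β γ δ : ℕ,
      (if 1 ≤ α then ((β + 1 : ℕ) : k) * G (α-1) (β+1) γ δ else 0)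
      + (if 1 ≤ β then ((γ + 1 : ℕ) : k) * G α (β-1) (γ+1) δ else 0)
      + (if b ≤ γ then ((δ + 1 : ℕ) : k) * G α β (γ-b) (δ+1) else 0) = 0) :
    ∀ i j : ℕ, ¬(i = 0 ∧ j = 0) → G 0 0 i j = 0 := by
  intro e j hij
  by_cases hj : 1 ≤ j
  · -- case j ≥ 1 : use relation at (0, 0, e+b, j-1)
    have h := hrel 0 0 (e+b) (j-1)
    rw [if_neg (by omega), if_neg (by omega), if_pos (by omega : b ≤ e + b)] at h
    rw [show e + b - b = e by omega, show j - 1 + 1 = j by omega] at h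
    have hc : ((j : ℕ) : k) ≠ 0 := Nat.cast_ne_zero.2 (by omega)
    have h' : ((j : ℕ) : k) * G 0 0 e j = 0 := by linear_combination h
    exact (mul_eq_zero.mp h').resolve_left hc
  · -- case j = 0, e ≥ 1
    obtain rfl : j = 0 := by omega
    have he : 1 ≤ e := by omega
    set m := e / (b+1) with hm
    set r := e % (b+1) with hr
    have hmr : m * (b+1) + r = e := by rw [hm, hr, Nat.mul_comm]; exact Nat.div_add_mod e (b+1)
    have hrlt : r < b + 1 := Nat.mod_lt _ (by omega)
    -- the two diagonal coefficient families
    set A0 : ℕ → k := fun δ => G 0 δ (e - δ*(b+1)) δ with hA0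
    set A1 : ℕ → k := fun δ => G 1 (δ-2) (e - δ*(b+1) + 1) δ with hA1
    -- column-0 relations
    have R0a : ∀ δ : ℕ, δ*(b+1) + 1 ≤ e → e < (δ+1)*(b+1) →
        ((e - δ*(b+1) : ℕ) : k) * A0 δ = 0 := by
      intro δ h1 h2
      have hlin : (δ+1)*(b+1) = δ*(b+1) + (b+1) := by ring
      have h := hrel 0 (δ+1) (e - δ*(b+1) - 1) δ
      rw [if_neg (by omega), if_pos (by omega), if_neg (by omega)] at h
      rw [show e - δ*(b+1) - 1 + 1 = e - δ*(b+1) by omega, show δ + 1 - 1 = δ by omega] at h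
      simpa [hA0] using h
    have R0b : ∀ δ : ℕ, (δ+1)*(b+1) ≤ e →
        ((e - δ*(b+1) : ℕ) : k) * A0 δ + ((δ + 1 : ℕ) : k) * A0 (δ+1) = 0 := by
      intro δ h1
      have hlin : (δ+1)*(b+1) = δ*(b+1) + (b+1) := by ring
      have h := hrel 0 (δ+1) (e - δ*(b+1) - 1) δ
      rw [if_neg (by omega), if_pos (by omega), if_pos (by omega)] at h
      rw [show e - δ*(b+1) - 1 + 1 = e - δ*(b+1) by omega, show δ + 1 - 1 = δ by omega,
        show e - δ*(b+1) - 1 - b = e - (δ+1)*(b+1) by omega] at h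
      simpa [hA0] using h
    by_cases hdvd : r = 0
    · -- divisible case : e = m*(b+1), m ≥ 1
      have hme : m * (b+1) = e := by omega
      have hm1 : 1 ≤ m := by
        rcases Nat.eq_zero_or_pos m with h | h
        · rw [h, zero_mul] at hme; omega
        · exact h
      -- the products P
      set P : ℕ → ℕ := fun δ => ∏ t ∈ Finset.range δ, (e - t*(b+1)) with hP
      have hPsucc : ∀ δ, P (δ+1) = P δ * (e - δ*(b+1)) := by
        intro δ; rw [hP]; exact Finset.prod_range_succ _ _
      have hPpos : ∀ δ, δ ≤ m → 0 < P δ := by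
        intro δ hδ
        rw [hP]
        apply Finset.prod_pos
        intro t ht
        have h1 : t < m := lt_of_lt_of_le (Finset.mem_range.mp ht) hδ
        have h2 : t * (b+1) < m * (b+1) :=
          (Nat.mul_lt_mul_right (by omega : 0 < b + 1)).mpr h1
        omega
      -- chain for column 0
      have HP : ∀ δ, δ ≤ m → ((Nat.factorial δ : ℕ) : k) * A0 δ =
          (-1 : k)^δ * ((P δ : ℕ) : k) * A0 0 := by
        intro δ
        induction δ with
        | zero => intro _; simp [hP, Nat.factorial]
        | succ δ ih =>
          intro hδ
          have hih := ih (by omega)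
          have hrec := R0b δ (by calc (δ+1)*(b+1) ≤ m*(b+1) := Nat.mul_le_mul_right _ (by omega)
                                  _ = e := hme)
          have hfact : ((Nat.factorial (δ+1) : ℕ) : k)
              = ((δ + 1 : ℕ) : k) * ((Nat.factorial δ : ℕ) : k) := by
            rw [Nat.factorial_succ]; push_cast; ring
          rw [hfact, hPsucc]
          push_cast at hih hrec ⊢
          linear_combination (Nat.factorial δ : k) * hrec - ((e - δ*(b+1) : ℕ) : k) * hih
      -- column-1 coefficients and relations
      rcases Nat.lt_or_ge m 2 with hm2 | hm2
      · -- m = 1 : e = b+1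
        have hme1 : e = b + 1 := by
          have h1 : m = 1 := by omega
          rw [← hme, h1, one_mul]
        have h := hrel 1 0 (e - 1*(b+1)) 1
        rw [if_pos (by omega), if_neg (by omega), if_neg (by omega)] at h
        have hA01 : A0 1 = 0 := by
          have h' : ((0 + 1 : ℕ) : k) * A0 1 = 0 := by
            rw [hA0]; simpa using h
          simpa using h'
        have h0 := R0b 0 (by omega)
        rw [hA01, mul_zero, add_zero] at h0
        have hc : ((e - 0*(b+1) : ℕ) : k) ≠ 0 := Nat.cast_ne_zero.2 (by omega)
        have := (mul_eq_zero.mp h0).resolve_left hc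
        simpa [hA0] using this
      · -- m ≥ 2
        -- the S sequence
        set S : ℕ → ℕ := fun n =>
          Nat.rec 0 (fun δ ih => δ * P δ + (e - δ*(b+1) + 1) * ih) n with hS
        have hSsucc : ∀ δ, S (δ+1) = δ * P δ + (e - δ*(b+1) + 1) * S δ := fun _ => rfl
        -- base relation at δ = 1
        have hT1 : A0 1 + ((2 : ℕ) : k) * A1 2 = 0 := by
          have hle : 2*(b+1) ≤ e := by
            calc 2*(b+1) ≤ m*(b+1) := Nat.mul_le_mul_right _ hm2
              _ = e := hme
          have h := hrel 1 0 (e - 1*(b+1)) 1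
          rw [if_pos (by omega), if_neg (by omega), if_pos (by omega)] at h
          rw [show e - 1*(b+1) - b = e - 2*(b+1) + 1 by omega] at h
          have h' : ((0+1 : ℕ) : k) * A0 1 + ((1+1 : ℕ) : k) * A1 2 = 0 := by
            rw [hA0, hA1]; simpa using h
          simpa using h'
        -- generic relation at 2 ≤ δ ≤ m-1
        have hT : ∀ δ : ℕ, 2 ≤ δ → δ + 1 ≤ m →
            ((δ : ℕ) : k) * A0 δ + (((e - δ*(b+1) : ℕ) : k) + 1) * A1 δ
              + ((δ + 1 : ℕ) : k) * A1 (δ+1) = 0 := by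
          intro δ hδ2 hδm
          have hle : (δ+1)*(b+1) ≤ e := by
            calc (δ+1)*(b+1) ≤ m*(b+1) := Nat.mul_le_mul_right _ hδm
              _ = e := hme
          have hlin : (δ+1)*(b+1) = δ*(b+1) + (b+1) := by ring
          have h := hrel 1 (δ-1) (e - δ*(b+1)) δ
          rw [if_pos (by omega), if_pos (by omega), if_pos (by omega)] at h
          rw [show δ - 1 + 1 = δ by omega, show δ - 1 - 1 = δ - 2 by omega,
            show e - δ*(b+1) - b = e - (δ+1)*(b+1) + 1 by omega,
            show δ - 1 = (δ+1) - 2 by omega] at h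
          have h' : ((δ - 1 + 1 : ℕ) : k) * A0 δ
              + ((e - δ*(b+1) + 1 : ℕ) : k) * A1 δ
              + ((δ + 1 : ℕ) : k) * A1 (δ+1) = 0 := by
            rw [hA0, hA1]
            rw [show δ - 1 + 1 = δ by omega]
            simpa using h
          rw [show δ - 1 + 1 = δ by omega] at h'
          push_cast at h' ⊢
          linear_combination h'
        -- final relation at δ = m
        have hTm : ((m : ℕ) : k) * A0 m + A1 m = 0 := by
          have h := hrel 1 (m-1) (e - m*(b+1)) m
          rw [if_pos (by omega), if_pos (by omega), if_neg (by omega)] at h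
          rw [show m - 1 + 1 = m by omega, show m - 1 - 1 = m - 2 by omega] at h
          have h' : ((m - 1 + 1 : ℕ) : k) * A0 m
              + ((e - m*(b+1) + 1 : ℕ) : k) * A1 m = 0 := by
            rw [hA0, hA1]
            rw [show m - 1 + 1 = m by omega]
            simpa using h
          rw [show m - 1 + 1 = m by omega, show e - m*(b+1) = 0 by omega] at h'
          push_cast at h' ⊢
          linear_combination h'
        -- chain for column 1
        have HS : ∀ δ, 2 ≤ δ → δ ≤ m → ((Nat.factorial δ : ℕ) : k) * A1 δ =
            (-1 : k)^δ * ((S δ : ℕ) : k) * A0 0 := by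
          intro δ hδ2
          induction δ, hδ2 using Nat.le_induction with
          | base =>
            intro _
            have hHP1 := HP 1 (by omega)
            have hS2 : S 2 = 1 * P 1 + (e - 1*(b+1) + 1) * S 1 := hSsucc 1
            have hS1 : S 1 = 0 * P 0 + (e - 0*(b+1) + 1) * S 0 := hSsucc 0
            have hS0 : S 0 = 0 := rfl
            have hP1 : P 1 = e - 0*(b+1) := by
              rw [hPsucc 0, show P 0 = 1 by simp [hP], one_mul]
            rw [hS2, hS1, hS0]
            rw [show (Nat.factorial 2 : ℕ) = 2 by rfl]
            rw [show (Nat.factorial 1 : ℕ) = 1 by rfl, hP1] at hHP1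
            rw [hP1]
            push_cast at hHP1 hT1 ⊢
            linear_combination hT1 - hHP1
          | succ δ hδ2 ih =>
            intro hδm
            have hih := ih (by omega)
            have hHPδ := HP δ (by omega)
            have hTδ := hT δ hδ2 hδm
            rw [hSsucc δ, Nat.factorial_succ]
            push_cast at hih hHPδ hTδ ⊢
            linear_combination (Nat.factorial δ : k) * hTδ - (δ : k) * hHPδ
              - (((e - δ*(b+1) : ℕ) : k) + 1) * hih
        -- put it together
        have hHPm := HP m (le_refl m)
        have hHSm := HS m hm2 (le_refl m)
        have hzero : (-1 : k)^m * (((m * P m + S m : ℕ) : k) * A0 0) = 0 := by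
          push_cast at hHPm hHSm ⊢
          linear_combination (Nat.factorial m : k) * hTm - (m : k) * hHPm - hHSm
        have h1 : ((-1 : k)^m) ≠ 0 := by
          apply pow_ne_zero; norm_num
        have h2 := (mul_eq_zero.mp hzero).resolve_left h1
        have hpos : 0 < m * P m + S m :=
          Nat.lt_of_lt_of_le (Nat.mul_pos (by omega) (hPpos m (le_refl m))) (Nat.le_add_right _ _)
        have hc : ((m * P m + S m : ℕ) : k) ≠ 0 := Nat.cast_ne_zero.2 (by omega)
        have := (mul_eq_zero.mp h2).resolve_left hc
        simpa [hA0] using this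
    · -- nondivisible case
      have hr1 : 1 ≤ r := by omega
      have hdesc : ∀ t, t ≤ m → A0 (m - t) = 0 := by
        intro t
        induction t with
        | zero =>
          intro _
          have hlin : (m+1)*(b+1) = m*(b+1) + (b+1) := by ring
          have h := R0a m (by omega) (by omega)
          rw [show m - 0 = m by omega]
          have hc : ((e - m*(b+1) : ℕ) : k) ≠ 0 := Nat.cast_ne_zero.2 (by omega)
          exact (mul_eq_zero.mp h).resolve_left hc
        | succ t ih =>
          intro ht
          have hih := ih (by omega)
          set δ := m - (t+1) with hδ
          have hδ1 : δ + 1 = m - t := by omega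
          have hlin : (δ+1)*(b+1) = δ*(b+1) + (b+1) := by ring
          have hlin2 : (δ+1)*(b+1) ≤ m * (b+1) :=
            Nat.mul_le_mul_right _ (by omega)
          have h := R0b δ (by omega)
          rw [hδ1, hih, mul_zero, add_zero] at h
          have hc : ((e - δ*(b+1) : ℕ) : k) ≠ 0 := Nat.cast_ne_zero.2 (by omega)
          exact (mul_eq_zero.mp h).resolve_left hc
      have := hdesc m (le_refl m)
      rw [show m - m = 0 by omega] at this
      simpa [hA0] using this
private lemma maubach_hrel {k : Type*} [CommRing k] (a b : ℕ) (ha : 1 ≤ a)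
    (f : MvPolynomial (Fin 5) k)
    (hf : (X 0 : MvPolynomial (Fin 5) k)^a * pderiv 1 f + X 1 * pderiv 2 f
      + X 2 * pderiv 3 f + (X 3)^b * pderiv 4 f = 0)
    (α β γ δ : ℕ) :
    (if 1 ≤ α then ((β + 1 : ℕ) : k) * coeff (MM (α-1) (β+1) γ δ) f else 0)
    + (if 1 ≤ β then ((γ + 1 : ℕ) : k) * coeff (MM α (β-1) (γ+1) δ) f else 0)
    + (if b ≤ γ then ((δ + 1 : ℕ) : k) * coeff (MM α β (γ-b) (δ+1)) f else 0) = 0 := by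
  have hX1 : (X 1 : MvPolynomial (Fin 5) k) = monomial (Finsupp.single 1 1) 1 := by
    rw [← X_pow_eq_monomial, pow_one]
  have hX2 : (X 2 : MvPolynomial (Fin 5) k) = monomial (Finsupp.single 2 1) 1 := by
    rw [← X_pow_eq_monomial, pow_one]
  have h := congrArg (coeff (MM α β γ δ)) hf
  rw [coeff_add, coeff_add, coeff_add, coeff_zero] at h
  have hx : coeff (MM α β γ δ) ((X 0 : MvPolynomial (Fin 5) k)^a * pderiv 1 f) = 0 := by
    rw [X_pow_eq_monomial, coeff_monomial_mul', if_neg]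
    rw [Finsupp.single_le_iff, MM_apply0]
    omega
  have hy : coeff (MM α β γ δ) ((X 1 : MvPolynomial (Fin 5) k) * pderiv 2 f)
      = (if 1 ≤ α then ((β + 1 : ℕ) : k) * coeff (MM (α-1) (β+1) γ δ) f else 0) := by
    rw [hX1, coeff_monomial_mul']
    by_cases hα : 1 ≤ α
    · rw [if_pos (by rw [Finsupp.single_le_iff, MM_apply1]; exact hα), if_pos hα, one_mul,
        MM_sub1, maubach_coeff_pderiv, MM_apply2, MM_add2]
    · rw [if_neg (by rw [Finsupp.single_le_iff, MM_apply1]; exact hα), if_neg hα]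
  have hz : coeff (MM α β γ δ) ((X 2 : MvPolynomial (Fin 5) k) * pderiv 3 f)
      = (if 1 ≤ β then ((γ + 1 : ℕ) : k) * coeff (MM α (β-1) (γ+1) δ) f else 0) := by
    rw [hX2, coeff_monomial_mul']
    by_cases hβ : 1 ≤ β
    · rw [if_pos (by rw [Finsupp.single_le_iff, MM_apply2]; exact hβ), if_pos hβ, one_mul,
        MM_sub2, maubach_coeff_pderiv, MM_apply3, MM_add3]
    · rw [if_neg (by rw [Finsupp.single_le_iff, MM_apply2]; exact hβ), if_neg hβ]
  have hw : coeff (MM α β γ δ) ((X 3 : MvPolynomial (Fin 5) k)^b * pderiv 4 f)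
      = (if b ≤ γ then ((δ + 1 : ℕ) : k) * coeff (MM α β (γ-b) (δ+1)) f else 0) := by
    rw [X_pow_eq_monomial, coeff_monomial_mul']
    by_cases hγ : b ≤ γ
    · rw [if_pos (by rw [Finsupp.single_le_iff, MM_apply3]; exact hγ), if_pos hγ, one_mul,
        MM_sub3, maubach_coeff_pderiv, MM_apply4, MM_add4]
    · rw [if_neg (by rw [Finsupp.single_le_iff, MM_apply3]; exact hγ), if_neg hγ]
  rw [hx, hy, hz, hw, zero_add] at h
  exact h
/-- Lemma 5.2 of the paper: in the generalized Maubach example (variables `x = X 0`,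
`y = X 1`, `z = X 2`, `u = X 3`, `w = X 4`), every invariant is a constant plus an element of
the ideal `(x, y, z)`: `ker Δ ⊆ k ⊕ (x, y, z)R`. -/
theorem maubach_invariants_in_constants_plus_ideal
    {k : Type*} [Field k] [IsAlgClosed k] [CharZero k]
    (a b : ℕ) (ha : 1 ≤ a) (hb : 1 ≤ b)
    (Δ : Derivation k (MvPolynomial (Fin 5) k) (MvPolynomial (Fin 5) k))
    (hΔ : Δ = mkDerivation k ![0, (X 0) ^ a, X 1, X 2, (X 3) ^ b]) :
    ∀ f : MvPolynomial (Fin 5) k, Δ f = 0 →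
      ∃ c : k, f - C c ∈ Ideal.span {(X 0 : MvPolynomial (Fin 5) k), X 1, X 2} := by
  intro f hf
  have hsum : (X 0 : MvPolynomial (Fin 5) k)^a * pderiv 1 f + X 1 * pderiv 2 f
      + X 2 * pderiv 3 f + (X 3)^b * pderiv 4 f = 0 := by
    rw [← maubach_rep a b f, ← hΔ, hf]
  have hkey := key b hb (fun α β γ δ => coeff (MM α β γ δ) f)
    (fun α β γ δ => maubach_hrel a b ha f hsum α β γ δ)
  refine ⟨coeff 0 f, ?_⟩
  have himg : ({(X 0 : MvPolynomial (Fin 5) k), X 1, X 2} : Set (MvPolynomial (Fin 5) k))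
      = MvPolynomial.X '' ({0, 1, 2} : Set (Fin 5)) := by
    simp [Set.image_insert_eq]
  rw [himg, mem_ideal_span_X_image]
  intro d hd
  by_contra hcon
  push_neg at hcon
  have h0 : d 0 = 0 := hcon 0 (by simp)
  have h1 : d 1 = 0 := hcon 1 (by simp)
  have h2 : d 2 = 0 := hcon 2 (by simp)
  have hdM : d = MM 0 0 (d 3) (d 4) := by
    have := MM_ext d
    rw [h0, h1, h2, Finsupp.single_zero, add_zero] at this
    exact this
  have hmem := MvPolynomial.mem_support_iff.mp hd
  apply hmem
  rw [coeff_sub]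
  by_cases hz : d 3 = 0 ∧ d 4 = 0
  · have hd0 : d = 0 := by
      rw [hdM, hz.1, hz.2, MM_zero]
    rw [hd0, coeff_zero_C, sub_eq_zero]
  · have hG := hkey (d 3) (d 4) hz
    have hne : d ≠ 0 := by
      intro hq
      apply hz
      rw [hq]
      simp
    have hG' : coeff (MM 0 0 (d 3) (d 4)) f = 0 := hG
    rw [hdM, hG', coeff_C, if_neg (fun hq => hne (hdM.trans hq.symm)), sub_zero]
end
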